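/- arXiv:2105.06321 — 6 statements merged into one kernel-verified Lean document; each statement's English description precedes it below -/
import Mathlib

section
/- Let ν ∈ ℝ, t > 0 and n ≥ 1. Then ∫₀^∞ [P_n(x,t)]² e^{−x−t/x} x^{ν−2} dx = (1/t)·(1 − (ν/t)·(B_n(t) − ν − 1 − 2n)). -/
open MeasureTheory Set Filter Polynomial

namespace Stmt1Aux

lemma intW {t : ℝ} (ht : 0 < t) (s : ℝ) :
    IntegrableOn (fun x : ℝ => x ^ s * Real.exp (-x - t / x)) (Set.Ioi 0) := by
  have hcont : ContinuousOn (fun x : ℝ => x ^ s * Real.exp (-x - t / x)) (Set.Ioi 0) := by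
    refine (ContinuousOn.rpow_const continuousOn_id fun x hx => Or.inl (ne_of_gt hx)).mul
      (ContinuousOn.rexp ?_)
    exact (continuousOn_id.neg).sub (continuousOn_const.div continuousOn_id fun x hx => ne_of_gt hx)
  rw [show Set.Ioi (0:ℝ) = Set.Ioc 0 1 ∪ Set.Ioi 1 from
    (Set.Ioc_union_Ioi_eq_Ioi zero_le_one).symm, integrableOn_union]
  constructor
  · -- near 0
    obtain ⟨k, hk⟩ : ∃ k : ℕ, -1 < s + k := by
      refine ⟨⌈|s|⌉₊, ?_⟩
      have := Nat.le_ceil |s|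
      have := neg_abs_le s
      linarith
    set C : ℝ := (Nat.factorial k : ℝ) / t ^ k with hC
    have hCpos : 0 < C := div_pos (by positivity) (by positivity)
    have hbound : ∀ x ∈ Set.Ioc (0:ℝ) 1,
        ‖x ^ s * Real.exp (-x - t / x)‖ ≤ C * x ^ (s + k) := by
      intro x hx
      have hx0 : 0 < x := hx.1
      have h1 : Real.exp (-x - t / x) ≤ Real.exp (-(t / x)) := by
        apply Real.exp_le_exp.2; nlinarith [hx0.le]
      have htx : 0 < t / x := div_pos ht hx0
      have h2 : Real.exp (-(t / x)) ≤ C * x ^ (k:ℕ) := by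
        rw [Real.exp_neg]
        rw [inv_le_comm₀ (Real.exp_pos _) (by positivity)]
        have := Real.pow_div_factorial_le_exp (t / x) htx.le k
        calc (C * x ^ (k:ℕ))⁻¹ = (t / x) ^ k / (Nat.factorial k : ℝ) := by
              rw [hC]; field_simp [div_pow]; rw [div_pow, mul_div_assoc', mul_div_cancel_left₀ _ (pow_ne_zero _ hx0.ne')]
          _ ≤ Real.exp (t / x) := this
      have h3 : x ^ s * Real.exp (-x - t / x) ≤ x ^ s * (C * x ^ (k:ℕ)) := by
        apply mul_le_mul_of_nonneg_left (h1.trans h2) (Real.rpow_nonneg hx0.le s)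
      have h4 : x ^ s * (C * x ^ (k:ℕ)) = C * x ^ (s + k) := by
        rw [Real.rpow_add hx0, Real.rpow_natCast]; ring
      rw [Real.norm_eq_abs, abs_of_nonneg (by positivity)]
      linarith
    have hint : IntegrableOn (fun x : ℝ => C * x ^ (s + (k:ℝ))) (Set.Ioc 0 1) :=
      Integrable.const_mul
        ((integrableOn_Ioc_iff_integrableOn_Ioo enorm_ne_top).2 ((intervalIntegral.integrableOn_Ioo_rpow_iff one_pos).2 hk)) C
    refine Integrable.mono' hint ?_ ?_
    · exact (hcont.mono fun x hx => hx.1).aestronglyMeasurable measurableSet_Ioc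
    · exact (ae_restrict_iff' measurableSet_Ioc).2 (Filter.Eventually.of_forall hbound)
  · -- near infinity
    set p : ℝ := max s 0 + 1 with hp
    have hp0 : 0 < p := by positivity
    have hint : IntegrableOn (fun x : ℝ => Real.exp (-x) * x ^ (p - 1)) (Set.Ioi 1) :=
      (Real.GammaIntegral_convergent hp0).mono_set (Set.Ioi_subset_Ioi zero_le_one)
    refine Integrable.mono' hint ?_ ?_
    · exact (hcont.mono fun x (hx : x ∈ Set.Ioi (1:ℝ)) => Set.mem_Ioi.2 (lt_trans one_pos hx)).aestronglyMeasurable measurableSet_Ioi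
    · refine (ae_restrict_iff' measurableSet_Ioi).2 (Filter.Eventually.of_forall ?_)
      intro x hx
      have hx1 : (1:ℝ) < x := hx
      have hx0 : 0 < x := lt_trans one_pos hx1
      rw [Real.norm_eq_abs, abs_of_nonneg (by positivity)]
      have h1 : Real.exp (-x - t / x) ≤ Real.exp (-x) := by
        apply Real.exp_le_exp.2
        have : 0 < t / x := div_pos ht hx0
        linarith
      have h2 : x ^ s ≤ x ^ (p - 1) := by
        apply Real.rpow_le_rpow_of_exponent_le hx1.le
        simp [hp]
      calc x ^ s * Real.exp (-x - t / x) ≤ x ^ s * Real.exp (-x) :=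
            mul_le_mul_of_nonneg_left h1 (Real.rpow_nonneg hx0.le s)
        _ ≤ x ^ (p-1) * Real.exp (-x) :=
            mul_le_mul_of_nonneg_right h2 (Real.exp_pos _).le
        _ = Real.exp (-x) * x ^ (p-1) := mul_comm _ _


lemma intPW {t : ℝ} (ht : 0 < t) (p : Polynomial ℝ) (s : ℝ) :
    IntegrableOn (fun x : ℝ => p.eval x * (x ^ s * Real.exp (-x - t / x))) (Set.Ioi 0) := by
  induction p using Polynomial.induction_on' with
  | add p q hp hq =>
    have := hp.add hq
    exact this.congr_fun (fun x _ => by simp only [Pi.add_apply, eval_add, add_mul]) measurableSet_Ioi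
  | monomial m c =>
    have h0 : IntegrableOn (fun x : ℝ => c * (x ^ (s + m) * Real.exp (-x - t / x)))
        (Set.Ioi 0) := (intW ht (s + m)).const_mul c
    refine h0.congr_fun ?_ measurableSet_Ioi
    intro x hx
    have hx0 : (0:ℝ) < x := hx
    simp only [eval_monomial]
    rw [Real.rpow_add hx0, Real.rpow_natCast]
    ring

lemma tend_top {t : ℝ} (ht : 0 < t) (p : Polynomial ℝ) (s : ℝ) :
    Tendsto (fun x : ℝ => p.eval x * (x ^ s * Real.exp (-x - t / x))) atTop (nhds 0) := by
  induction p using Polynomial.induction_on' with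
  | add p q hp hq =>
    have := hp.add hq
    rw [add_zero] at this
    refine this.congr fun x => ?_
    simp only [eval_add]; ring
  | monomial m c =>
    have h1 : Tendsto (fun x : ℝ => x ^ (s + m) * Real.exp (-(1:ℝ) * x)) atTop (nhds 0) :=
      tendsto_rpow_mul_exp_neg_mul_atTop_nhds_zero (s + m) 1 one_pos
    have h2 : Tendsto (fun x : ℝ => c * Real.exp (-(t / x))) atTop (nhds (c * Real.exp (-0))) := by
      refine Tendsto.const_mul c (Real.continuous_exp.continuousAt.tendsto.comp ?_)
      exact (Filter.Tendsto.div_atTop tendsto_const_nhds tendsto_id).neg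
    have h3 := h1.mul h2
    rw [zero_mul] at h3
    refine Tendsto.congr' ?_ h3
    filter_upwards [Filter.eventually_gt_atTop (0:ℝ)] with x hx
    simp only [eval_monomial]
    rw [Real.rpow_add hx, Real.rpow_natCast, show -x - t / x = -(1:ℝ)*x + -(t/x) by ring,
      Real.exp_add]
    ring

lemma tend_zero {t : ℝ} (ht : 0 < t) (p : Polynomial ℝ) (s : ℝ) :
    Tendsto (fun x : ℝ => p.eval x * (x ^ s * Real.exp (-x - t / x)))
      (nhdsWithin 0 (Set.Ioi 0)) (nhds 0) := by
  have h1 : Tendsto (fun x : ℝ => p.eval x * Real.exp (-x))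
      (nhdsWithin 0 (Set.Ioi 0)) (nhds (p.eval 0 * Real.exp (-0))) :=
    ((p.continuous.tendsto 0).mul
      ((Real.continuous_exp.comp continuous_neg).tendsto 0)).mono_left nhdsWithin_le_nhds
  have h2 : Tendsto (fun x : ℝ => x ^ s * Real.exp (-x - t / x) / Real.exp (-x))
      (nhdsWithin 0 (Set.Ioi 0)) (nhds 0) := by
    have key : Tendsto (fun u : ℝ => u ^ (-s) * Real.exp (-t * u)) atTop (nhds 0) :=
      tendsto_rpow_mul_exp_neg_mul_atTop_nhds_zero (-s) t ht
    have comp := key.comp tendsto_inv_nhdsGT_zero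
    refine Tendsto.congr' ?_ comp
    filter_upwards [self_mem_nhdsWithin] with x hx
    have hx0 : (0:ℝ) < x := hx
    have e1 : (x⁻¹) ^ (-s) = x ^ s := by
      rw [Real.inv_rpow hx0.le, ← Real.rpow_neg hx0.le, neg_neg]
    simp only [Function.comp_apply]
    rw [e1, show -x - t / x = -x + -(t * x⁻¹) by rw [div_eq_mul_inv]; ring, Real.exp_add]
    field_simp [Real.exp_ne_zero]
  have h3 := h1.mul h2
  rw [mul_zero] at h3
  refine Tendsto.congr' ?_ h3
  filter_upwards [self_mem_nhdsWithin] with x hx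
  field_simp


lemma hasDeriv_aux {t : ℝ} (p : Polynomial ℝ) (s : ℝ) {x : ℝ} (hx : 0 < x) :
    HasDerivAt (fun y : ℝ => p.eval y * (y ^ s * Real.exp (-y - t / y)))
      ((Polynomial.derivative p).eval x * (x ^ s * Real.exp (-x - t / x))
        + s * (p.eval x * (x ^ (s-1) * Real.exp (-x - t / x)))
        - p.eval x * (x ^ s * Real.exp (-x - t / x))
        + t * (p.eval x * (x ^ (s-2) * Real.exp (-x - t / x)))) x := by
  have hp : HasDerivAt (fun y : ℝ => p.eval y) ((Polynomial.derivative p).eval x) x :=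
    p.hasDerivAt x
  have hr : HasDerivAt (fun y : ℝ => y ^ s) (s * x ^ (s - 1)) x :=
    Real.hasDerivAt_rpow_const (Or.inl hx.ne')
  have hin : HasDerivAt (fun y : ℝ => -y - t / y) (-1 - t * (-(x ^ 2)⁻¹)) x := by
    have h1 : HasDerivAt (fun y : ℝ => t / y) (t * (-(x ^ 2)⁻¹)) x := by
      simpa only [div_eq_mul_inv] using (hasDerivAt_inv hx.ne').const_mul t
    exact (hasDerivAt_id' x).neg.sub h1
  have he : HasDerivAt (fun y : ℝ => Real.exp (-y - t / y))
      (Real.exp (-x - t / x) * (-1 - t * (-(x ^ 2)⁻¹))) x := hin.exp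
  have := hp.mul (hr.mul he)
  refine this.congr_deriv ?_
  simp only [Pi.mul_apply]
  have e1 : x ^ (s - 1) = x ^ s / x := by
    rw [Real.rpow_sub hx, Real.rpow_one]
  have e2 : x ^ (s - 2) = x ^ s / x ^ 2 := by
    rw [Real.rpow_sub hx, show (2:ℝ) = ((2:ℕ):ℝ) by norm_num, Real.rpow_natCast]
  rw [e1, e2]
  field_simp
  ring

set_option maxHeartbeats 1000000 in
lemma ibp {t : ℝ} (ht : 0 < t) (p : Polynomial ℝ) (s : ℝ) :
    (∫ x in Set.Ioi (0:ℝ), (Polynomial.derivative p).eval x * (x ^ s * Real.exp (-x - t / x)))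
    + s * (∫ x in Set.Ioi (0:ℝ), p.eval x * (x ^ (s-1) * Real.exp (-x - t / x)))
    - (∫ x in Set.Ioi (0:ℝ), p.eval x * (x ^ s * Real.exp (-x - t / x)))
    + t * (∫ x in Set.Ioi (0:ℝ), p.eval x * (x ^ (s-2) * Real.exp (-x - t / x))) = 0 := by
  set g1 : ℝ → ℝ := fun x => (Polynomial.derivative p).eval x * (x ^ s * Real.exp (-x - t / x))
    with hg1
  set g2 : ℝ → ℝ := fun x => p.eval x * (x ^ (s-1) * Real.exp (-x - t / x)) with hg2
  set g3 : ℝ → ℝ := fun x => p.eval x * (x ^ s * Real.exp (-x - t / x)) with hg3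
  set g4 : ℝ → ℝ := fun x => p.eval x * (x ^ (s-2) * Real.exp (-x - t / x)) with hg4
  have i1 : IntegrableOn g1 (Set.Ioi 0) := intPW ht _ s
  have i2 : IntegrableOn (fun x => s * g2 x) (Set.Ioi 0) := (intPW ht p (s-1)).const_mul s
  have i3 : IntegrableOn g3 (Set.Ioi 0) := intPW ht p s
  have i4 : IntegrableOn (fun x => t * g4 x) (Set.Ioi 0) := (intPW ht p (s-2)).const_mul t
  set G : ℝ → ℝ := fun x => g1 x + s * g2 x - g3 x + t * g4 x with hG
  set F : ℝ → ℝ := fun x => if x ≤ 0 then 0 else p.eval x * (x ^ s * Real.exp (-x - t / x))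
    with hF
  have hFeq : ∀ x : ℝ, 0 < x → F x = p.eval x * (x ^ s * Real.exp (-x - t / x)) := by
    intro x hx; simp [hF, not_le.2 hx]
  have hderiv : ∀ x ∈ Set.Ioi (0:ℝ), HasDerivAt F (G x) x := by
    intro x hx
    have hx0 : (0:ℝ) < x := hx
    refine HasDerivAt.congr_of_eventuallyEq (hasDeriv_aux p s hx0) ?_
    filter_upwards [isOpen_Ioi.mem_nhds hx] with y hy
    exact hFeq y hy
  have hGint : IntegrableOn G (Set.Ioi 0) := by
    have i12 : IntegrableOn (fun x => g1 x + s * g2 x) (Set.Ioi 0) := i1.add i2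
    have i123 : IntegrableOn (fun x => g1 x + s * g2 x - g3 x) (Set.Ioi 0) := i12.sub i3
    exact i123.add i4
  have hcont : ContinuousWithinAt F (Set.Ici (0:ℝ)) 0 := by
    rw [← continuousWithinAt_Ioi_iff_Ici]
    have h0 : F 0 = 0 := by simp [hF]
    unfold ContinuousWithinAt
    rw [h0]
    refine Tendsto.congr' ?_ (tend_zero ht p s)
    filter_upwards [self_mem_nhdsWithin] with x hx
    exact (hFeq x hx).symm
  have htop : Tendsto F atTop (nhds 0) := by
    refine Tendsto.congr' ?_ (tend_top ht p s)
    filter_upwards [Filter.eventually_gt_atTop (0:ℝ)] with x hx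
    exact (hFeq x hx).symm
  have key := integral_Ioi_of_hasDerivAt_of_tendsto hcont hderiv hGint htop
  have hF0 : F 0 = 0 := by simp [hF]
  rw [hF0, sub_zero] at key
  have split : ∫ x in Set.Ioi (0:ℝ), G x
      = (∫ x in Set.Ioi (0:ℝ), g1 x) + s * (∫ x in Set.Ioi (0:ℝ), g2 x)
        - (∫ x in Set.Ioi (0:ℝ), g3 x) + t * (∫ x in Set.Ioi (0:ℝ), g4 x) := by
    have i12 : IntegrableOn (fun x => g1 x + s * g2 x) (Set.Ioi 0) := i1.add i2
    have i123 : IntegrableOn (fun x => g1 x + s * g2 x - g3 x) (Set.Ioi 0) := i12.sub i3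
    rw [hG]
    rw [integral_add i123 i4, integral_sub i12 i3,
      integral_add i1 i2, integral_const_mul, integral_const_mul]
  rw [← split, key]


lemma shift {t : ℝ} (p : Polynomial ℝ) (s : ℝ) :
    (∫ x in Set.Ioi (0:ℝ), (Polynomial.X * p).eval x * (x ^ (s-1) * Real.exp (-x - t / x)))
      = ∫ x in Set.Ioi (0:ℝ), p.eval x * (x ^ s * Real.exp (-x - t / x)) := by
  refine setIntegral_congr_fun measurableSet_Ioi ?_
  intro x hx
  have hx0 : (0:ℝ) < x := hx
  have e : x ^ (s-1) * x = x ^ s := by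
    rw [← Real.rpow_add_one hx0.ne' (s-1), sub_add_cancel]
  simp only [eval_mul, eval_X]
  rw [← e]; ring

lemma orth {t ν : ℝ} (ht : 0 < t) (P : ℕ → Polynomial ℝ) (a : ℕ → ℝ)
    (hdeg : ∀ k, (P k).degree = (k:ℕ)) (ha : ∀ k, a k = (P k).coeff k) (han : ∀ k, a k ≠ 0)
    (horth : ∀ k m : ℕ, (∫ x in Set.Ioi (0:ℝ),
        (P k).eval x * (P m).eval x * (x ^ ν * Real.exp (-x - t / x))) = if k = m then 1 else 0)
    (n : ℕ) :
    ∀ m : ℕ, m ≤ n → ∀ q : Polynomial ℝ, q.degree < (m:ℕ) →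
      (∫ x in Set.Ioi (0:ℝ), (P n).eval x * q.eval x * (x ^ ν * Real.exp (-x - t / x))) = 0 := by
  intro m
  induction m with
  | zero =>
    intro _ q hq
    have hq0 : q = 0 := by
      rw [← Polynomial.degree_eq_bot]
      simpa using hq
    subst hq0
    simp
  | succ m ih =>
    intro hmn q hq
    set c : ℝ := q.coeff m / a m with hc
    set r : Polynomial ℝ := q - Polynomial.C c * P m with hr
    have hrm : r.degree < (m:ℕ) := by
      rw [Polynomial.degree_lt_iff_coeff_zero]
      intro j hj
      simp only [hr, Polynomial.coeff_sub, Polynomial.coeff_C_mul]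
      rcases eq_or_lt_of_le hj with h | h
      · rw [← h, ← ha m, hc, div_mul_cancel₀ _ (han m), sub_self]
      · have h1 : q.coeff j = 0 := by
          apply Polynomial.coeff_eq_zero_of_degree_lt
          exact hq.trans_le (Nat.cast_le.mpr h)
        have h2 : (P m).coeff j = 0 := by
          apply Polynomial.coeff_eq_zero_of_degree_lt
          rw [hdeg m]
          exact_mod_cast Nat.cast_lt.mpr h
        rw [h1, h2, mul_zero, sub_zero]
    have hdecomp : ∀ x : ℝ, (P n).eval x * q.eval x * (x ^ ν * Real.exp (-x - t / x))
        = c * ((P n).eval x * (P m).eval x * (x ^ ν * Real.exp (-x - t / x)))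
          + (P n).eval x * r.eval x * (x ^ ν * Real.exp (-x - t / x)) := by
      intro x
      simp only [hr, eval_sub, eval_mul, eval_C]
      ring
    have i1 : IntegrableOn (fun x : ℝ =>
        c * ((P n).eval x * (P m).eval x * (x ^ ν * Real.exp (-x - t / x)))) (Set.Ioi 0) := by
      have : IntegrableOn _ (Set.Ioi (0:ℝ)) := (intPW ht (P n * P m) ν).const_mul c
      simpa only [eval_mul] using this
    have i2 : IntegrableOn (fun x : ℝ =>
        (P n).eval x * r.eval x * (x ^ ν * Real.exp (-x - t / x))) (Set.Ioi 0) := by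
      have := intPW ht (P n * r) ν
      simpa only [eval_mul, mul_assoc] using this
    rw [setIntegral_congr_fun measurableSet_Ioi fun x _ => hdecomp x,
      integral_add i1 i2, integral_const_mul, horth n m, ih (by omega) r hrm,
      if_neg (by omega : n ≠ m)]
    ring

lemma key_moment {t ν : ℝ} (ht : 0 < t) (P : ℕ → Polynomial ℝ) (a : ℕ → ℝ)
    (hdeg : ∀ k, (P k).degree = (k:ℕ)) (ha : ∀ k, a k = (P k).coeff k) (han : ∀ k, a k ≠ 0)
    (horth : ∀ k m : ℕ, (∫ x in Set.Ioi (0:ℝ),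
        (P k).eval x * (P m).eval x * (x ^ ν * Real.exp (-x - t / x))) = if k = m then 1 else 0)
    (n : ℕ) (q : Polynomial ℝ) (c d : ℝ)
    (h : (q - Polynomial.C d * P (n+1) - Polynomial.C c * P n).degree < (n:ℕ)) :
    (∫ x in Set.Ioi (0:ℝ), (P n).eval x * q.eval x * (x ^ ν * Real.exp (-x - t / x))) = c := by
  set r : Polynomial ℝ := q - Polynomial.C d * P (n+1) - Polynomial.C c * P n with hr
  have hdecomp : ∀ x : ℝ, (P n).eval x * q.eval x * (x ^ ν * Real.exp (-x - t / x))
      = d * ((P n).eval x * (P (n+1)).eval x * (x ^ ν * Real.exp (-x - t / x)))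
        + (c * ((P n).eval x * (P n).eval x * (x ^ ν * Real.exp (-x - t / x)))
          + (P n).eval x * r.eval x * (x ^ ν * Real.exp (-x - t / x))) := by
    intro x
    simp only [hr, eval_sub, eval_mul, eval_C]
    ring
  have i1 : IntegrableOn (fun x : ℝ =>
      d * ((P n).eval x * (P (n+1)).eval x * (x ^ ν * Real.exp (-x - t / x)))) (Set.Ioi 0) := by
    have : IntegrableOn _ (Set.Ioi (0:ℝ)) := (intPW ht (P n * P (n+1)) ν).const_mul d
    simpa only [eval_mul] using this
  have i2 : IntegrableOn (fun x : ℝ =>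
      c * ((P n).eval x * (P n).eval x * (x ^ ν * Real.exp (-x - t / x)))) (Set.Ioi 0) := by
    have : IntegrableOn _ (Set.Ioi (0:ℝ)) := (intPW ht (P n * P n) ν).const_mul c
    simpa only [eval_mul] using this
  have i3 : IntegrableOn (fun x : ℝ =>
      (P n).eval x * r.eval x * (x ^ ν * Real.exp (-x - t / x))) (Set.Ioi 0) := by
    have := intPW ht (P n * r) ν
    simpa only [eval_mul, mul_assoc] using this
  have i23 : IntegrableOn (fun x : ℝ =>
      c * ((P n).eval x * (P n).eval x * (x ^ ν * Real.exp (-x - t / x)))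
        + (P n).eval x * r.eval x * (x ^ ν * Real.exp (-x - t / x))) (Set.Ioi 0) := i2.add i3
  rw [setIntegral_congr_fun measurableSet_Ioi fun x _ => hdecomp x,
    integral_add i1 i23, integral_add i2 i3, integral_const_mul, integral_const_mul,
    horth n (n+1), horth n n, orth ht P a hdeg ha han horth n n le_rfl r h,
    if_neg (by omega : n ≠ n + 1), if_pos rfl]
  ring

end Stmt1Aux


open Stmt1Aux in
theorem stmt_1
    (ν : ℝ)
    (P : ℕ → ℝ → Polynomial ℝ)
    (a b A B : ℕ → ℝ → ℝ)
    (hdeg : ∀ n : ℕ, ∀ t : ℝ, 0 < t → (P n t).degree = (n : ℕ))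
    (ha : ∀ n : ℕ, ∀ t : ℝ, 0 < t → a n t = (P n t).coeff n)
    (han : ∀ n : ℕ, ∀ t : ℝ, 0 < t → a n t ≠ 0)
    (hbs : ∀ n : ℕ, ∀ t : ℝ, 0 < t → b (n + 1) t = (P (n + 1) t).coeff n)
    (hb0 : ∀ t : ℝ, 0 < t → b 0 t = 0)
    (horth : ∀ n m : ℕ, ∀ t : ℝ, 0 < t →
      (∫ x in Set.Ioi (0 : ℝ),
        (P n t).eval x * (P m t).eval x * (x ^ ν * Real.exp (-x - t / x)))
        = if n = m then 1 else 0)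
    (hA0 : ∀ t : ℝ, 0 < t → A 0 t = 0)
    (hA : ∀ n : ℕ, ∀ t : ℝ, 0 < t → A (n + 1) t = a n t / a (n + 1) t)
    (hB : ∀ n : ℕ, ∀ t : ℝ, 0 < t → B n t = b n t / a n t - b (n + 1) t / a (n + 1) t)
    (n : ℕ) (hn : 1 ≤ n) (t : ℝ) (ht : 0 < t) :
    (∫ x in Set.Ioi (0 : ℝ),
        ((P n t).eval x) ^ 2 * (Real.exp (-x - t / x) * x ^ (ν - 2)))
      = (1 / t) * (1 - (ν / t) * (B n t - ν - 1 - 2 * (n : ℝ))) := by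
  obtain ⟨m, rfl⟩ : ∃ m, n = m + 1 := ⟨n - 1, (Nat.succ_pred_eq_of_pos hn).symm⟩
  set n := m + 1 with hnm
  set Pl : ℕ → Polynomial ℝ := fun k => P k t with hPl
  set al : ℕ → ℝ := fun k => a k t with hal
  have hdeg' : ∀ k, (Pl k).degree = (k:ℕ) := fun k => hdeg k t ht
  have ha' : ∀ k, al k = (Pl k).coeff k := fun k => ha k t ht
  have han' : ∀ k, al k ≠ 0 := fun k => han k t ht
  have horth' : ∀ k l : ℕ, (∫ x in Set.Ioi (0:ℝ),
      (Pl k).eval x * (Pl l).eval x * (x ^ ν * Real.exp (-x - t / x)))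
      = if k = l then 1 else 0 := fun k l => horth k l t ht
  have hcoeff_hi : ∀ k j : ℕ, k < j → (Pl k).coeff j = 0 := by
    intro k j hkj
    apply Polynomial.coeff_eq_zero_of_degree_lt
    rw [hdeg' k]
    exact_mod_cast hkj
  set D : Polynomial ℝ := Polynomial.derivative (Pl n) with hD
  have hPne : Pl n ≠ 0 := by
    intro h
    have := hdeg' n
    rw [h, Polynomial.degree_zero] at this
    exact absurd this (by simp)
  -- M3
  have M3 : (∫ x in Set.Ioi (0:ℝ),
      (Pl n).eval x * D.eval x * (x ^ ν * Real.exp (-x - t / x))) = 0 := by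
    apply orth ht Pl al hdeg' ha' han' horth' n n le_rfl
    have := Polynomial.degree_derivative_lt hPne
    rwa [hdeg' n] at this
  -- M2
  have M2 : (∫ x in Set.Ioi (0:ℝ),
      (Pl n).eval x * (Polynomial.X * Pl n).eval x * (x ^ ν * Real.exp (-x - t / x)))
      = B n t := by
    apply key_moment ht Pl al hdeg' ha' han' horth' n (Polynomial.X * Pl n) (B n t)
      (al n / al (n + 1))
    rw [Polynomial.degree_lt_iff_coeff_zero]
    intro j hj
    obtain ⟨i, rfl⟩ : ∃ i, j = i + 1 := ⟨j - 1, by omega⟩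
    simp only [Polynomial.coeff_sub, Polynomial.coeff_C_mul, Polynomial.coeff_X_mul]
    have hcase : (i = m ∧ i + 1 = n) ∨ (i = n ∧ i + 1 = n + 1) ∨ (n < i ∧ n + 1 < i + 1) := by
      omega
    rcases hcase with ⟨h1, h2⟩ | ⟨h1, h2⟩ | ⟨h1, h2⟩
    · rw [h1]
      have e1 : (Pl n).coeff m = b n t := (hbs m t ht).symm
      have e2 : (Pl (n+1)).coeff (m+1) = b (n+1) t := (hbs n t ht).symm
      have e3 : (Pl n).coeff (m+1) = al n := (ha' n).symm
      rw [e1, e2, e3, hB n t ht]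
      have hh1 := han' n
      have hh2 := han' (n+1)
      simp only [hal] at hh1 hh2 ⊢
      field_simp
      ring
    · rw [h1]
      have e1 : (Pl n).coeff n = al n := (ha' n).symm
      have e2 : (Pl (n+1)).coeff (n+1) = al (n+1) := (ha' (n+1)).symm
      have e3 : (Pl n).coeff (n+1) = 0 := hcoeff_hi n (n+1) (by omega)
      rw [e1, e2, e3, div_mul_cancel₀ _ (han' (n+1))]
      ring
    · rw [hcoeff_hi n i h1, hcoeff_hi (n+1) (i+1) h2, hcoeff_hi n (i+1) (by omega)]
      ring
  -- M4
  have M4 : (∫ x in Set.Ioi (0:ℝ),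
      (Pl n).eval x * (Polynomial.X * D).eval x * (x ^ ν * Real.exp (-x - t / x)))
      = (n : ℝ) := by
    apply key_moment ht Pl al hdeg' ha' han' horth' n (Polynomial.X * D) ((n:ℝ)) 0
    rw [Polynomial.degree_lt_iff_coeff_zero]
    intro j hj
    obtain ⟨i, rfl⟩ : ∃ i, j = i + 1 := ⟨j - 1, by omega⟩
    simp only [Polynomial.coeff_sub, Polynomial.coeff_C_mul, Polynomial.coeff_X_mul,
      Polynomial.map_zero, zero_mul, sub_zero, hD, Polynomial.coeff_derivative]
    rcases (by omega : (i = m ∧ i + 1 = n) ∨ (n ≤ i)) with ⟨h1, h2⟩ | h1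
    · rw [h1]
      have hcast : ((n:ℕ):ℝ) = (m:ℝ) + 1 := by rw [hnm]; push_cast; ring
      rw [hcast]
      ring
    · rw [hcoeff_hi n (i+1) (by omega)]
      ring
  -- E1 : ibp with (Pl n)^2
  have T1 : (∫ x in Set.Ioi (0:ℝ),
      (Polynomial.derivative ((Pl n)^2)).eval x * (x ^ ν * Real.exp (-x - t / x))) = 0 := by
    have he : ∀ x : ℝ, (Polynomial.derivative ((Pl n)^2)).eval x
        * (x ^ ν * Real.exp (-x - t / x))
        = 2 * ((Pl n).eval x * D.eval x * (x ^ ν * Real.exp (-x - t / x))) := by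
      intro x
      rw [Polynomial.derivative_pow]
      simp only [Polynomial.eval_mul, Polynomial.eval_pow, Polynomial.eval_C,
        Polynomial.eval_natCast, hD]
      push_cast
      ring
    rw [setIntegral_congr_fun measurableSet_Ioi fun x _ => he x, integral_const_mul, M3, mul_zero]
  have T3 : (∫ x in Set.Ioi (0:ℝ),
      ((Pl n)^2).eval x * (x ^ ν * Real.exp (-x - t / x))) = 1 := by
    have he : ∀ x : ℝ, ((Pl n)^2).eval x * (x ^ ν * Real.exp (-x - t / x))
        = (Pl n).eval x * (Pl n).eval x * (x ^ ν * Real.exp (-x - t / x)) := by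
      intro x; simp [sq]
    rw [setIntegral_congr_fun measurableSet_Ioi fun x _ => he x]
    simpa using horth' n n
  have E1 := ibp ht ((Pl n)^2) ν
  rw [T1, T3] at E1
  -- E2 : ibp with X * (Pl n)^2
  have S1 : (∫ x in Set.Ioi (0:ℝ),
      (Polynomial.derivative (Polynomial.X * (Pl n)^2)).eval x
        * (x ^ ν * Real.exp (-x - t / x))) = 1 + 2 * (n:ℝ) := by
    have he : ∀ x : ℝ, (Polynomial.derivative (Polynomial.X * (Pl n)^2)).eval x
        * (x ^ ν * Real.exp (-x - t / x))
        = ((Pl n)^2).eval x * (x ^ ν * Real.exp (-x - t / x))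
          + 2 * ((Pl n).eval x * (Polynomial.X * D).eval x
            * (x ^ ν * Real.exp (-x - t / x))) := by
      intro x
      rw [Polynomial.derivative_mul, Polynomial.derivative_X, Polynomial.derivative_pow]
      simp only [Polynomial.eval_add, Polynomial.eval_mul, Polynomial.eval_pow,
        Polynomial.eval_C, Polynomial.eval_X, Polynomial.eval_natCast, Polynomial.eval_one,
        one_mul, hD]
      push_cast
      ring
    have if1 : IntegrableOn (fun x : ℝ =>
        ((Pl n)^2).eval x * (x ^ ν * Real.exp (-x - t / x))) (Set.Ioi 0) := intPW ht _ ν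
    have if2 : IntegrableOn (fun x : ℝ =>
        2 * ((Pl n).eval x * (Polynomial.X * D).eval x
          * (x ^ ν * Real.exp (-x - t / x)))) (Set.Ioi 0) := by
      have : IntegrableOn _ (Set.Ioi (0:ℝ)) := (intPW ht (Pl n * (Polynomial.X * D)) ν).const_mul 2
      simpa only [Polynomial.eval_mul] using this
    rw [setIntegral_congr_fun measurableSet_Ioi fun x _ => he x, integral_add if1 if2,
      integral_const_mul, T3, M4]
  have S2 : (∫ x in Set.Ioi (0:ℝ),
      (Polynomial.X * (Pl n)^2).eval x * (x ^ (ν-1) * Real.exp (-x - t / x))) = 1 := by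
    rw [shift ((Pl n)^2) ν, T3]
  have S3 : (∫ x in Set.Ioi (0:ℝ),
      (Polynomial.X * (Pl n)^2).eval x * (x ^ ν * Real.exp (-x - t / x))) = B n t := by
    have he : ∀ x : ℝ, (Polynomial.X * (Pl n)^2).eval x * (x ^ ν * Real.exp (-x - t / x))
        = (Pl n).eval x * (Polynomial.X * Pl n).eval x * (x ^ ν * Real.exp (-x - t / x)) := by
      intro x
      simp only [Polynomial.eval_mul, Polynomial.eval_pow, Polynomial.eval_X, sq]
      ring
    rw [setIntegral_congr_fun measurableSet_Ioi fun x _ => he x, M2]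
  have S4 : (∫ x in Set.Ioi (0:ℝ),
      (Polynomial.X * (Pl n)^2).eval x * (x ^ (ν-2) * Real.exp (-x - t / x)))
      = ∫ x in Set.Ioi (0:ℝ), ((Pl n)^2).eval x * (x ^ (ν-1) * Real.exp (-x - t / x)) := by
    rw [show ν - 2 = (ν - 1) - 1 by ring, shift ((Pl n)^2) (ν-1)]
  have E2 := ibp ht (Polynomial.X * (Pl n)^2) ν
  rw [S1, S2, S3, S4] at E2
  -- conclude
  have hgoal : (∫ x in Set.Ioi (0 : ℝ),
      ((P n t).eval x) ^ 2 * (Real.exp (-x - t / x) * x ^ (ν - 2)))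
      = ∫ x in Set.Ioi (0:ℝ), ((Pl n)^2).eval x * (x ^ (ν-2) * Real.exp (-x - t / x)) := by
    refine setIntegral_congr_fun measurableSet_Ioi ?_
    intro x _
    simp only [hPl, Polynomial.eval_pow]
    ring
  rw [hgoal]
  set J1 : ℝ := ∫ x in Set.Ioi (0:ℝ),
      ((Pl n)^2).eval x * (x ^ (ν-1) * Real.exp (-x - t / x)) with hJ1def
  set J2 : ℝ := ∫ x in Set.Ioi (0:ℝ),
      ((Pl n)^2).eval x * (x ^ (ν-2) * Real.exp (-x - t / x)) with hJ2def
  have htne : t ≠ 0 := ht.ne'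
  have hJ1 : J1 = (B n t - ν - 1 - 2 * (n:ℝ)) / t := by
    field_simp
    linarith
  have hJ2 : J2 = (1 - ν * J1) / t := by
    field_simp
    linarith
  rw [hJ2, hJ1]
  field_simp
end

section
/- Let ν ∈ ℝ, t > 0 and n ≥ 1. Then ∫₀^∞ P_n(x,t) P_{n−1}(x,t) e^{−x−t/x} x^{ν−1} dx = (1/t)·(A_n(t) + b_n(t)/(a_n(t)·A_n(t))). -/
open MeasureTheory

namespace Stmt2Aux
open Filter Set Polynomial

lemma w_meas (ν s : ℝ) : Measurable (fun x : ℝ => x ^ ν * Real.exp (-x - s / x)) := by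
  fun_prop

lemma fw_meas (f : Polynomial ℝ) (ν s : ℝ) :
    AEStronglyMeasurable (fun x : ℝ => f.eval x * (x ^ ν * Real.exp (-x - s / x)))
      (volume.restrict (Set.Ioi 0)) :=
  (f.continuous.measurable.mul (w_meas ν s)).aestronglyMeasurable

lemma intPoly (ν s : ℝ) (P : ℕ → Polynomial ℝ) (a : ℕ → ℝ)
    (hdeg : ∀ n : ℕ, (P n).degree = (n : ℕ))
    (ha : ∀ n : ℕ, a n = (P n).coeff n)
    (han : ∀ n : ℕ, a n ≠ 0)
    (horth : ∀ n m : ℕ,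
      (∫ x in Set.Ioi (0 : ℝ),
        (P n).eval x * (P m).eval x * (x ^ ν * Real.exp (-x - s / x)))
        = if n = m then 1 else 0)
    (f : Polynomial ℝ) :
    IntegrableOn (fun x => f.eval x * (x ^ ν * Real.exp (-x - s / x))) (Set.Ioi 0) := by
  set w : ℝ → ℝ := fun x => x ^ ν * Real.exp (-x - s / x) with hw
  have hwnn : ∀ x : ℝ, 0 < x → 0 ≤ w x := fun x hx =>
    mul_nonneg (Real.rpow_nonneg hx.le ν) (Real.exp_pos _).le
  -- squares are integrable
  have hsq : ∀ j : ℕ, IntegrableOn (fun x => (P j).eval x * (P j).eval x * w x) (Set.Ioi 0) := by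
    intro j
    by_contra h
    have h2 := horth j j
    rw [if_pos rfl] at h2
    rw [MeasureTheory.integral_undef h] at h2
    norm_num at h2
  -- products are integrable
  have hmul : ∀ j k : ℕ, IntegrableOn (fun x => (P j).eval x * (P k).eval x * w x) (Set.Ioi 0) := by
    intro j k
    refine Integrable.mono ((hsq j).add (hsq k)) ?_ ?_
    · exact ((((P j).continuous.mul (P k).continuous)).measurable.mul (w_meas ν s)).aestronglyMeasurable
    · filter_upwards [ae_restrict_mem measurableSet_Ioi] with x hx
      have h1 := hwnn x hx
      have key : |(P j).eval x * (P k).eval x| ≤ (P j).eval x * (P j).eval x + (P k).eval x * (P k).eval x := by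
        cases abs_cases ((P j).eval x * (P k).eval x) with
        | inl h => nlinarith [sq_nonneg ((P j).eval x - (P k).eval x)]
        | inr h => nlinarith [sq_nonneg ((P j).eval x + (P k).eval x)]
      rw [Real.norm_eq_abs, Real.norm_eq_abs, abs_mul, abs_of_nonneg h1]
      calc |(P j).eval x * (P k).eval x| * w x
          ≤ ((P j).eval x * (P j).eval x + (P k).eval x * (P k).eval x) * w x := by
            apply mul_le_mul_of_nonneg_right key h1
        _ ≤ |(P j).eval x * (P j).eval x * w x + (P k).eval x * (P k).eval x * w x| := by
            rw [← add_mul]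
            exact le_abs_self _
  -- P 0 is a nonzero constant
  have hP0 : P 0 = Polynomial.C (a 0) := by
    have h0 := Polynomial.eq_C_of_degree_le_zero (le_of_eq (hdeg 0))
    rw [h0, ← ha 0]
  -- single polynomials are integrable
  have hone : ∀ j : ℕ, IntegrableOn (fun x => (P j).eval x * w x) (Set.Ioi 0) := by
    intro j
    have h1 := (hmul j 0).const_mul (a 0)⁻¹
    have h2 : (fun x => (a 0)⁻¹ * ((P j).eval x * (P 0).eval x * w x))
        = fun x => (P j).eval x * w x := by
      funext x
      rw [hP0, Polynomial.eval_C]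
      field_simp [han 0]
    rwa [h2] at h1
  -- induction on the degree
  have main : ∀ d : ℕ, ∀ f : Polynomial ℝ, f.natDegree ≤ d →
      IntegrableOn (fun x => f.eval x * w x) (Set.Ioi 0) := by
    intro d
    induction d with
    | zero =>
      intro f hf
      rw [Polynomial.eq_C_of_natDegree_le_zero hf]
      have h1 := (hone 0).const_mul (f.coeff 0 / a 0)
      have h2 : (fun x => f.coeff 0 / a 0 * ((P 0).eval x * w x))
          = fun x => (Polynomial.C (f.coeff 0)).eval x * w x := by
        funext x
        rw [hP0, Polynomial.eval_C, Polynomial.eval_C]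
        field_simp [han 0]
      rwa [h2] at h1
    | succ d ih =>
      intro f hf
      set c : ℝ := f.coeff (d + 1) / a (d + 1) with hc
      set g : Polynomial ℝ := f - c • P (d + 1) with hgdef
      have hPnat : (P (d + 1)).natDegree = d + 1 :=
        Polynomial.natDegree_eq_of_degree_eq_some (hdeg (d + 1))
      have hg : g.natDegree ≤ d := by
        rw [Polynomial.natDegree_le_iff_coeff_eq_zero]
        intro k hk
        rw [hgdef]
        simp only [Polynomial.coeff_sub, Polynomial.coeff_smul, smul_eq_mul]
        rcases Nat.lt_or_ge (d + 1) k with hk2 | hk2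
        · rw [Polynomial.coeff_eq_zero_of_natDegree_lt (lt_of_le_of_lt hf hk2),
            Polynomial.coeff_eq_zero_of_natDegree_lt (by omega : (P (d+1)).natDegree < k)]
          ring
        · have hk3 : k = d + 1 := by omega
          subst hk3
          rw [hc, ← ha (d + 1)]
          field_simp [han (d + 1)]
          ring
      have hfg : f = g + c • P (d + 1) := by rw [hgdef]; ring
      rw [hfg]
      have h1 := (ih g hg).add ((hone (d + 1)).const_mul c)
      have h2 : ((fun x => g.eval x * w x) + fun x => c * ((P (d + 1)).eval x * w x))
          = fun x => (g + c • P (d + 1)).eval x * w x := by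
        funext x
        simp only [Pi.add_apply, Polynomial.eval_add, Polynomial.eval_smul, smul_eq_mul]
        ring
      rwa [h2] at h1
  exact main f.natDegree f le_rfl

lemma orthLower (ν s : ℝ) (P : ℕ → Polynomial ℝ) (a : ℕ → ℝ)
    (hdeg : ∀ n : ℕ, (P n).degree = (n : ℕ))
    (ha : ∀ n : ℕ, a n = (P n).coeff n)
    (han : ∀ n : ℕ, a n ≠ 0)
    (horth : ∀ n m : ℕ,
      (∫ x in Set.Ioi (0 : ℝ),
        (P n).eval x * (P m).eval x * (x ^ ν * Real.exp (-x - s / x)))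
        = if n = m then 1 else 0)
    (j : ℕ) (f : Polynomial ℝ) (hf : f.degree < (j : ℕ)) :
    (∫ x in Set.Ioi (0 : ℝ), (P j * f).eval x * (x ^ ν * Real.exp (-x - s / x))) = 0 := by
  set w : ℝ → ℝ := fun x => x ^ ν * Real.exp (-x - s / x) with hw
  set J : Polynomial ℝ → ℝ := fun f => ∫ x in Set.Ioi (0 : ℝ), f.eval x * w x with hJ
  have hint : ∀ f : Polynomial ℝ, IntegrableOn (fun x => f.eval x * w x) (Set.Ioi 0) :=
    intPoly ν s P a hdeg ha han horth
  have Jadd : ∀ f g : Polynomial ℝ, J (f + g) = J f + J g := by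
    intro f g
    rw [hJ]
    simp only
    rw [← MeasureTheory.integral_add (hint f) (hint g)]
    congr 1
    funext x
    simp [Polynomial.eval_add]
    ring
  have Jsmul : ∀ (c : ℝ) (f : Polynomial ℝ), J (c • f) = c * J f := by
    intro c f
    rw [hJ]
    simp only
    rw [← MeasureTheory.integral_const_mul]
    congr 1
    funext x
    simp [Polynomial.eval_smul]
    ring
  have Jorth : ∀ k l : ℕ, J (P k * P l) = if k = l then 1 else 0 := by
    intro k l
    rw [hJ]
    simp only [Polynomial.eval_mul]
    exact horth k l
  have hP0 : P 0 = Polynomial.C (a 0) := by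
    have h0 := Polynomial.eq_C_of_degree_le_zero (le_of_eq (hdeg 0))
    rw [h0, ← ha 0]
  -- main induction
  have key : ∀ d : ℕ, ∀ f : Polynomial ℝ, f.degree < (j : ℕ) → f.natDegree ≤ d →
      J (P j * f) = 0 := by
    intro d
    induction d with
    | zero =>
      intro f hfd hfn
      rw [Polynomial.eq_C_of_natDegree_le_zero hfn]
      rcases eq_or_ne (f.coeff 0) 0 with h0 | h0
      · rw [h0]
        simp only [map_zero, mul_zero]
        rw [hJ]
        simp
      · have hj : j ≠ 0 := by
          intro hj0
          rw [hj0] at hfd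
          rw [Polynomial.eq_C_of_natDegree_le_zero hfn] at hfd
          rw [Polynomial.degree_C h0] at hfd
          simp at hfd
        have hCf : Polynomial.C (f.coeff 0) = (f.coeff 0 / a 0) • P 0 := by
          rw [hP0, Polynomial.smul_C]
          congr 1
          rw [smul_eq_mul, div_mul_cancel₀ _ (han 0)]
        rw [hCf, mul_smul_comm, Jsmul, Jorth j 0, if_neg hj, mul_zero]
    | succ d ih =>
      intro f hfd hfn
      rcases Nat.lt_or_ge d f.natDegree with hd | hd
      swap
      · exact ih f hfd hd
      have hfnd : f.natDegree = d + 1 := by omega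
      have hfne : f ≠ 0 := by
        intro h0
        rw [h0] at hfnd
        simp at hfnd
      have hdj : d + 1 < j := by
        have := hfd
        rw [Polynomial.degree_eq_natDegree hfne, hfnd] at this
        exact_mod_cast this
      set c : ℝ := f.coeff (d + 1) / a (d + 1) with hc
      set g : Polynomial ℝ := f - c • P (d + 1) with hgdef
      have hPnat : (P (d + 1)).natDegree = d + 1 :=
        Polynomial.natDegree_eq_of_degree_eq_some (hdeg (d + 1))
      have hg : g.natDegree ≤ d := by
        rw [Polynomial.natDegree_le_iff_coeff_eq_zero]
        intro k hk
        rw [hgdef]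
        simp only [Polynomial.coeff_sub, Polynomial.coeff_smul, smul_eq_mul]
        rcases Nat.lt_or_ge (d + 1) k with hk2 | hk2
        · rw [Polynomial.coeff_eq_zero_of_natDegree_lt (by omega : f.natDegree < k),
            Polynomial.coeff_eq_zero_of_natDegree_lt (by omega : (P (d+1)).natDegree < k)]
          ring
        · have hk3 : k = d + 1 := by omega
          subst hk3
          rw [hc, ← ha (d + 1)]
          field_simp [han (d + 1)]
          ring
      have hgd : g.degree < (j : ℕ) := by
        calc g.degree ≤ (g.natDegree : WithBot ℕ) := Polynomial.degree_le_natDegree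
          _ < ((j : ℕ) : WithBot ℕ) := by exact_mod_cast lt_of_le_of_lt hg (by omega)
      have hfg : f = g + c • P (d + 1) := by rw [hgdef]; ring
      rw [hfg, mul_add, Jadd, mul_smul_comm, Jsmul, Jorth j (d + 1),
        if_neg (by omega : j ≠ d + 1), mul_zero, add_zero]
      exact ih g hgd hg
  exact key f.natDegree f hf le_rfl

-- limit at 0+ : x^σ exp(-t/x) → 0
lemma lim_zero (σ t : ℝ) (ht : 0 < t) :
    Tendsto (fun x : ℝ => x ^ σ * Real.exp (-(t / x))) (nhdsWithin (0:ℝ) (Set.Ioi 0)) (nhds 0) := by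
  have base : Tendsto (fun u : ℝ => u ^ (-σ) * Real.exp (-t * u)) atTop (nhds 0) :=
    tendsto_rpow_mul_exp_neg_mul_atTop_nhds_zero (-σ) t ht
  have comp := base.comp tendsto_inv_nhdsGT_zero
  apply comp.congr'
  filter_upwards [self_mem_nhdsWithin] with x hx
  have hx0 : (0:ℝ) < x := hx
  simp only [Function.comp_apply]
  rw [Real.inv_rpow hx0.le, ← Real.rpow_neg hx0.le, neg_neg]
  congr 1
  rw [div_eq_mul_inv]
  ring

-- limit atTop : polynomial * exp(-cx) → 0
lemma lim_top (c : ℝ) (hc : 0 < c) (f : Polynomial ℝ) :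
    Tendsto (fun x : ℝ => f.eval x * Real.exp (-(c * x))) atTop (nhds 0) := by
  have h : ∀ k : ℕ, Tendsto (fun x : ℝ => x ^ k * Real.exp (-(c * x))) atTop (nhds 0) := by
    intro k
    have := tendsto_rpow_mul_exp_neg_mul_atTop_nhds_zero (k : ℝ) c hc
    apply this.congr'
    filter_upwards [eventually_gt_atTop (0:ℝ)] with x hx
    rw [Real.rpow_natCast, neg_mul]
  have : Tendsto (fun x : ℝ => ∑ k ∈ Finset.range (f.natDegree + 1),
      f.coeff k * (x ^ k * Real.exp (-(c * x)))) atTop (nhds 0) := by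
    have := tendsto_finset_sum (Finset.range (f.natDegree + 1))
      (fun k _ => ((h k).const_mul (f.coeff k)))
    simpa using this
  apply this.congr
  intro x
  rw [Polynomial.eval_eq_sum_range]
  rw [Finset.sum_mul]
  congr 1
  funext k
  ring

lemma deriv_g (ν t : ℝ) (p : Polynomial ℝ) {x : ℝ} (hx : 0 < x) :
    HasDerivAt (fun y => (Polynomial.X * p).eval y * (y ^ ν * Real.exp (-y - t / y)))
      (((Polynomial.X * p).derivative.eval x + ν * p.eval x - (Polynomial.X * p).eval x)
          * (x ^ ν * Real.exp (-x - t / x))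
        + t * (p.eval x * (x ^ (ν - 1) * Real.exp (-x - t / x)))) x := by
  set q : Polynomial ℝ := Polynomial.X * p with hq
  have h1 : HasDerivAt (fun y => q.eval y) (q.derivative.eval x) x := q.hasDerivAt x
  have h2 : HasDerivAt (fun y : ℝ => y ^ ν) (ν * x ^ (ν - 1)) x :=
    Real.hasDerivAt_rpow_const (Or.inl hx.ne')
  have h3 : HasDerivAt (fun y : ℝ => -y - t / y) (-1 - t * (-(x ^ 2)⁻¹)) x := by
    have ha : HasDerivAt (fun y : ℝ => -y) (-1) x := (hasDerivAt_id x).neg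
    have hb : HasDerivAt (fun y : ℝ => t / y) (t * (-(x ^ 2)⁻¹)) x := by
      have := ((hasDerivAt_inv hx.ne').const_mul t)
      simpa [div_eq_mul_inv] using this
    exact ha.sub hb
  have h4 := h3.exp
  have h5 := h2.mul h4
  have h6 := h1.mul h5
  have h7 : HasDerivAt (fun y => q.eval y * (y ^ ν * Real.exp (-y - t / y))) _ x := h6
  convert h7 using 1
  simp only [Pi.mul_apply]
  have hev : q.eval x = x * p.eval x := by rw [hq, Polynomial.eval_mul, Polynomial.eval_X]
  have hrw : x ^ ν = x ^ (ν - 1) * x := by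
    rw [← Real.rpow_add_one hx.ne']
    norm_num
  rw [hev, hrw]
  have hx2 : x ≠ 0 := hx.ne'
  field_simp
  ring

lemma fw_meas' (f : Polynomial ℝ) (ν s : ℝ) :
    AEStronglyMeasurable (fun x : ℝ => f.eval x * (x ^ ν * Real.exp (-x - s / x)))
      (volume.restrict (Set.Ioi 0)) :=
  (f.continuous.measurable.mul ((by fun_prop : Measurable (fun x : ℝ => x ^ ν * Real.exp (-x - s / x))))).aestronglyMeasurable

lemma intShift (ν t : ℝ) (ht : 0 < t) (f : Polynomial ℝ)
    (hbase : IntegrableOn (fun x => f.eval x * (x ^ ν * Real.exp (-x - (t/2) / x))) (Set.Ioi 0)) :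
    IntegrableOn (fun x => f.eval x * (x ^ (ν-1) * Real.exp (-x - t / x))) (Set.Ioi 0) := by
  refine Integrable.mono (hbase.const_mul (2/t)) (fw_meas' f (ν-1) t) ?_
  filter_upwards [ae_restrict_mem measurableSet_Ioi] with x hx
  have hx0 : (0:ℝ) < x := hx
  have hu : (0:ℝ) < t / 2 / x := by positivity
  have hexp : Real.exp (-(t / 2 / x)) ≤ (t / 2 / x)⁻¹ := by
    rw [Real.exp_neg]
    apply inv_anti₀ hu
    have := Real.add_one_le_exp (t / 2 / x)
    linarith
  have hsplit : Real.exp (-x - t / x) = Real.exp (-x - (t/2) / x) * Real.exp (-(t / 2 / x)) := by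
    rw [← Real.exp_add]
    congr 1
    field_simp
    ring
  have hrw : x ^ ν = x ^ (ν - 1) * x := by
    rw [← Real.rpow_add_one hx0.ne']
    norm_num
  rw [Real.norm_eq_abs, Real.norm_eq_abs]
  have h1 : |x ^ (ν-1) * Real.exp (-x - t/x)| ≤ |2/t| * |x ^ ν * Real.exp (-x - (t/2)/x)| := by
    rw [abs_of_nonneg (by positivity : (0:ℝ) ≤ x ^ (ν-1) * Real.exp (-x - t/x)),
      abs_of_nonneg (by positivity : (0:ℝ) ≤ (2:ℝ)/t),
      abs_of_nonneg (by positivity : (0:ℝ) ≤ x ^ ν * Real.exp (-x - (t/2)/x)), hsplit, hrw]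
    calc x ^ (ν-1) * (Real.exp (-x - t/2/x) * Real.exp (-(t/2/x)))
        ≤ x ^ (ν-1) * (Real.exp (-x - t/2/x) * (t/2/x)⁻¹) := by
          apply mul_le_mul_of_nonneg_left _ (by positivity)
          exact mul_le_mul_of_nonneg_left hexp (by positivity)
      _ = 2/t * (x ^ (ν-1) * x * Real.exp (-x - t/2/x)) := by
          field_simp
  calc |f.eval x * (x ^ (ν-1) * Real.exp (-x - t/x))|
      = |f.eval x| * |x ^ (ν-1) * Real.exp (-x - t/x)| := abs_mul _ _
    _ ≤ |f.eval x| * (|2/t| * |x ^ ν * Real.exp (-x - (t/2)/x)|) :=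
        mul_le_mul_of_nonneg_left h1 (abs_nonneg _)
    _ = |2/t * (f.eval x * (x ^ ν * Real.exp (-x - (t/2)/x)))| := by
        rw [abs_mul (2/t), abs_mul (f.eval x)]
        ring

end Stmt2Aux

theorem stmt_2
    (ν : ℝ)
    (P : ℕ → ℝ → Polynomial ℝ)
    (a b A B : ℕ → ℝ → ℝ)
    (hdeg : ∀ n : ℕ, ∀ t : ℝ, 0 < t → (P n t).degree = (n : ℕ))
    (ha : ∀ n : ℕ, ∀ t : ℝ, 0 < t → a n t = (P n t).coeff n)
    (han : ∀ n : ℕ, ∀ t : ℝ, 0 < t → a n t ≠ 0)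
    (hbs : ∀ n : ℕ, ∀ t : ℝ, 0 < t → b (n + 1) t = (P (n + 1) t).coeff n)
    (hb0 : ∀ t : ℝ, 0 < t → b 0 t = 0)
    (horth : ∀ n m : ℕ, ∀ t : ℝ, 0 < t →
      (∫ x in Set.Ioi (0 : ℝ),
        (P n t).eval x * (P m t).eval x * (x ^ ν * Real.exp (-x - t / x)))
        = if n = m then 1 else 0)
    (hA0 : ∀ t : ℝ, 0 < t → A 0 t = 0)
    (hA : ∀ n : ℕ, ∀ t : ℝ, 0 < t → A (n + 1) t = a n t / a (n + 1) t)
    (hB : ∀ n : ℕ, ∀ t : ℝ, 0 < t → B n t = b n t / a n t - b (n + 1) t / a (n + 1) t)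
    (n : ℕ) (hn : 1 ≤ n) (t : ℝ) (ht : 0 < t) :
    (∫ x in Set.Ioi (0 : ℝ),
        (P n t).eval x * (P (n - 1) t).eval x * (Real.exp (-x - t / x) * x ^ (ν - 1)))
      = (1 / t) * (A n t + b n t / (a n t * A n t)) := by
  classical
  open Polynomial Filter Set Stmt2Aux in
  obtain ⟨m, rfl⟩ : ∃ m, n = m + 1 := ⟨n - 1, by omega⟩
  simp only [Nat.add_sub_cancel]
  have hdeg' : ∀ k : ℕ, (P k t).degree = (k : ℕ) := fun k => hdeg k t ht
  have ha' : ∀ k : ℕ, a k t = (P k t).coeff k := fun k => ha k t ht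
  have han' : ∀ k : ℕ, a k t ≠ 0 := fun k => han k t ht
  have horth' : ∀ k l : ℕ,
      (∫ x in Set.Ioi (0 : ℝ),
        (P k t).eval x * (P l t).eval x * (x ^ ν * Real.exp (-x - t / x)))
        = if k = l then 1 else 0 := fun k l => horth k l t ht
  have hnat : ∀ k : ℕ, (P k t).natDegree = k := fun k =>
    Polynomial.natDegree_eq_of_degree_eq_some (hdeg' k)
  have hint : ∀ f : Polynomial ℝ,
      IntegrableOn (fun x => f.eval x * (x ^ ν * Real.exp (-x - t / x))) (Set.Ioi 0) :=
    intPoly ν t (fun k => P k t) (fun k => a k t) hdeg' ha' han' horth'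
  have hint2 : ∀ f : Polynomial ℝ,
      IntegrableOn (fun x => f.eval x * (x ^ (ν - 1) * Real.exp (-x - t / x))) (Set.Ioi 0) :=
    fun f => intShift ν t ht f
      (intPoly ν (t/2) (fun k => P k (t/2)) (fun k => a k (t/2))
        (fun k => hdeg k (t/2) (by positivity)) (fun k => ha k (t/2) (by positivity))
        (fun k => han k (t/2) (by positivity)) (fun k l => horth k l (t/2) (by positivity)) f)
  set J : Polynomial ℝ → ℝ :=
    fun f => ∫ x in Set.Ioi (0 : ℝ), f.eval x * (x ^ ν * Real.exp (-x - t / x)) with hJ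
  have Jadd : ∀ f g : Polynomial ℝ, J (f + g) = J f + J g := by
    intro f g
    rw [hJ]
    simp only
    rw [← MeasureTheory.integral_add (hint f) (hint g)]
    congr 1
    funext x
    simp [Polynomial.eval_add]
    ring
  have Jsmul : ∀ (c : ℝ) (f : Polynomial ℝ), J (c • f) = c * J f := by
    intro c f
    rw [hJ]
    simp only
    rw [← MeasureTheory.integral_const_mul]
    congr 1
    funext x
    simp [Polynomial.eval_smul]
    ring
  have Jorth : ∀ k l : ℕ, J (P k t * P l t) = if k = l then 1 else 0 := by
    intro k l
    rw [hJ]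
    simp only [Polynomial.eval_mul]
    exact horth' k l
  have hOL : ∀ (j : ℕ) (f : Polynomial ℝ), f.degree < (j : ℕ) → J (P j t * f) = 0 :=
    fun j f hf => orthLower ν t (fun k => P k t) (fun k => a k t) hdeg' ha' han' horth' j f hf
  -- E2 : J (P (m+1) * (X * P m)) = a m / a (m+1)
  have E2 : J (P (m+1) t * (Polynomial.X * P m t)) = a m t / a (m+1) t := by
    set A1 : ℝ := a m t / a (m+1) t with hA1
    set r : Polynomial ℝ := Polynomial.X * P m t - A1 • P (m+1) t with hr
    have hrd : r.degree < ((m+1 : ℕ) : WithBot ℕ) := by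
      rw [Polynomial.degree_lt_iff_coeff_zero]
      intro k hk
      have hk1 : m + 1 ≤ k := by exact_mod_cast hk
      obtain ⟨l, rfl⟩ : ∃ l, k = l + 1 := ⟨k - 1, by omega⟩
      rw [hr]
      simp only [Polynomial.coeff_sub, Polynomial.coeff_smul, Polynomial.coeff_X_mul,
        smul_eq_mul]
      rcases eq_or_ne l m with hlm | hlm
      · subst hlm
        rw [hA1, ← ha' l, ← ha' (l+1)]
        field_simp [han' (l+1)]
        ring
      · have hlm2 : m < l := by omega
        rw [Polynomial.coeff_eq_zero_of_natDegree_lt (by rw [hnat]; omega),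
          Polynomial.coeff_eq_zero_of_natDegree_lt (by rw [hnat]; omega)]
        ring
    have hsum : Polynomial.X * P m t = A1 • P (m+1) t + r := by rw [hr]; ring
    rw [hsum, mul_add, Jadd, mul_smul_comm, Jsmul, Jorth (m+1) (m+1), if_pos rfl,
      hOL (m+1) r hrd, mul_one, add_zero]
  -- E3 : J (P m * (X * derivative (P (m+1)))) = -(b (m+1))/(a m)
  have E3 : J (P m t * (Polynomial.X * Polynomial.derivative (P (m+1) t)))
      = -(b (m+1) t) / a m t := by
    set c : ℝ := -(b (m+1) t) / a m t with hc
    set sres : Polynomial ℝ := Polynomial.X * Polynomial.derivative (P (m+1) t)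
      - ((m+1 : ℕ) : ℝ) • P (m+1) t - c • P m t with hs
    have hXd : ∀ k : ℕ,
        (Polynomial.X * Polynomial.derivative (P (m+1) t)).coeff k
          = (P (m+1) t).coeff k * k := by
      intro k
      cases k with
      | zero =>
        rw [Polynomial.mul_coeff_zero, Polynomial.coeff_X_zero]
        simp
      | succ l =>
        rw [Polynomial.coeff_X_mul, Polynomial.coeff_derivative]
        push_cast
        ring
    have hsd : sres.degree < ((m : ℕ) : WithBot ℕ) := by
      rw [Polynomial.degree_lt_iff_coeff_zero]
      intro k hk
      have hk1 : m ≤ k := by exact_mod_cast hk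
      rw [hs]
      simp only [Polynomial.coeff_sub, Polynomial.coeff_smul, smul_eq_mul, hXd]
      rcases eq_or_ne k m with hkm | hkm
      · subst hkm
        rw [← hbs k t ht, ← ha' k, hc]
        field_simp [han' k]
        push_cast
        ring
      · rcases eq_or_ne k (m+1) with hkm1 | hkm1
        · subst hkm1
          have e1 : (P m t).coeff (m+1) = 0 :=
            Polynomial.coeff_eq_zero_of_natDegree_lt (by rw [hnat]; omega)
          rw [e1]
          push_cast
          ring
        · have hk2 : m + 2 ≤ k := by omega
          have e1 : (P (m+1) t).coeff k = 0 :=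
            Polynomial.coeff_eq_zero_of_natDegree_lt (by rw [hnat]; omega)
          have e2 : (P m t).coeff k = 0 :=
            Polynomial.coeff_eq_zero_of_natDegree_lt (by rw [hnat]; omega)
          rw [e1, e2]
          ring
    have hsum : Polynomial.X * Polynomial.derivative (P (m+1) t)
        = ((m+1 : ℕ) : ℝ) • P (m+1) t + c • P m t + sres := by rw [hs]; ring
    rw [hsum, mul_add, mul_add, Jadd, Jadd, mul_smul_comm, mul_smul_comm, Jsmul, Jsmul,
      Jorth m (m+1), if_neg (by omega), Jorth m m, if_pos rfl, hOL m sres hsd,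
      mul_zero, mul_one, zero_add, add_zero]
  -- E4
  have E4 : J (P (m+1) t * (Polynomial.X * Polynomial.derivative (P m t))) = 0 := by
    apply hOL
    rw [Polynomial.degree_lt_iff_coeff_zero]
    intro k hk
    have hk1 : m + 1 ≤ k := by exact_mod_cast hk
    obtain ⟨l, rfl⟩ : ∃ l, k = l + 1 := ⟨k - 1, by omega⟩
    rw [Polynomial.coeff_X_mul, Polynomial.coeff_derivative,
      Polynomial.coeff_eq_zero_of_natDegree_lt (by rw [hnat]; omega)]
    ring
  -- E1
  have E1 : J (P (m+1) t * P m t) = 0 := by rw [Jorth (m+1) m, if_neg (by omega)]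
  -- the FTC setup
  set p : Polynomial ℝ := P (m+1) t * P m t with hp
  set q : Polynomial ℝ := Polynomial.X * p with hq
  set f1 : Polynomial ℝ := Polynomial.derivative q + ν • p + (-1 : ℝ) • q with hf1
  set G : ℝ → ℝ := fun x =>
    ((Polynomial.derivative q).eval x + ν * p.eval x - q.eval x)
        * (x ^ ν * Real.exp (-x - t / x))
      + t * (p.eval x * (x ^ (ν - 1) * Real.exp (-x - t / x))) with hG
  set g : ℝ → ℝ := fun x => q.eval x * (x ^ ν * Real.exp (-x - t / x)) with hg
  have hderiv : ∀ x ∈ Set.Ioi (0:ℝ), HasDerivAt g (G x) x := by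
    intro x hx
    exact deriv_g ν t p hx
  have hGeq : G = (fun x => f1.eval x * (x ^ ν * Real.exp (-x - t / x)))
      + fun x => t * (p.eval x * (x ^ (ν - 1) * Real.exp (-x - t / x))) := by
    funext x
    rw [hG, hf1]
    simp only [Pi.add_apply, Polynomial.eval_add, Polynomial.eval_smul, smul_eq_mul]
    ring
  have hGint : IntegrableOn G (Set.Ioi 0) := by
    rw [hGeq]
    exact (hint f1).add ((hint2 p).const_mul t)
  have hg0 : g 0 = 0 := by simp [hg, hq]
  have hcont : ContinuousWithinAt g (Set.Ici 0) 0 := by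
    have h0 : Tendsto g (nhdsWithin 0 (Set.Ioi 0)) (nhds 0) := by
      have hc : Tendsto (fun x : ℝ => p.eval x * Real.exp (-x))
          (nhdsWithin 0 (Set.Ioi 0)) (nhds (p.eval 0 * Real.exp (-0))) :=
        ((p.continuous.mul (Real.continuous_exp.comp continuous_neg)).tendsto 0).mono_left
          nhdsWithin_le_nhds
      have prod := hc.mul (lim_zero (ν+1) t ht)
      rw [mul_zero] at prod
      apply prod.congr'
      filter_upwards [self_mem_nhdsWithin] with x hx
      have hx0 : (0:ℝ) < x := hx
      simp only [hg, hq, Polynomial.eval_mul, Polynomial.eval_X]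
      rw [show Real.exp (-x - t/x) = Real.exp (-x) * Real.exp (-(t/x)) from by
          rw [← Real.exp_add]; ring_nf,
        Real.rpow_add_one hx0.ne' ν]
      ring
    rw [ContinuousWithinAt, hg0, ← Set.Ioi_insert, nhdsWithin_insert]
    rw [tendsto_sup]
    constructor
    · have h1 := tendsto_pure_nhds g 0
      rwa [hg0] at h1
    · exact h0
  have htop : Tendsto g atTop (nhds 0) := by
    have f1t := lim_top (1/2 : ℝ) (by norm_num) q
    have f2t : Tendsto (fun x : ℝ => x ^ ν * Real.exp (-(1/2 * x))) atTop (nhds 0) := by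
      have := tendsto_rpow_mul_exp_neg_mul_atTop_nhds_zero ν (1/2) (by norm_num)
      simpa [neg_mul] using this
    have f3t : Tendsto (fun x : ℝ => Real.exp (-(t / x))) atTop (nhds 1) := by
      have h1 : Tendsto (fun x : ℝ => -(t / x)) atTop (nhds 0) := by
        have := (tendsto_inv_atTop_zero (𝕜 := ℝ)).const_mul t
        simp only [mul_zero] at this
        have h2 := this.neg
        rw [neg_zero] at h2
        apply h2.congr
        intro x
        rw [div_eq_mul_inv]
      have := (Real.continuous_exp.tendsto 0).comp h1
      rw [Real.exp_zero] at this
      exact this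
    have total := (f1t.mul f2t).mul f3t
    rw [mul_zero, zero_mul] at total
    apply total.congr
    intro x
    rw [hg]
    simp only
    rw [show Real.exp (-x - t/x)
        = Real.exp (-(1/2 * x)) * Real.exp (-(1/2 * x)) * Real.exp (-(t/x)) by
      rw [← Real.exp_add, ← Real.exp_add]; ring_nf]
    ring
  have hFTC : (∫ x in Set.Ioi (0:ℝ), G x) = 0 := by
    rw [MeasureTheory.integral_Ioi_of_hasDerivAt_of_tendsto hcont hderiv hGint htop, hg0,
      zero_sub, neg_zero]
  -- split the integral
  set Iv : ℝ := ∫ x in Set.Ioi (0:ℝ), p.eval x * (x ^ (ν - 1) * Real.exp (-x - t / x)) with hIv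
  have hsplit : (∫ x in Set.Ioi (0:ℝ), G x) = J f1 + t * Iv := by
    rw [hGeq]
    simp only [Pi.add_apply]
    rw [MeasureTheory.integral_add (hint f1) ((hint2 p).const_mul t)]
    congr 1
    rw [MeasureTheory.integral_const_mul, hIv]
  -- compute J f1
  have hJq : J q = a m t / a (m+1) t := by
    rw [show q = P (m+1) t * (Polynomial.X * P m t) by rw [hq, hp]; ring]
    exact E2
  have hJp : J p = 0 := E1
  have hJdq : J (Polynomial.derivative q) = -(b (m+1) t) / a m t := by
    have hdq : Polynomial.derivative q
        = p + (P m t * (Polynomial.X * Polynomial.derivative (P (m+1) t))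
          + P (m+1) t * (Polynomial.X * Polynomial.derivative (P m t))) := by
      rw [hq, hp]
      rw [Polynomial.derivative_mul, Polynomial.derivative_X, Polynomial.derivative_mul]
      ring
    rw [hdq, Jadd, Jadd, hJp, E3, E4, zero_add, add_zero]
  have hJf1 : J f1 = -(b (m+1) t) / a m t - a m t / a (m+1) t := by
    rw [hf1, Jadd, Jadd, Jsmul, Jsmul, hJdq, hJp, hJq]
    ring
  -- final algebra
  have hIveq : Iv = (1/t) * (a m t / a (m+1) t + b (m+1) t / a m t) := by
    have h0 : J f1 + t * Iv = 0 := by rw [← hsplit]; exact hFTC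
    rw [hJf1] at h0
    have hnd : -(b (m+1) t) / a m t = -(b (m+1) t / a m t) := by ring
    rw [hnd] at h0
    have h1 : t * Iv = a m t / a (m+1) t + b (m+1) t / a m t := by linarith
    have h2 : Iv = (t * Iv) / t := by field_simp
    rw [h2, h1]
    ring
  have hLHS : (∫ x in Set.Ioi (0:ℝ),
      (P (m+1) t).eval x * (P m t).eval x * (Real.exp (-x - t / x) * x ^ (ν - 1))) = Iv := by
    rw [hIv]
    congr 1
    funext x
    rw [hp, Polynomial.eval_mul]
    ring
  rw [hLHS, hIveq, hA m t ht]
  congr 1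
  have h1 : a (m+1) t * (a m t / a (m+1) t) = a m t := by
    rw [mul_comm]
    exact div_mul_cancel₀ _ (han' (m+1))
  rw [h1]
end

section
/- Let ν ∈ ℝ, t > 0 and n ≥ 1. Then ∫₀^∞ P_n(x,t) P_{n−1}(x,t) e^{−x−t/x} x^{ν−2} dx = −(1/t)·[ (ν/t)·(A_n(t) + b_n(t)/(a_n(t)·A_n(t))) + n/A_n(t) ]. -/
open MeasureTheory Set Real Filter Polynomial


lemma wmeas (t s : ℝ) : Measurable (fun x : ℝ => x ^ s * Real.exp (-x - t/x)) := by
  fun_prop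

lemma wcont (t s : ℝ) : ContinuousOn (fun x : ℝ => x ^ s * Real.exp (-x - t/x)) (Set.Ioi 0) := by
  intro x hx
  have hx0 : (0:ℝ) < x := hx
  apply ContinuousAt.continuousWithinAt
  have h1 : ContinuousAt (fun x : ℝ => x ^ s) x :=
    (Real.continuousAt_rpow_const x s (Or.inl hx0.ne'))
  have h2 : ContinuousAt (fun x : ℝ => Real.exp (-x - t/x)) x := by
    apply Real.continuous_exp.continuousAt.comp
    exact (continuousAt_id.neg.sub ((continuousAt_const).div continuousAt_id hx0.ne'))
  exact h1.mul h2

lemma wint (t : ℝ) (ht : 0 < t) (s : ℝ) :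
    IntegrableOn (fun x : ℝ => x ^ s * Real.exp (-x - t/x)) (Set.Ioi 0) := by
  have hmeas : AEStronglyMeasurable (fun x : ℝ => x ^ s * Real.exp (-x - t/x)) volume := (wmeas t s).aestronglyMeasurable
  have h1 : IntegrableOn (fun x : ℝ => x ^ s * Real.exp (-x - t/x)) (Set.Ioc 0 1) := by
    set k : ℕ := ⌈-s⌉₊ with hk
    have hsk : 0 ≤ s + k := by
      have := Nat.le_ceil (-s); linarith
    apply Measure.integrableOn_of_bounded (M := k.factorial / t ^ k)
    · exact (measure_Ioc_lt_top).ne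
    · exact hmeas
    · filter_upwards [ae_restrict_mem measurableSet_Ioc] with x hx
      obtain ⟨hx0, hx1⟩ := hx
      have he : Real.exp (-x - t/x) ≤ Real.exp (-(t/x)) := by
        apply Real.exp_le_exp.2; nlinarith [div_nonneg ht.le hx0.le]
      have h4 : Real.exp (-(t/x)) ≤ k.factorial * (x/t)^k := by
        have h3 : (t/x)^k / (k.factorial:ℝ) ≤ Real.exp (t/x) :=
          Real.pow_div_factorial_le_exp (x := t/x) (by positivity) k
        have h5 : (0:ℝ) < (t/x)^k / (k.factorial:ℝ) := by positivity
        calc Real.exp (-(t/x)) = (Real.exp (t/x))⁻¹ := by rw [Real.exp_neg]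
          _ ≤ ((t/x)^k / (k.factorial:ℝ))⁻¹ := by
              exact inv_anti₀ h5 h3
          _ = k.factorial * (x/t)^k := by
              rw [div_pow, div_pow]
              field_simp
      rw [Real.norm_eq_abs, abs_of_nonneg (by positivity)]
      calc x ^ s * Real.exp (-x - t/x) ≤ x ^ s * ((k.factorial : ℝ) * (x/t)^k) := by
            exact mul_le_mul_of_nonneg_left (he.trans h4) (Real.rpow_nonneg hx0.le s)
        _ = (k.factorial / t^k) * x ^ (s + (k:ℝ)) := by
            rw [div_pow, Real.rpow_add hx0, Real.rpow_natCast]; ring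
        _ ≤ (k.factorial / t^k) * 1 := by
            exact mul_le_mul_of_nonneg_left (Real.rpow_le_one hx0.le hx1 hsk) (by positivity)
        _ = k.factorial / t^k := mul_one _
  have h2 : IntegrableOn (fun x : ℝ => x ^ s * Real.exp (-x - t/x)) (Set.Ioi 1) := by
    have hg : IntegrableOn (fun x : ℝ => Real.exp (-x) * x ^ (max s 0)) (Set.Ioi 0) := by
      have := Real.GammaIntegral_convergent (s := max s 0 + 1) (by positivity)
      simpa using this
    apply Integrable.mono' (hg.mono_set (Set.Ioi_subset_Ioi zero_le_one)) hmeas.restrict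
    filter_upwards [ae_restrict_mem measurableSet_Ioi] with x hx
    have hx1 : (1:ℝ) < x := hx
    have hx0 : (0:ℝ) < x := lt_trans zero_lt_one hx1
    rw [Real.norm_eq_abs, abs_of_nonneg (by positivity)]
    have e1 : x ^ s ≤ x ^ (max s 0) :=
      Real.rpow_le_rpow_of_exponent_le hx1.le (le_max_left s 0)
    have e2 : Real.exp (-x - t/x) ≤ Real.exp (-x) := by
      apply Real.exp_le_exp.2; nlinarith [div_nonneg ht.le hx0.le]
    calc x ^ s * Real.exp (-x - t/x) ≤ x ^ (max s 0) * Real.exp (-x) := by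
          apply mul_le_mul e1 e2 (Real.exp_pos _).le (Real.rpow_nonneg hx0.le _)
      _ = Real.exp (-x) * x ^ (max s 0) := mul_comm _ _
  rw [← Set.Ioc_union_Ioi_eq_Ioi (zero_le_one (α := ℝ))]
  exact h1.union h2

noncomputable def Jf (s t : ℝ) (q : Polynomial ℝ) : ℝ :=
  ∫ x in Set.Ioi (0:ℝ), q.eval x * (x ^ s * Real.exp (-x - t/x))

lemma pint (t : ℝ) (ht : 0 < t) (q : Polynomial ℝ) (s : ℝ) :
    IntegrableOn (fun x : ℝ => q.eval x * (x ^ s * Real.exp (-x - t/x))) (Set.Ioi 0) := by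
  have h : IntegrableOn (fun x : ℝ =>
      ∑ i ∈ Finset.range (q.natDegree + 1), q.coeff i * (x ^ (s + i) * Real.exp (-x - t/x)))
      (Set.Ioi 0) := by
    apply integrable_finset_sum
    intro i _
    exact (wint t ht (s + i)).const_mul _
  apply h.congr_fun _ measurableSet_Ioi
  intro x hx
  have hx0 : (0:ℝ) < x := hx
  dsimp only
  rw [Polynomial.eval_eq_sum_range, Finset.sum_mul]
  apply Finset.sum_congr rfl
  intro i _
  rw [Real.rpow_add hx0, Real.rpow_natCast]
  ring

lemma Jadd (s t : ℝ) (ht : 0 < t) (u v : Polynomial ℝ) :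
    Jf s t (u + v) = Jf s t u + Jf s t v := by
  unfold Jf
  rw [← integral_add (pint t ht u s) (pint t ht v s)]
  congr 1; funext x; rw [Polynomial.eval_add]; ring

lemma Jsmul (s t : ℝ) (c : ℝ) (q : Polynomial ℝ) :
    Jf s t (c • q) = c * Jf s t q := by
  unfold Jf
  have h : (fun x : ℝ => (c • q).eval x * (x ^ s * Real.exp (-x - t/x)))
      = fun x : ℝ => c * (q.eval x * (x ^ s * Real.exp (-x - t/x))) :=
    funext fun x => by rw [Polynomial.eval_smul, smul_eq_mul]; ring
  rw [h, integral_const_mul]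

lemma Jshift (s t : ℝ) (q : Polynomial ℝ) : Jf s t (X * q) = Jf (s+1) t q := by
  unfold Jf
  apply setIntegral_congr_fun measurableSet_Ioi
  intro x hx
  have hx0 : (0:ℝ) < x := hx
  simp only [Polynomial.eval_mul, Polynomial.eval_X]
  rw [Real.rpow_add hx0, Real.rpow_one]
  ring

-- limit at 0+
lemma tend0 (ν t : ℝ) (ht : 0 < t) (q : Polynomial ℝ) :
    Tendsto (fun x : ℝ => q.eval x * (x ^ ν * Real.exp (-x - t/x))) (nhdsWithin 0 (Set.Ioi 0)) (nhds 0) := by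
  have h1 : Tendsto (fun x : ℝ => x ^ ν * Real.exp (-(t/x))) (nhdsWithin 0 (Set.Ioi 0)) (nhds 0) := by
    have h2 : Tendsto (fun y : ℝ => y ^ (-ν) * Real.exp (-t * y)) atTop (nhds 0) :=
      tendsto_rpow_mul_exp_neg_mul_atTop_nhds_zero (-ν) t ht
    have h3 : Tendsto (fun x : ℝ => x⁻¹) (nhdsWithin 0 (Set.Ioi 0)) atTop :=
      tendsto_inv_nhdsGT_zero
    apply (h2.comp h3).congr'
    filter_upwards [self_mem_nhdsWithin] with x hx
    have hx0 : (0:ℝ) < x := hx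
    simp only [Function.comp]
    rw [Real.inv_rpow hx0.le, ← Real.rpow_neg hx0.le, neg_neg]
    congr 2
    field_simp
  have h5 : Tendsto (fun x : ℝ => q.eval x * Real.exp (-x)) (nhdsWithin 0 (Set.Ioi 0)) (nhds (q.eval 0 * Real.exp 0)) := by
    apply Tendsto.mono_left _ nhdsWithin_le_nhds
    have : Continuous (fun x : ℝ => q.eval x * Real.exp (-x)) := (q.continuous)|>.mul (Real.continuous_exp.comp continuous_neg)
    have h := this.tendsto 0
    simpa using h
  have h6 := h5.mul h1
  rw [mul_zero] at h6
  apply h6.congr'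
  filter_upwards [self_mem_nhdsWithin] with x hx
  have hx0 : (0:ℝ) < x := hx
  rw [show -x - t/x = -x + -(t/x) by ring, Real.exp_add]
  ring

-- limit at top
lemma tendtop (ν t : ℝ) (ht : 0 < t) (q : Polynomial ℝ) :
    Tendsto (fun x : ℝ => q.eval x * (x ^ ν * Real.exp (-x - t/x))) atTop (nhds 0) := by
  have key : ∀ i : ℕ, Tendsto (fun x : ℝ => q.coeff i * (x ^ (ν + i) * Real.exp (-x - t/x))) atTop (nhds 0) := by
    intro i
    have h2 : Tendsto (fun x : ℝ => |q.coeff i| * (x ^ (ν + i) * Real.exp (-(1:ℝ) * x))) atTop (nhds (|q.coeff i| * 0)) := by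
      apply Tendsto.const_mul
      have := tendsto_rpow_mul_exp_neg_mul_atTop_nhds_zero (ν + i) 1 one_pos
      exact this
    rw [mul_zero] at h2
    apply squeeze_zero_norm' _ h2
    filter_upwards [Ioi_mem_atTop (0:ℝ)] with x hx
    have hx0 : (0:ℝ) < x := hx
    rw [Real.norm_eq_abs, abs_mul, abs_mul, Real.abs_exp, abs_of_nonneg (Real.rpow_nonneg hx0.le _)]
    have : Real.exp (-x - t/x) ≤ Real.exp (-(1:ℝ) * x) := by
      apply Real.exp_le_exp.2
      nlinarith [div_nonneg ht.le hx0.le]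
    nlinarith [abs_nonneg (q.coeff i), Real.rpow_nonneg hx0.le (ν + i), Real.exp_pos (-x - t/x),
      mul_le_mul_of_nonneg_left this (abs_nonneg (q.coeff i)), Real.rpow_pos_of_pos hx0 (ν + i)]
  have hsum : Tendsto (fun x : ℝ => ∑ i ∈ Finset.range (q.natDegree + 1),
      q.coeff i * (x ^ (ν + i) * Real.exp (-x - t/x))) atTop (nhds 0) := by
    have := tendsto_finset_sum (Finset.range (q.natDegree + 1)) (fun i _ => key i)
    simpa using this
  apply hsum.congr'
  filter_upwards [Ioi_mem_atTop (0:ℝ)] with x hx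
  have hx0 : (0:ℝ) < x := hx
  rw [Polynomial.eval_eq_sum_range, Finset.sum_mul]
  apply Finset.sum_congr rfl
  intro i _
  rw [Real.rpow_add hx0, Real.rpow_natCast]
  ring

lemma ibpJ (ν t : ℝ) (ht : 0 < t) (q : Polynomial ℝ) :
    Jf ν t (derivative q) + ν * Jf (ν-1) t q - Jf ν t q + t * Jf (ν-2) t q = 0 := by
  classical
  set E : ℝ → ℝ := fun x => Real.exp (-x - t/x) with hE
  set F : ℝ → ℝ := fun x => if 0 < x then q.eval x * (x ^ ν * E x) else 0 with hF
  set g : ℝ → ℝ := fun x =>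
    (derivative q).eval x * (x ^ ν * E x) + ν * (q.eval x * (x ^ (ν-1) * E x))
      - q.eval x * (x ^ ν * E x) + t * (q.eval x * (x ^ (ν-2) * E x)) with hg
  have hgint : IntegrableOn g (Set.Ioi 0) :=
    (((pint t ht (derivative q) ν).add ((pint t ht q (ν-1)).const_mul ν)).sub
      (pint t ht q ν)).add ((pint t ht q (ν-2)).const_mul t)
  have hderiv : ∀ x ∈ Set.Ioi (0:ℝ), HasDerivAt F (g x) x := by
    intro x hx
    have hx0 : (0:ℝ) < x := hx
    have hq : HasDerivAt (fun y : ℝ => q.eval y) ((derivative q).eval x) x := q.hasDerivAt x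
    have hr : HasDerivAt (fun y : ℝ => y ^ ν) (ν * x ^ (ν-1)) x :=
      Real.hasDerivAt_rpow_const (Or.inl hx0.ne')
    have hu : HasDerivAt (fun y : ℝ => -y - t/y) (-1 - t * (-(x^2)⁻¹)) x := by
      have h1 : HasDerivAt (fun y : ℝ => -y) (-1) x := (hasDerivAt_id x).neg
      have h2 : HasDerivAt (fun y : ℝ => t/y) (t * (-(x^2)⁻¹)) x := by
        simpa [div_eq_mul_inv] using ((hasDerivAt_inv hx0.ne').const_mul t)
      exact h1.sub h2
    have hexp : HasDerivAt E (Real.exp (-x - t/x) * (-1 - t * (-(x^2)⁻¹))) x := hu.exp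
    have hprod := hq.mul (hr.mul hexp)
    have heq : F =ᶠ[nhds x] (fun y : ℝ => q.eval y * (y ^ ν * E y)) := by
      filter_upwards [isOpen_Ioi.mem_nhds hx] with y hy
      simp only [hF, if_pos (show (0:ℝ) < y from hy)]
    have e1 : x ^ (ν-1) = x ^ ν / x := by rw [Real.rpow_sub hx0, Real.rpow_one]
    have e2 : x ^ (ν-2) = x ^ ν / x^2 := by
      rw [Real.rpow_sub hx0, show (2:ℝ) = ((2:ℕ):ℝ) by norm_num, Real.rpow_natCast]
    have hΦ : HasDerivAt (fun y : ℝ => q.eval y * (y ^ ν * E y)) (g x) x := by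
      have hprod' : HasDerivAt (fun y : ℝ => q.eval y * (y ^ ν * E y)) ((derivative q).eval x * (x ^ ν * E x) + q.eval x * (ν * x ^ (ν-1) * E x + x ^ ν * (Real.exp (-x - t/x) * (-1 - t * (-(x^2)⁻¹))))) x := hprod
      convert hprod' using 1
      rw [hg]
      dsimp only
      have hEx : Real.exp (-x - t/x) = E x := rfl
      rw [hEx, e1, e2]
      field_simp
      ring
    exact hΦ.congr_of_eventuallyEq heq
  have hcont : ContinuousWithinAt F (Set.Ici 0) 0 := by
    rw [← Set.Ioi_insert]
    rw [continuousWithinAt_insert_self]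
    have hF0 : F 0 = 0 := by simp [hF]
    unfold ContinuousWithinAt
    rw [hF0]
    apply (tend0 ν t ht q).congr'
    filter_upwards [self_mem_nhdsWithin] with x hx
    simp only [hF, if_pos (show (0:ℝ) < x from hx)]
    rfl
  have htop : Tendsto F atTop (nhds 0) := by
    apply (tendtop ν t ht q).congr'
    filter_upwards [Ioi_mem_atTop (0:ℝ)] with x hx
    simp only [hF, if_pos (show (0:ℝ) < x from hx)]
    rfl
  have hFTC := integral_Ioi_of_hasDerivAt_of_tendsto hcont hderiv hgint htop
  have hF0 : F 0 = 0 := by simp [hF]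
  rw [hF0, sub_zero] at hFTC
  -- split the integral
  have hsplit : ∫ x in Set.Ioi (0:ℝ), g x
      = Jf ν t (derivative q) + ν * Jf (ν-1) t q - Jf ν t q + t * Jf (ν-2) t q := by
    rw [hg]
    unfold Jf
    have i1 : IntegrableOn (fun x : ℝ => (derivative q).eval x * (x ^ ν * E x)) (Set.Ioi 0) :=
      pint t ht (derivative q) ν
    have i2 : IntegrableOn (fun x : ℝ => ν * (q.eval x * (x ^ (ν-1) * E x))) (Set.Ioi 0) :=
      (pint t ht q (ν-1)).const_mul ν
    have i3 : IntegrableOn (fun x : ℝ => q.eval x * (x ^ ν * E x)) (Set.Ioi 0) :=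
      pint t ht q ν
    have i4 : IntegrableOn (fun x : ℝ => t * (q.eval x * (x ^ (ν-2) * E x))) (Set.Ioi 0) :=
      (pint t ht q (ν-2)).const_mul t
    have i12 : IntegrableOn (fun x : ℝ => (derivative q).eval x * (x ^ ν * E x)
        + ν * (q.eval x * (x ^ (ν-1) * E x))) (Set.Ioi 0) := i1.add i2
    have i123 : IntegrableOn (fun x : ℝ => (derivative q).eval x * (x ^ ν * E x)
        + ν * (q.eval x * (x ^ (ν-1) * E x)) - q.eval x * (x ^ ν * E x)) (Set.Ioi 0) := i12.sub i3
    rw [integral_add i123 i4, integral_sub i12 i3, integral_add i1 i2,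
      integral_const_mul, integral_const_mul]
  rw [← hsplit, hFTC]

theorem stmt_3
    (ν : ℝ)
    (P : ℕ → ℝ → Polynomial ℝ)
    (a b A B : ℕ → ℝ → ℝ)
    (hdeg : ∀ n : ℕ, ∀ t : ℝ, 0 < t → (P n t).degree = (n : ℕ))
    (ha : ∀ n : ℕ, ∀ t : ℝ, 0 < t → a n t = (P n t).coeff n)
    (han : ∀ n : ℕ, ∀ t : ℝ, 0 < t → a n t ≠ 0)
    (hbs : ∀ n : ℕ, ∀ t : ℝ, 0 < t → b (n + 1) t = (P (n + 1) t).coeff n)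
    (hb0 : ∀ t : ℝ, 0 < t → b 0 t = 0)
    (horth : ∀ n m : ℕ, ∀ t : ℝ, 0 < t →
      (∫ x in Set.Ioi (0 : ℝ),
        (P n t).eval x * (P m t).eval x * (x ^ ν * Real.exp (-x - t / x)))
        = if n = m then 1 else 0)
    (hA0 : ∀ t : ℝ, 0 < t → A 0 t = 0)
    (hA : ∀ n : ℕ, ∀ t : ℝ, 0 < t → A (n + 1) t = a n t / a (n + 1) t)
    (hB : ∀ n : ℕ, ∀ t : ℝ, 0 < t → B n t = b n t / a n t - b (n + 1) t / a (n + 1) t)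
    (n : ℕ) (hn : 1 ≤ n) (t : ℝ) (ht : 0 < t) :
    (∫ x in Set.Ioi (0 : ℝ),
        (P n t).eval x * (P (n - 1) t).eval x * (Real.exp (-x - t / x) * x ^ (ν - 2)))
      = -(1 / t) * ((ν / t) * (A n t + b n t / (a n t * A n t)) + (n : ℝ) / A n t) := by
  obtain ⟨k, rfl⟩ : ∃ k, n = k + 1 := ⟨n - 1, (Nat.succ_pred_eq_of_pos hn).symm⟩
  simp only [Nat.add_sub_cancel]
  -- basic coefficient facts
  have hcz : ∀ m i : ℕ, m < i → (P m t).coeff i = 0 := by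
    intro m i hi
    apply Polynomial.coeff_eq_zero_of_degree_lt
    rw [hdeg m t ht]
    exact_mod_cast hi
  have horthJ : ∀ m l : ℕ, Jf ν t (P m t * P l t) = if m = l then 1 else 0 := by
    intro m l
    unfold Jf
    rw [← horth m l t ht]
    congr 1; funext x; rw [Polynomial.eval_mul]
  -- orthogonality to lower-degree polynomials
  have orth0 : ∀ (d m : ℕ) (q : Polynomial ℝ), q.natDegree ≤ d →
      (∀ i, m ≤ i → q.coeff i = 0) → Jf ν t (P m t * q) = 0 := by
    intro d
    induction d with
    | zero =>
      intro m q hqd hz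
      have hq : q = Polynomial.C (q.coeff 0) := Polynomial.eq_C_of_natDegree_le_zero hqd
      have hP0 : P 0 t = Polynomial.C (a 0 t) := by
        have h0 : (P 0 t).degree ≤ 0 := le_of_eq (by exact_mod_cast hdeg 0 t ht)
        rw [Polynomial.eq_C_of_degree_le_zero h0, ha 0 t ht]
      have hsm : q = (q.coeff 0 / a 0 t) • P 0 t := by
        rw [hP0, Polynomial.smul_C, smul_eq_mul, div_mul_cancel₀ _ (han 0 t ht), ← hq]
      rw [hsm, mul_smul_comm, Jsmul, horthJ]
      rcases eq_or_ne m 0 with hm | hm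
      · rw [hz 0 hm.le]; simp
      · rw [if_neg hm]; ring
    | succ d ih =>
      intro m q hqd hz
      rcases le_or_gt q.natDegree d with hd | hd
      · exact ih m q hd hz
      have he : q.natDegree = d + 1 := le_antisymm hqd hd
      set c : ℝ := q.coeff (d+1) / a (d+1) t with hc
      set r : Polynomial ℝ := q - c • P (d+1) t with hr
      have hrc : ∀ i, d + 1 ≤ i → r.coeff i = 0 := by
        intro i hi
        rw [hr, Polynomial.coeff_sub, Polynomial.coeff_smul, smul_eq_mul]
        rcases eq_or_lt_of_le hi with hi' | hi'
        · rw [← hi', hc, ← ha (d+1) t ht]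
          field_simp [han (d+1) t ht]
          ring
        · rw [Polynomial.coeff_eq_zero_of_natDegree_lt (by omega), hcz (d+1) i hi']
          ring
      have hrd : r.natDegree ≤ d :=
        Polynomial.natDegree_le_iff_coeff_eq_zero.mpr (fun i hi => hrc i (by omega))
      have hrz : ∀ i, m ≤ i → r.coeff i = 0 := by
        intro i hi
        rcases le_or_gt (d+1) i with h | h
        · exact hrc i h
        · have hc0 : c = 0 := by rw [hc, hz (d+1) (by omega), zero_div]
          rw [hr, hc0]
          simp [hz i hi]
      have hqr : q = r + c • P (d+1) t := by rw [hr]; ring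
      rw [hqr, mul_add, Jadd ν t ht, mul_smul_comm, Jsmul, ih m r hrd hrz, horthJ]
      rcases eq_or_ne m (d+1) with hm | hm
      · rw [if_pos hm, hc, hz (d+1) (le_of_eq hm)]; simp
      · rw [if_neg hm]; ring
  have orth0' : ∀ (m : ℕ) (q : Polynomial ℝ), (∀ i, m ≤ i → q.coeff i = 0) →
      Jf ν t (P m t * q) = 0 := fun m q hz => orth0 q.natDegree m q le_rfl hz
  have orthA : ∀ (m : ℕ) (q : Polynomial ℝ), (∀ i, m + 1 ≤ i → q.coeff i = 0) →
      Jf ν t (P m t * q) = q.coeff m / a m t := by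
    intro m q hz
    set c : ℝ := q.coeff m / a m t with hc
    set r : Polynomial ℝ := q - c • P m t with hr
    have hrz : ∀ i, m ≤ i → r.coeff i = 0 := by
      intro i hi
      rw [hr, Polynomial.coeff_sub, Polynomial.coeff_smul, smul_eq_mul]
      rcases eq_or_lt_of_le hi with hi' | hi'
      · rw [← hi', hc, ← ha m t ht]; field_simp [han m t ht]; ring
      · rw [hz i hi', hcz m i hi']; ring
    have hqr : q = r + c • P m t := by rw [hr]; ring
    rw [hqr, mul_add, Jadd ν t ht, mul_smul_comm, Jsmul, orth0' m r hrz, horthJ, if_pos rfl]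
    ring
  have orthB : ∀ (m : ℕ) (q : Polynomial ℝ), (∀ i, m + 2 ≤ i → q.coeff i = 0) →
      Jf ν t (P m t * q) = (q.coeff m - q.coeff (m+1) * b (m+1) t / a (m+1) t) / a m t := by
    intro m q hz
    set c : ℝ := q.coeff (m+1) / a (m+1) t with hc
    set r : Polynomial ℝ := q - c • P (m+1) t with hr
    have hrz : ∀ i, m + 1 ≤ i → r.coeff i = 0 := by
      intro i hi
      rw [hr, Polynomial.coeff_sub, Polynomial.coeff_smul, smul_eq_mul]
      rcases eq_or_lt_of_le hi with hi' | hi'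
      · rw [← hi', hc, ← ha (m+1) t ht]; field_simp [han (m+1) t ht]; ring
      · rw [hz i (by omega), hcz (m+1) i hi']; ring
    have hqr : q = r + c • P (m+1) t := by rw [hr]; ring
    rw [hqr, mul_add, Jadd ν t ht, mul_smul_comm, Jsmul, orthA m r hrz,
      horthJ, if_neg (by omega), hr]
    rw [Polynomial.coeff_sub, Polynomial.coeff_smul, smul_eq_mul, hc, ← hbs m t ht]
    ring
  -- the concrete evaluations
  have E1 : Jf ν t (P (k+1) t * derivative (P k t)) = 0 := by
    apply orth0'
    intro i hi
    rw [Polynomial.coeff_derivative, hcz k (i+1) (by omega)]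
    ring
  have E2 : Jf ν t (P k t * derivative (P (k+1) t)) = ((k:ℝ)+1) * a (k+1) t / a k t := by
    rw [orthA k _ (fun i hi => by
      rw [Polynomial.coeff_derivative, hcz (k+1) (i+1) (by omega)]; ring)]
    rw [Polynomial.coeff_derivative, ← ha (k+1) t ht]
    push_cast
    ring
  have E3 : Jf ν t (P (k+1) t * (X * derivative (P k t))) = 0 := by
    apply orth0'
    intro i hi
    obtain ⟨j, rfl⟩ : ∃ j, i = j + 1 := ⟨i - 1, by omega⟩
    rw [Polynomial.coeff_X_mul, Polynomial.coeff_derivative, hcz k (j+1) (by omega)]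
    ring
  have E4 : Jf ν t (P k t * (X * derivative (P (k+1) t))) = -(b (k+1) t) / a k t := by
    rw [orthB k _ (fun i hi => by
      obtain ⟨j, rfl⟩ : ∃ j, i = j + 1 := ⟨i - 1, by omega⟩
      rw [Polynomial.coeff_X_mul, Polynomial.coeff_derivative, hcz (k+1) (j+1) (by omega)]
      ring)]
    have c1 : (X * derivative (P (k+1) t)).coeff (k+1) = ((k:ℝ)+1) * a (k+1) t := by
      rw [Polynomial.coeff_X_mul, Polynomial.coeff_derivative, ← ha (k+1) t ht]
      push_cast; ring
    have c2 : (X * derivative (P (k+1) t)).coeff k = (k:ℝ) * b (k+1) t := by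
      cases k with
      | zero =>
        rw [Polynomial.mul_coeff_zero, Polynomial.coeff_X_zero]
        push_cast; ring
      | succ j =>
        rw [Polynomial.coeff_X_mul, Polynomial.coeff_derivative, ← hbs (j+1) t ht]
        push_cast; ring
    rw [c1, c2]
    field_simp [han k t ht, han (k+1) t ht]
    ring
  have E5 : Jf ν t (P (k+1) t * (X * P k t)) = a k t / a (k+1) t := by
    rw [orthA (k+1) _ (fun i hi => by
      obtain ⟨j, rfl⟩ : ∃ j, i = j + 1 := ⟨i - 1, by omega⟩
      rw [Polynomial.coeff_X_mul, hcz k j (by omega)])]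
    rw [Polynomial.coeff_X_mul, ← ha k t ht]
  -- IBP equations
  have hSdPi : Jf ν t (derivative (P (k+1) t * P k t)) = ((k:ℝ)+1) * a (k+1) t / a k t := by
    rw [Polynomial.derivative_mul, Jadd ν t ht,
      show derivative (P (k+1) t) * P k t = P k t * derivative (P (k+1) t) from mul_comm _ _,
      E2, E1, add_zero]
  have hSPi : Jf ν t (P (k+1) t * P k t) = 0 := by
    rw [horthJ, if_neg (by omega)]
  have ibp1 := ibpJ ν t ht (P (k+1) t * P k t)
  rw [hSdPi, hSPi] at ibp1
  have ibp2 := ibpJ ν t ht (X * (P (k+1) t * P k t))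
  have hd2 : Jf ν t (derivative (X * (P (k+1) t * P k t))) = -(b (k+1) t) / a k t := by
    rw [Polynomial.derivative_mul, Polynomial.derivative_X, one_mul, Jadd ν t ht, hSPi,
      Polynomial.derivative_mul, mul_add, Jadd ν t ht,
      show X * (derivative (P (k+1) t) * P k t) = P k t * (X * derivative (P (k+1) t)) by ring,
      show X * (P (k+1) t * derivative (P k t)) = P (k+1) t * (X * derivative (P k t)) by ring,
      E4, E3]
    ring
  have hsh1 : Jf (ν-1) t (X * (P (k+1) t * P k t)) = 0 := by
    rw [Jshift, show ν - 1 + 1 = ν by ring, hSPi]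
  have hν : Jf ν t (X * (P (k+1) t * P k t)) = a k t / a (k+1) t := by
    rw [show X * (P (k+1) t * P k t) = P (k+1) t * (X * P k t) by ring, E5]
  have hsh2 : Jf (ν-2) t (X * (P (k+1) t * P k t)) = Jf (ν-1) t (P (k+1) t * P k t) := by
    rw [Jshift, show ν - 2 + 1 = ν - 1 by ring]
  rw [hd2, hsh1, hν, hsh2] at ibp2
  -- final algebra
  have hgoal : (∫ x in Set.Ioi (0 : ℝ),
      (P (k+1) t).eval x * (P k t).eval x * (Real.exp (-x - t / x) * x ^ (ν - 2)))
      = Jf (ν-2) t (P (k+1) t * P k t) := by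
    unfold Jf
    congr 1; funext x; rw [Polynomial.eval_mul]; ring
  rw [hgoal, hA k t ht]
  have hak := han k t ht
  have hak1 := han (k+1) t ht
  set u := Jf (ν-1) t (P (k+1) t * P k t) with hu
  set v := Jf (ν-2) t (P (k+1) t * P k t) with hv
  have htu : t * u = a k t / a (k+1) t + b (k+1) t / a k t := by linear_combination ibp2
  have htv : t * v = -(((k:ℝ)+1) * a (k+1) t / a k t + ν * u) := by linear_combination ibp1
  have e1 : b (k+1) t / (a (k+1) t * (a k t / a (k+1) t)) = b (k+1) t / a k t := by
    rw [mul_div_cancel₀ _ hak1]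
  have e2 : ((k:ℝ)+1) / (a k t / a (k+1) t) = ((k:ℝ)+1) * a (k+1) t / a k t := by
    rw [div_div_eq_mul_div]
  have hv' : v = -((((k:ℝ)+1) * a (k+1) t / a k t) + ν * u) / t := by
    rw [eq_div_iff ht.ne']; linear_combination htv
  have hu' : u = (a k t / a (k+1) t + b (k+1) t / a k t) / t := by
    rw [eq_div_iff ht.ne']; linear_combination htu
  push_cast
  rw [e1, e2, hv', hu']
  ring
end

section
/- Let ν ∈ ℝ, t > 0 and n ≥ 1. For every x > 0, the orthonormal polynomials satisfy the first-order differential–difference equation x² · ∂P_n(x,t)/∂x = [ n·x − A_n(t)² − b_n(t)/a_n(t) ] · P_n(x,t) + A_n(t) · [ x + B_n(t) − ν − 1 − 2n ] · P_{n−1}(x,t). -/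
open MeasureTheory Set Filter Polynomial Real
open scoped Topology

namespace Stmt4Aux

lemma lim_zero_rpow_exp (ν t : ℝ) (ht : 0 < t) :
    Tendsto (fun x : ℝ => x ^ ν * Real.exp (-t / x)) (𝓝[>] (0:ℝ)) (𝓝 0) := by
  have h := (tendsto_rpow_mul_exp_neg_mul_atTop_nhds_zero (-ν) t ht).comp
    tendsto_inv_nhdsGT_zero
  refine h.congr' ?_
  filter_upwards [self_mem_nhdsWithin] with x (hx : 0 < x)
  simp only [Function.comp_apply]
  rw [Real.rpow_neg (inv_nonneg.2 hx.le), Real.inv_rpow hx.le, inv_inv,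
    neg_div, div_eq_mul_inv, neg_mul]

/-- limit at 0⁺ of polynomial × weight-like function -/

lemma lim_zero (ν t c : ℝ) (ht : 0 < t) (q : Polynomial ℝ) :
    Tendsto (fun x : ℝ => q.eval x * (x ^ ν * Real.exp (-(c * x) - t / x)))
      (𝓝[>] (0:ℝ)) (𝓝 0) := by
  have h1 : Tendsto (fun x : ℝ => q.eval x * Real.exp (-(c * x)))
      (𝓝[>] (0:ℝ)) (𝓝 (q.eval 0 * Real.exp 0)) := by
    apply Tendsto.mono_left _ nhdsWithin_le_nhds
    have hc1 : Tendsto (fun x : ℝ => -(c * x)) (𝓝 0) (𝓝 (-(c * 0))) :=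
      ((continuous_const.mul continuous_id).neg.tendsto 0)
    rw [mul_zero, neg_zero] at hc1
    exact ((q.continuous_aeval).tendsto 0).mul
      ((Real.continuous_exp.tendsto _).comp hc1)
  have := h1.mul (lim_zero_rpow_exp ν t ht)
  rw [mul_zero] at this
  refine this.congr (fun x => ?_)
  rw [sub_eq_add_neg, Real.exp_add, neg_div]
  ring

lemma lim_top (ν t c : ℝ) (ht : 0 < t) (hc : 0 < c) (q : Polynomial ℝ) :
    Tendsto (fun x : ℝ => q.eval x * (x ^ ν * Real.exp (-(c * x) - t / x)))
      atTop (𝓝 0) := by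
  have h2 : Tendsto (fun x : ℝ => Real.exp (-t / x)) atTop (𝓝 1) := by
    have : Tendsto (fun x : ℝ => -t / x) atTop (𝓝 0) :=
      Tendsto.div_atTop tendsto_const_nhds tendsto_id
    simpa [Function.comp_def] using (Real.continuous_exp.tendsto 0).comp this
  have h1 : Tendsto (fun x : ℝ => q.eval x * (x ^ ν * Real.exp (-(c * x))))
      atTop (𝓝 0) := by
    have key : ∀ i : ℕ, Tendsto (fun x : ℝ => q.coeff i * (x ^ (i : ℕ) * (x ^ ν * Real.exp (-(c * x)))))
        atTop (𝓝 0) := by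
      intro i
      have h := tendsto_rpow_mul_exp_neg_mul_atTop_nhds_zero ((i : ℝ) + ν) c hc
      have h' : Tendsto (fun x : ℝ => q.coeff i * (x ^ ((i : ℝ) + ν) * Real.exp (-c * x)))
          atTop (𝓝 (q.coeff i * 0)) := h.const_mul _
      rw [mul_zero] at h'
      refine h'.congr' ?_
      filter_upwards [eventually_gt_atTop (0:ℝ)] with x hx
      rw [Real.rpow_add hx, Real.rpow_natCast]
      ring_nf
    have hsum := tendsto_finset_sum (Finset.range (q.natDegree + 1))
      (fun i _ => key i)
    rw [Finset.sum_const_zero] at hsum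
    refine hsum.congr (fun x => ?_)
    have : eval x q = ∑ i ∈ Finset.range (q.natDegree + 1), q.coeff i * x ^ i :=
      Polynomial.eval_eq_sum_range (p := q) x
    rw [this, Finset.sum_mul]
    exact Finset.sum_congr rfl (fun i _ => by ring)
  have := h1.mul h2
  rw [zero_mul] at this
  refine this.congr (fun x => ?_)
  rw [sub_eq_add_neg, Real.exp_add, neg_div]
  ring

lemma exists_bound (f : ℝ → ℝ) (hc : ContinuousOn f (Ioi 0))
    (h0 : Tendsto f (𝓝[>] (0:ℝ)) (𝓝 0)) (hi : Tendsto f atTop (𝓝 0)) :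
    ∃ M : ℝ, ∀ x ∈ Ioi (0:ℝ), |f x| ≤ M := by
  have h0' : ∀ᶠ x in 𝓝[>] (0:ℝ), |f x| < 1 := by
    have := h0.abs; rw [abs_zero] at this
    exact this.eventually_lt_const one_pos
  obtain ⟨u, hu, hsub⟩ := mem_nhdsGT_iff_exists_Ioo_subset.mp h0'
  have hi' : ∀ᶠ x in atTop, |f x| < 1 := by
    have := hi.abs; rw [abs_zero] at this
    exact this.eventually_lt_const one_pos
  obtain ⟨R, hR⟩ := eventually_atTop.mp hi'
  set R' := max u R with hR'
  obtain ⟨C, hC⟩ := (isCompact_Icc (a := u) (b := R')).exists_bound_of_continuousOn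
    (hc.mono (fun x hx => lt_of_lt_of_le hu hx.1))
  refine ⟨max 1 C, fun x hx => ?_⟩
  rcases lt_or_ge x u with h1 | h1
  · exact le_trans (le_of_lt (hsub ⟨hx, h1⟩)) (le_max_left _ _)
  rcases le_or_gt x R' with h2 | h2
  · exact le_trans (hC x ⟨h1, h2⟩) (le_max_right _ _)
  · exact le_trans (le_of_lt (hR x (le_trans (le_max_right u R) h2.le))) (le_max_left _ _)

lemma contOn_weight (ν t c : ℝ) (q : Polynomial ℝ) :
    ContinuousOn (fun x : ℝ => q.eval x * (x ^ ν * Real.exp (-(c * x) - t / x))) (Ioi 0) := by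
  intro x hx
  have hx0 : (x:ℝ) ≠ 0 := ne_of_gt hx
  refine ContinuousAt.continuousWithinAt ?_
  apply ContinuousAt.mul (q.continuous_aeval.continuousAt)
  apply ContinuousAt.mul (Real.continuousAt_rpow_const x ν (Or.inl hx0))
  exact Real.continuous_exp.continuousAt.comp
    (((continuous_const.mul continuous_id).neg.continuousAt).sub
      (continuousAt_const.div continuousAt_id hx0))

lemma integrable_poly_weight (ν t : ℝ) (ht : 0 < t) (q : Polynomial ℝ) :
    IntegrableOn (fun x => q.eval x * (x ^ ν * Real.exp (-x - t / x))) (Ioi (0:ℝ)) := by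
  set f : ℝ → ℝ := fun x => q.eval x * (x ^ ν * Real.exp (-((1:ℝ)/2 * x) - t / x)) with hf
  obtain ⟨M, hM⟩ := exists_bound f (contOn_weight ν t (1/2) q)
    (lim_zero ν t (1/2) ht q) (lim_top ν t (1/2) ht one_half_pos q)
  have hmeas : AEStronglyMeasurable
      (fun x => q.eval x * (x ^ ν * Real.exp (-x - t / x)))
      (volume.restrict (Ioi (0:ℝ))) := by
    refine ContinuousOn.aestronglyMeasurable ?_ measurableSet_Ioi
    have := contOn_weight ν t 1 q
    refine this.congr (fun x _ => ?_)
    simp only [one_mul]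
  have hint : IntegrableOn (fun x : ℝ => M * Real.exp (-(1/2 : ℝ) * x)) (Ioi (0:ℝ)) :=
    (exp_neg_integrableOn_Ioi 0 one_half_pos).const_mul M
  refine Integrable.mono' hint hmeas ?_
  rw [ae_restrict_iff' measurableSet_Ioi]
  refine Eventually.of_forall (fun x hx => ?_)
  have key : q.eval x * (x ^ ν * Real.exp (-x - t / x))
      = f x * Real.exp (-(1/2 : ℝ) * x) := by
    simp only [hf]
    rw [mul_assoc, mul_assoc, ← Real.exp_add]
    ring_nf
  rw [Real.norm_eq_abs, key, abs_mul, abs_of_pos (Real.exp_pos _)]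
  exact mul_le_mul_of_nonneg_right (hM x hx) (Real.exp_pos _).le

noncomputable def Ifun (ν t : ℝ) (p : Polynomial ℝ) : ℝ :=
  ∫ x in Ioi (0:ℝ), p.eval x * (x ^ ν * Real.exp (-x - t / x))

lemma I_L (ν t : ℝ) (ht : 0 < t) (p : Polynomial ℝ) :
    Ifun ν t (X^2 * derivative p + (C (2+ν) * X - X^2 + C t) * p) = 0 := by
  classical
  set q : Polynomial ℝ := X^2 * derivative p + (C (2+ν) * X - X^2 + C t) * p with hq
  set F : ℝ → ℝ := fun x => if x ≤ 0 then 0 else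
    (x^2 * p.eval x) * (x ^ ν * Real.exp (-x - t / x)) with hF
  set f' : ℝ → ℝ := fun x => q.eval x * (x ^ ν * Real.exp (-x - t / x)) with hf'
  have hFIoi : ∀ x : ℝ, 0 < x →
      F x = (X^2 * p : Polynomial ℝ).eval x * (x ^ ν * Real.exp (-(1 * x) - t / x)) := by
    intro x hx
    simp only [hF, if_neg (not_le.mpr hx), eval_mul, eval_pow, eval_X, one_mul]
  -- continuity at 0 from the right
  have hcont : ContinuousWithinAt F (Ici (0:ℝ)) 0 := by
    have hF0 : F 0 = 0 := by simp [hF]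
    rw [ContinuousWithinAt, hF0]
    have : Ici (0:ℝ) = insert 0 (Ioi 0) := by
      rw [Set.Ioi_insert]
    rw [this, nhdsWithin_insert]
    refine Tendsto.sup ?_ ?_
    · have h := tendsto_pure_nhds F 0
      rwa [hF0] at h
    · refine ((lim_zero ν t 1 ht (X^2 * p)).congr' ?_)
      filter_upwards [self_mem_nhdsWithin] with x (hx : 0 < x)
      exact (hFIoi x hx).symm
  -- derivative on Ioi 0
  have hderiv : ∀ x ∈ Ioi (0:ℝ), HasDerivAt F (f' x) x := by
    intro x hx
    rw [Set.mem_Ioi] at hx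
    have hx0 : x ≠ 0 := ne_of_gt hx
    -- the smooth formula
    set G : ℝ → ℝ := fun y => (y^2 * p.eval y) * (y ^ ν * Real.exp (-y - t / y)) with hG
    have hFG : F =ᶠ[𝓝 x] G := by
      filter_upwards [eventually_gt_nhds hx] with y hy
      simp only [hF, hG, if_neg (not_le.mpr hy)]
    have hu : HasDerivAt (fun y : ℝ => y^2 * p.eval y)
        (2 * x * p.eval x + x^2 * (derivative p).eval x) x := by
      have h1 : HasDerivAt (fun y : ℝ => y^2) (2 * x) x := by
        simpa using hasDerivAt_pow 2 x
      exact (h1.mul (p.hasDerivAt x)).congr_deriv (by ring)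
    have hv1 : HasDerivAt (fun y : ℝ => y ^ ν) (ν * x ^ (ν - 1)) x :=
      Real.hasDerivAt_rpow_const (Or.inl hx0)
    have hinner : HasDerivAt (fun y : ℝ => -y - t / y) (-1 + t / x^2) x := by
      have h2 : HasDerivAt (fun y : ℝ => t / y) (t * -(x^2)⁻¹) x := by
        simpa [div_eq_mul_inv] using (hasDerivAt_inv hx0).const_mul t
      have h3 : HasDerivAt (fun y : ℝ => -y) (-1 : ℝ) x := (hasDerivAt_id x).neg
      have := h3.sub h2
      exact this.congr_deriv (by ring)
    have hv2 : HasDerivAt (fun y : ℝ => Real.exp (-y - t / y))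
        (Real.exp (-x - t / x) * (-1 + t / x^2)) x := hinner.exp
    have hv : HasDerivAt (fun y : ℝ => y ^ ν * Real.exp (-y - t / y))
        (ν * x ^ (ν - 1) * Real.exp (-x - t / x)
          + x ^ ν * (Real.exp (-x - t / x) * (-1 + t / x^2))) x := hv1.mul hv2
    have hGd := hu.mul hv
    have heq : (2 * x * p.eval x + x^2 * (derivative p).eval x)
          * (x ^ ν * Real.exp (-x - t / x))
        + (x^2 * p.eval x) * (ν * x ^ (ν - 1) * Real.exp (-x - t / x)
          + x ^ ν * (Real.exp (-x - t / x) * (-1 + t / x^2)))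
        = f' x := by
      have hr : x ^ (ν - 1) = x ^ ν / x := by
        rw [Real.rpow_sub hx, Real.rpow_one]
      simp only [hf', hq, eval_add, eval_mul, eval_sub, eval_pow, eval_X, eval_C]
      rw [hr]
      field_simp
      ring
    rw [heq] at hGd
    exact hGd.congr_of_eventuallyEq hFG
  have f'int : IntegrableOn f' (Ioi (0:ℝ)) := integrable_poly_weight ν t ht q
  have hftop : Tendsto F atTop (𝓝 0) := by
    refine ((lim_top ν t 1 ht one_pos (X^2 * p)).congr' ?_)
    filter_upwards [eventually_gt_atTop (0:ℝ)] with x hx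
    exact (hFIoi x hx).symm
  have := integral_Ioi_of_hasDerivAt_of_tendsto hcont hderiv f'int hftop
  simp only [hF, le_refl, if_pos, sub_zero] at this
  simpa [Ifun, hf'] using this

lemma coeff_X2_mul (p : Polynomial ℝ) (i : ℕ) : (X^2 * p).coeff (i+2) = p.coeff i := by
  have e : X^2 * p = X * (X * p) := by ring
  rw [e, coeff_X_mul, coeff_X_mul]

lemma coeff_X2_mul_one (p : Polynomial ℝ) : (X^2 * p).coeff 1 = 0 := by
  have e : X^2 * p = X * (X * p) := by ring
  rw [e, coeff_X_mul]
  rw [show (X * p : Polynomial ℝ) = p * X by ring, coeff_mul_X_zero]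

lemma coeff_X2_mul_zero (p : Polynomial ℝ) : (X^2 * p).coeff 0 = 0 := by
  rw [show (X^2 * p : Polynomial ℝ) = (X * p) * X by ring, coeff_mul_X_zero]

lemma coeff_X2_deriv_succ (p : Polynomial ℝ) (i : ℕ) :
    (X^2 * derivative p).coeff (i+2) = p.coeff (i+1) * ((i:ℝ)+1) := by
  rw [coeff_X2_mul, coeff_derivative]

/-- `(X² p')` has coefficient `m * p.coeff m` at `m+1`, uniformly in `m`. -/

lemma coeff_X2_deriv_succ' (p : Polynomial ℝ) (m : ℕ) :
    (X^2 * derivative p).coeff (m+1) = (m:ℝ) * p.coeff m := by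
  cases m with
  | zero => simpa using coeff_X2_mul_one (derivative p)
  | succ i =>
    rw [show i + 1 + 1 = i + 2 by ring, coeff_X2_deriv_succ]
    push_cast; ring

lemma degle_mul {p q : Polynomial ℝ} {i j : ℕ} (hp : p.degree ≤ (i:ℕ)) (hq : q.degree ≤ (j:ℕ)) :
    (p*q).degree ≤ ((i+j : ℕ) : WithBot ℕ) := by
  refine le_trans (degree_mul_le _ _) ?_
  rw [Nat.cast_add]
  exact add_le_add hp hq

lemma deg_X_le' : (X : Polynomial ℝ).degree ≤ ((1:ℕ) : WithBot ℕ) := by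
  simpa using degree_X_le (R := ℝ)

lemma deg_X_mul_le {q : Polynomial ℝ} {k : ℕ} (hq : q.degree ≤ (k:ℕ)) :
    (X * q).degree ≤ ((k+1 : ℕ) : WithBot ℕ) := by
  have := degle_mul deg_X_le' hq
  rwa [show 1 + k = k + 1 by ring] at this

lemma deg_X2_mul_le {q : Polynomial ℝ} {k : ℕ} (hq : q.degree ≤ (k:ℕ)) :
    (X^2 * q).degree ≤ ((k+2 : ℕ) : WithBot ℕ) := by
  have e : X^2 * q = X * (X * q) := by ring
  rw [e]
  have := deg_X_mul_le (deg_X_mul_le hq)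
  rwa [show k + 1 + 1 = k + 2 by ring] at this

lemma deg_X2_deriv_le {p : Polynomial ℝ} {m : ℕ} (hp : p.degree ≤ (m:ℕ)) :
    (X^2 * derivative p).degree ≤ ((m+1 : ℕ) : WithBot ℕ) := by
  refine (Polynomial.degree_le_iff_coeff_zero _ _).mpr (fun j hj => ?_)
  have hj' : m + 2 ≤ j := by exact_mod_cast hj
  obtain ⟨i, rfl⟩ : ∃ i, j = i + 2 := ⟨j - 2, by omega⟩
  rw [coeff_X2_mul, coeff_derivative]
  have : p.coeff (i+1) = 0 := coeff_eq_zero_of_degree_lt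
    (lt_of_le_of_lt hp (by exact_mod_cast (by omega : m < i + 1)))
  rw [this, zero_mul]

variable {ν t : ℝ} {Q : ℕ → Polynomial ℝ}

lemma I_add (ht : 0 < t) (p q : Polynomial ℝ) :
    Ifun ν t (p + q) = Ifun ν t p + Ifun ν t q := by
  unfold Ifun
  rw [← integral_add (integrable_poly_weight ν t ht p) (integrable_poly_weight ν t ht q)]
  congr 1; funext x; rw [eval_add]; ring

lemma I_smul (c : ℝ) (p : Polynomial ℝ) : Ifun ν t (c • p) = c * Ifun ν t p := by
  unfold Ifun
  rw [← integral_const_mul]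
  congr 1; funext x; rw [eval_smul, smul_eq_mul]; ring

lemma I_sum (ht : 0 < t) {ι : Type*} (s : Finset ι) (f : ι → Polynomial ℝ) :
    Ifun ν t (∑ i ∈ s, f i) = ∑ i ∈ s, Ifun ν t (f i) := by
  classical
  induction s using Finset.induction_on with
  | empty => simp [Ifun]
  | insert _ _ hx ih =>
    rw [Finset.sum_insert hx, Finset.sum_insert hx, I_add ht, ih]

lemma span (hdeg : ∀ k, (Q k).degree = (k:ℕ)) (hlead : ∀ k, (Q k).coeff k ≠ 0) :
    ∀ N : ℕ, ∀ q : Polynomial ℝ, q.degree < (N:ℕ) →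
      ∃ c : ℕ → ℝ, q = ∑ k ∈ Finset.range N, c k • Q k := by
  intro N
  induction N with
  | zero =>
    intro q hq
    refine ⟨fun _ => 0, ?_⟩
    have hq0 : q = 0 := by
      ext j
      exact (Polynomial.degree_lt_iff_coeff_zero q 0).mp hq j (Nat.zero_le j)
    simp [hq0]
  | succ N ih =>
    intro q hq
    set c1 : ℝ := q.coeff N / (Q N).coeff N with hc1
    have hdq : (q - c1 • Q N).degree < (N:ℕ) := by
      rw [Polynomial.degree_lt_iff_coeff_zero]
      intro j hj
      rw [coeff_sub, coeff_smul, smul_eq_mul]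
      rcases eq_or_lt_of_le hj with rfl | hj'
      · rw [hc1, div_mul_cancel₀ _ (hlead N), sub_self]
      · have h1 : q.coeff j = 0 := coeff_eq_zero_of_degree_lt
          (lt_of_lt_of_le hq (by exact_mod_cast hj'))
        have h2 : (Q N).coeff j = 0 := coeff_eq_zero_of_degree_lt
          (by rw [hdeg N]; exact_mod_cast hj')
        rw [h1, h2, mul_zero, sub_zero]
    obtain ⟨c, hc⟩ := ih _ hdq
    refine ⟨fun k => if k = N then c1 else c k, ?_⟩
    rw [Finset.sum_range_succ]
    simp only [if_pos rfl]
    have : ∑ k ∈ Finset.range N, (if k = N then c1 else c k) • Q k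
        = ∑ k ∈ Finset.range N, c k • Q k := by
      refine Finset.sum_congr rfl (fun k hk => ?_)
      rw [if_neg (Nat.ne_of_lt (Finset.mem_range.mp hk))]
    rw [this, ← hc]
    norm_num

lemma I_parts {ν t : ℝ} (ht : 0 < t) (p q : Polynomial ℝ) :
    Ifun ν t (X^2 * (derivative p * q)) + Ifun ν t (X^2 * (p * derivative q))
      = Ifun ν t (X^2 * (p * q)) - (2+ν) * Ifun ν t (X * (p * q))
        - t * Ifun ν t (p * q) := by
  have h := I_L ν t ht (p * q)
  have e : X^2 * derivative (p*q) + (C (2+ν) * X - X^2 + C t) * (p*q)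
      = (X^2 * (derivative p * q)) + ((X^2 * (p * derivative q))
        + ((2+ν) • (X * (p*q)) + (((-1:ℝ)) • (X^2 * (p*q)) + t • (p*q)))) := by
    simp only [derivative_mul, smul_eq_C_mul, map_neg, map_one]
    ring
  rw [e, I_add ht, I_add ht, I_add ht, I_add ht, I_smul, I_smul, I_smul] at h
  linarith


variable (ht : 0 < t)
variable (hdeg : ∀ k, (Q k).degree = (k:ℕ))
variable (hlead : ∀ k, (Q k).coeff k ≠ 0)
variable (horthQ : ∀ i j, Ifun ν t (Q i * Q j) = if i = j then 1 else 0)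

include ht hdeg hlead horthQ

lemma I_orth_lt (k : ℕ) (q : Polynomial ℝ) (hq : q.degree < (k:ℕ)) :
    Ifun ν t (q * Q k) = 0 := by
  obtain ⟨c, hc⟩ := span hdeg hlead k q hq
  rw [hc, Finset.sum_mul]
  have : ∀ j ∈ Finset.range k, (c j • Q j) * Q k = c j • (Q j * Q k) := by
    intro j _; rw [smul_mul_assoc]
  rw [Finset.sum_congr rfl this, I_sum ht]
  refine Finset.sum_eq_zero (fun j hj => ?_)
  rw [I_smul, horthQ j k, if_neg (Nat.ne_of_lt (Finset.mem_range.mp hj)), mul_zero]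

lemma I_V1 (k : ℕ) (q : Polynomial ℝ) (hq : q.degree ≤ (k:ℕ)) :
    Ifun ν t (q * Q k) = q.coeff k / (Q k).coeff k := by
  set c1 : ℝ := q.coeff k / (Q k).coeff k with hc1
  have hdq : (q - c1 • Q k).degree < (k:ℕ) := by
    rw [Polynomial.degree_lt_iff_coeff_zero]
    intro j hj
    rw [coeff_sub, coeff_smul, smul_eq_mul]
    rcases eq_or_lt_of_le hj with rfl | hj'
    · rw [hc1, div_mul_cancel₀ _ (hlead k), sub_self]
    · have h1 : q.coeff j = 0 := coeff_eq_zero_of_degree_lt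
        (lt_of_le_of_lt hq (by exact_mod_cast hj'))
      have h2 : (Q k).coeff j = 0 := coeff_eq_zero_of_degree_lt
        (by rw [hdeg k]; exact_mod_cast hj')
      rw [h1, h2, mul_zero, sub_zero]
  have h0 := I_orth_lt ht hdeg hlead horthQ k _ hdq
  have hsplit : q * Q k = (q - c1 • Q k) * Q k + c1 • (Q k * Q k) := by
    rw [sub_mul, smul_mul_assoc]; abel
  rw [hsplit, I_add ht, h0, I_smul, horthQ k k, if_pos rfl, zero_add, mul_one]

lemma I_V2 (k : ℕ) (q : Polynomial ℝ) (hq : q.degree ≤ ((k+1:ℕ):WithBot ℕ)) :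
    Ifun ν t (q * Q k)
      = (q.coeff k - q.coeff (k+1) / (Q (k+1)).coeff (k+1) * (Q (k+1)).coeff k)
          / (Q k).coeff k := by
  set c2 : ℝ := q.coeff (k+1) / (Q (k+1)).coeff (k+1) with hc2
  have hdq : (q - c2 • Q (k+1)).degree ≤ (k:ℕ) := by
    refine (Polynomial.degree_le_iff_coeff_zero _ _).mpr (fun j hj => ?_)
    have hj' : k + 1 ≤ j := by exact_mod_cast hj
    rw [coeff_sub, coeff_smul, smul_eq_mul]
    rcases eq_or_lt_of_le hj' with rfl | hj''
    · rw [hc2, div_mul_cancel₀ _ (hlead (k+1)), sub_self]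
    · have h1 : q.coeff j = 0 := coeff_eq_zero_of_degree_lt
        (lt_of_le_of_lt hq (by exact_mod_cast hj''))
      have h2 : (Q (k+1)).coeff j = 0 := coeff_eq_zero_of_degree_lt
        (by rw [hdeg (k+1)]; exact_mod_cast hj'')
      rw [h1, h2, mul_zero, sub_zero]
  have hV1 := I_V1 ht hdeg hlead horthQ k _ hdq
  have hsplit : q * Q k = (q - c2 • Q (k+1)) * Q k + c2 • (Q (k+1) * Q k) := by
    rw [sub_mul, smul_mul_assoc]; abel
  rw [hsplit, I_add ht, hV1, I_smul, horthQ (k+1) k, if_neg (by omega), mul_zero, add_zero,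
    coeff_sub, coeff_smul, smul_eq_mul, hc2]

lemma I_eq_zero (N : ℕ) (q : Polynomial ℝ) (hq : q.degree < (N:ℕ))
    (h : ∀ k, k < N → Ifun ν t (q * Q k) = 0) : q = 0 := by
  obtain ⟨c, hc⟩ := span hdeg hlead N q hq
  have hcj : ∀ j, j < N → c j = 0 := by
    intro j hj
    have := h j hj
    rw [hc, Finset.sum_mul] at this
    have e : ∀ i ∈ Finset.range N, (c i • Q i) * Q j = c i • (Q i * Q j) := by
      intro i _; rw [smul_mul_assoc]
    rw [Finset.sum_congr rfl e, I_sum ht] at this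
    have e2 : ∀ i ∈ Finset.range N, Ifun ν t (c i • (Q i * Q j)) = if i = j then c i else 0 := by
      intro i _
      rw [I_smul, horthQ i j]
      split_ifs <;> simp
    rw [Finset.sum_congr rfl e2, Finset.sum_ite_eq' (Finset.range N) j c,
      if_pos (Finset.mem_range.mpr hj)] at this
    exact this
  rw [hc]
  refine Finset.sum_eq_zero (fun j hj => ?_)
  rw [hcj j (Finset.mem_range.mp hj), zero_smul]


end Stmt4Aux
set_option maxHeartbeats 2000000 in
open Stmt4Aux in
theorem stmt_4
    (ν : ℝ)
    (P : ℕ → ℝ → Polynomial ℝ)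
    (a b A B : ℕ → ℝ → ℝ)
    (hdeg : ∀ n : ℕ, ∀ t : ℝ, 0 < t → (P n t).degree = (n : ℕ))
    (ha : ∀ n : ℕ, ∀ t : ℝ, 0 < t → a n t = (P n t).coeff n)
    (han : ∀ n : ℕ, ∀ t : ℝ, 0 < t → a n t ≠ 0)
    (hbs : ∀ n : ℕ, ∀ t : ℝ, 0 < t → b (n + 1) t = (P (n + 1) t).coeff n)
    (hb0 : ∀ t : ℝ, 0 < t → b 0 t = 0)
    (horth : ∀ n m : ℕ, ∀ t : ℝ, 0 < t →
      (∫ x in Set.Ioi (0 : ℝ),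
        (P n t).eval x * (P m t).eval x * (x ^ ν * Real.exp (-x - t / x)))
        = if n = m then 1 else 0)
    (hA0 : ∀ t : ℝ, 0 < t → A 0 t = 0)
    (hA : ∀ n : ℕ, ∀ t : ℝ, 0 < t → A (n + 1) t = a n t / a (n + 1) t)
    (hB : ∀ n : ℕ, ∀ t : ℝ, 0 < t → B n t = b n t / a n t - b (n + 1) t / a (n + 1) t)
    (n : ℕ) (hn : 1 ≤ n) (t : ℝ) (ht : 0 < t) :
    ∀ x : ℝ, 0 < x →
      x ^ 2 * (Polynomial.derivative (P n t)).eval x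
        = ((n : ℝ) * x - (A n t) ^ 2 - b n t / a n t) * (P n t).eval x
          + A n t * (x + B n t - ν - 1 - 2 * (n : ℝ)) * (P (n - 1) t).eval x := by
  classical
  obtain ⟨m, rfl⟩ : ∃ m, n = m + 1 := ⟨n - 1, by omega⟩
  have hdegQ : ∀ k, (P k t).degree = (k:ℕ) := fun k => hdeg k t ht
  have hdegQle : ∀ k, (P k t).degree ≤ (k:ℕ) := fun k => le_of_eq (hdegQ k)
  have hleadQ : ∀ k, (P k t).coeff k ≠ 0 := fun k => (ha k t ht) ▸ han k t ht
  have horthQ : ∀ i j, Ifun ν t (P i t * P j t) = if i = j then 1 else 0 := by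
    intro i j
    rw [← horth i j t ht, Ifun]
    congr 1; funext x; rw [eval_mul]
  -- value lemmas
  have v1 : ∀ j k : ℕ, j + 1 < k → Ifun ν t (X * P j t * P k t) = 0 := by
    intro j k hjk
    exact I_orth_lt ht hdegQ hleadQ horthQ k _
      (lt_of_le_of_lt (deg_X_mul_le (hdegQle j)) (by exact_mod_cast hjk))
  have v2 : ∀ j k : ℕ, k + 1 < j → Ifun ν t (X * P j t * P k t) = 0 := by
    intro j k h
    rw [show X * P j t * P k t = X * P k t * P j t by ring]
    exact v1 k j h
  have v3 : ∀ j, Ifun ν t (X * P j t * P (j+1) t)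
      = (P j t).coeff j / (P (j+1) t).coeff (j+1) := by
    intro j
    have h := I_V1 ht hdegQ hleadQ horthQ (j+1) (X * P j t) (deg_X_mul_le (hdegQle j))
    rwa [coeff_X_mul] at h
  have v4 : ∀ j, Ifun ν t (X * P (j+1) t * P j t)
      = (P j t).coeff j / (P (j+1) t).coeff (j+1) := by
    intro j
    rw [show X * P (j+1) t * P j t = X * P j t * P (j+1) t by ring]
    exact v3 j
  have v5 : ∀ j, Ifun ν t (X * P j t * P j t)
      = ((X * P j t).coeff j
          - (P j t).coeff j / (P (j+1) t).coeff (j+1) * (P (j+1) t).coeff j)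
        / (P j t).coeff j := by
    intro j
    have h := I_V2 ht hdegQ hleadQ horthQ j (X * P j t)
      (by exact_mod_cast deg_X_mul_le (hdegQle j))
    rwa [coeff_X_mul] at h
  have o0 : ∀ i j : ℕ, i ≠ j → Ifun ν t (P i t * P j t) = 0 := by
    intro i j hij; rw [horthQ i j, if_neg hij]
  -- X^2 values
  have w1 : Ifun ν t (X^2 * P m t * P (m+1) t)
      = ((X * P m t).coeff m
          - (P m t).coeff m / (P (m+2) t).coeff (m+2) * (P (m+2) t).coeff (m+1))
        / (P (m+1) t).coeff (m+1) := by
    have h := I_V2 ht hdegQ hleadQ horthQ (m+1) (X^2 * P m t)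
      (by exact_mod_cast deg_X2_mul_le (hdegQle m))
    have e1 : (X^2 * P m t).coeff (m+1+1) = (P m t).coeff m := coeff_X2_mul (P m t) m
    have e2 : (X^2 * P m t).coeff (m+1) = (X * P m t).coeff m := by
      rw [show (X^2 * P m t : Polynomial ℝ) = X * (X * P m t) by ring, coeff_X_mul]
    rw [e1, e2] at h
    have e3 : m+1+1 = m+2 := rfl
    rw [e3] at h
    exact h
  have w3 : ∀ k, Ifun ν t (X^2 * P k t * P (k+2) t)
      = (P k t).coeff k / (P (k+2) t).coeff (k+2) := by
    intro k
    have h := I_V1 ht hdegQ hleadQ horthQ (k+2) (X^2 * P k t)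
      (deg_X2_mul_le (hdegQle k))
    rwa [coeff_X2_mul] at h
  have w0 : ∀ k j : ℕ, k + 2 < j → Ifun ν t (X^2 * P k t * P j t) = 0 := by
    intro k j h
    exact I_orth_lt ht hdegQ hleadQ horthQ j _
      (lt_of_le_of_lt (deg_X2_mul_le (hdegQle k)) (by exact_mod_cast h))
  -- X^2 * derivative values
  have y1 : Ifun ν t (X^2 * derivative (P (m+1) t) * P (m+2) t)
      = (P (m+1) t).coeff (m+1) * ((m:ℝ)+1) / (P (m+2) t).coeff (m+2) := by
    have h := I_V1 ht hdegQ hleadQ horthQ (m+2) (X^2 * derivative (P (m+1) t))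
      (by exact_mod_cast deg_X2_deriv_le (hdegQle (m+1)))
    have e1 : (X^2 * derivative (P (m+1) t)).coeff (m+1+1)
        = (P (m+1) t).coeff (m+1) * ((m:ℝ)+1) := coeff_X2_deriv_succ (P (m+1) t) m
    rw [e1] at h
    rwa [show m+1+1 = m+2 from rfl] at h
  have y2 : Ifun ν t (X^2 * derivative (P (m+1) t) * P (m+1) t)
      = ((m:ℝ) * (P (m+1) t).coeff m
          - (P (m+1) t).coeff (m+1) * ((m:ℝ)+1) / (P (m+2) t).coeff (m+2)
            * (P (m+2) t).coeff (m+1))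
        / (P (m+1) t).coeff (m+1) := by
    have h := I_V2 ht hdegQ hleadQ horthQ (m+1) (X^2 * derivative (P (m+1) t))
      (by exact_mod_cast deg_X2_deriv_le (hdegQle (m+1)))
    have e1 : (X^2 * derivative (P (m+1) t)).coeff (m+1+1)
        = (P (m+1) t).coeff (m+1) * ((m:ℝ)+1) := coeff_X2_deriv_succ (P (m+1) t) m
    have e2 : (X^2 * derivative (P (m+1) t)).coeff (m+1)
        = (m:ℝ) * (P (m+1) t).coeff m := coeff_X2_deriv_succ' (P (m+1) t) m
    rw [e1, e2] at h
    rwa [show m+1+1 = m+2 from rfl] at h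
  have y4 : Ifun ν t (X^2 * derivative (P m t) * P (m+1) t)
      = (m:ℝ) * (P m t).coeff m / (P (m+1) t).coeff (m+1) := by
    have h := I_V1 ht hdegQ hleadQ horthQ (m+1) (X^2 * derivative (P m t))
      (deg_X2_deriv_le (hdegQle m))
    rwa [coeff_X2_deriv_succ'] at h
  have y0 : ∀ k j : ℕ, k + 1 < j → Ifun ν t (X^2 * derivative (P k t) * P j t) = 0 := by
    intro k j h
    exact I_orth_lt ht hdegQ hleadQ horthQ j _
      (lt_of_le_of_lt (deg_X2_deriv_le (hdegQle k)) (by exact_mod_cast h))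
  -- the polynomial S
  set nn : ℝ := ((m+1 : ℕ) : ℝ) with hnn
  set c1 : ℝ := (A (m+1) t)^2 + b (m+1) t / a (m+1) t with hc1
  set c4 : ℝ := B (m+1) t - ν - 1 - 2*nn with hc4
  set SS : Polynomial ℝ := X^2 * derivative (P (m+1) t)
      - (C nn * X - C c1) * P (m+1) t
      - C (A (m+1) t) * (X + C c4) * P m t with hSS
  -- translations of the constants
  have hAv : A (m+1) t = (P m t).coeff m / (P (m+1) t).coeff (m+1) := by
    rw [hA m t ht, ha m t ht, ha (m+1) t ht]
  have hbv : b (m+1) t = (P (m+1) t).coeff m := hbs m t ht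
  have hbv2 : b (m+2) t = (P (m+2) t).coeff (m+1) := hbs (m+1) t ht
  have hav : a (m+1) t = (P (m+1) t).coeff (m+1) := ha (m+1) t ht
  have hav2 : a (m+2) t = (P (m+2) t).coeff (m+2) := ha (m+2) t ht
  have hBv : B (m+1) t = (P (m+1) t).coeff m / (P (m+1) t).coeff (m+1)
      - (P (m+2) t).coeff (m+1) / (P (m+2) t).coeff (m+2) := by
    rw [hB (m+1) t ht, hbv, hav, hbv2, hav2]
  -- expansion of S * Q k under I
  have hSQ : ∀ k : ℕ, Ifun ν t (SS * P k t)
      = Ifun ν t (X^2 * derivative (P (m+1) t) * P k t)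
        - nn * Ifun ν t (X * P (m+1) t * P k t)
        + c1 * Ifun ν t (P (m+1) t * P k t)
        - A (m+1) t * Ifun ν t (X * P m t * P k t)
        - (A (m+1) t * c4) * Ifun ν t (P m t * P k t) := by
    intro k
    have e : SS * P k t = (X^2 * derivative (P (m+1) t) * P k t)
        + ((-nn) • (X * P (m+1) t * P k t)
        + (c1 • (P (m+1) t * P k t)
        + ((-(A (m+1) t)) • (X * P m t * P k t)
        + (-(A (m+1) t * c4)) • (P m t * P k t)))) := by
      rw [hSS]
      simp only [smul_eq_C_mul, map_neg, map_mul]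
      ring
    rw [e, I_add ht, I_add ht, I_add ht, I_add ht, I_smul, I_smul, I_smul, I_smul]
    ring
  have hdegSS : SS.degree < ((m+3 : ℕ) : WithBot ℕ) := by
    have d1 : (X^2 * derivative (P (m+1) t)).degree ≤ ((m+2:ℕ) : WithBot ℕ) :=
      deg_X2_deriv_le (hdegQle (m+1))
    have dlin : (C nn * X - C c1).degree ≤ ((1:ℕ) : WithBot ℕ) := by
      rw [sub_eq_add_neg, ← map_neg C]
      simpa using degree_linear_le (a := nn) (b := -c1)
    have d2 : ((C nn * X - C c1) * P (m+1) t).degree ≤ ((m+2:ℕ) : WithBot ℕ) := by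
      have h := degle_mul dlin (hdegQle (m+1))
      rwa [show 1 + (m+1) = m+2 by ring] at h
    have dC : (C (A (m+1) t)).degree ≤ ((0:ℕ) : WithBot ℕ) := by
      simpa using degree_C_le (a := A (m+1) t)
    have dX : (X + C c4 : Polynomial ℝ).degree ≤ ((1:ℕ) : WithBot ℕ) := by
      simpa using le_of_eq (degree_X_add_C c4)
    have d3 : (C (A (m+1) t) * (X + C c4) * P m t).degree ≤ ((m+2:ℕ) : WithBot ℕ) := by
      refine le_trans (degle_mul (degle_mul dC dX) (hdegQle m)) ?_
      have hle : ((0+1)+m : ℕ) ≤ m+2 := by omega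
      exact_mod_cast hle
    rw [hSS]
    refine lt_of_le_of_lt (le_trans (degree_sub_le _ _)
      (max_le (le_trans (degree_sub_le _ _) (max_le d1 d2)) d3)) ?_
    exact_mod_cast (by omega : m+2 < m+3)
  have hvanish : ∀ k, k < m+3 → Ifun ν t (SS * P k t) = 0 := by
    intro k hk
    have hcases : k = m+2 ∨ k = m+1 ∨ k = m ∨ k+1 = m ∨ k+1 < m := by omega
    have ho1 : Ifun ν t (P (m+1) t * P (m+1) t) = 1 := by rw [horthQ]; simp
    have hom : Ifun ν t (P m t * P m t) = 1 := by rw [horthQ]; simp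
    rcases hcases with rfl | rfl | h3 | hkm | hkm
    · -- k = m+2
      have hs := hSQ (m+2)
      rw [show m+1+1 = m+2 from rfl] at hs
      rw [hs, y1, v3 (m+1), show m+1+1 = m+2 from rfl, o0 (m+1) (m+2) (by omega),
        o0 m (m+2) (by omega), v1 m (m+2) (by omega), hnn]
      push_cast
      have h1 := hleadQ m
      have h2 := hleadQ (m+1)
      have h3 := hleadQ (m+2)
      set β0 := (X * P m t).coeff m with hβ0
      set β1 := (P (m+1) t).coeff m with hβ1
      set β2 := (P (m+2) t).coeff (m+1) with hβ2
      set α0 := (P m t).coeff m with hα0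
      set α1 := (P (m+1) t).coeff (m+1) with hα1
      set α2 := (P (m+2) t).coeff (m+2) with hα2
      field_simp
      ring
    · -- k = m+1
      have ex : (X * P (m+1) t).coeff (m+1) = (P (m+1) t).coeff m := coeff_X_mul _ m
      have hs := hSQ (m+1)
      have h5 := v5 (m+1)
      rw [show m+1+1 = m+2 from rfl, ex] at h5
      rw [hs, y2, h5, ho1, v3 m, o0 m (m+1) (by omega),
        hc1, hAv, hbv, hav, hnn]
      push_cast
      have h1 := hleadQ m
      have h2 := hleadQ (m+1)
      have h3 := hleadQ (m+2)
      set β0 := (X * P m t).coeff m with hβ0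
      set β1 := (P (m+1) t).coeff m with hβ1
      set β2 := (P (m+2) t).coeff (m+1) with hβ2
      set α0 := (P m t).coeff m with hα0
      set α1 := (P (m+1) t).coeff (m+1) with hα1
      set α2 := (P (m+2) t).coeff (m+2) with hα2
      field_simp
      ring
    · -- k = m
      have h4 := h3.symm
      subst h4
      have ibp := I_parts (ν := ν) ht (P (m+1) t) (P m t)
      rw [show X^2 * (derivative (P (m+1) t) * P m t)
            = X^2 * derivative (P (m+1) t) * P m t by ring,
          show X^2 * (P (m+1) t * derivative (P m t))
            = X^2 * derivative (P m t) * P (m+1) t by ring,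
          show X^2 * (P (m+1) t * P m t) = X^2 * P m t * P (m+1) t by ring,
          show X * (P (m+1) t * P m t) = X * P (m+1) t * P m t by ring] at ibp
      rw [y4, w1, v4 m, o0 (m+1) m (by omega)] at ibp
      have hT1 : Ifun ν t (X^2 * derivative (P (m+1) t) * P m t)
          = ((X * P m t).coeff m
              - (P m t).coeff m / (P (m+2) t).coeff (m+2) * (P (m+2) t).coeff (m+1))
              / (P (m+1) t).coeff (m+1)
            - (2+ν) * ((P m t).coeff m / (P (m+1) t).coeff (m+1))
            - (m:ℝ) * (P m t).coeff m / (P (m+1) t).coeff (m+1) := by linarith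
      rw [hSQ m, hT1, v4 m, o0 (m+1) m (by omega), v5 m, hom,
        hc4, hAv, hBv, hnn]
      push_cast
      have h1 := hleadQ m
      have h2 := hleadQ (m+1)
      have h3 := hleadQ (m+2)
      set β0 := (X * P m t).coeff m with hβ0
      set β1 := (P (m+1) t).coeff m with hβ1
      set β2 := (P (m+2) t).coeff (m+1) with hβ2
      set α0 := (P m t).coeff m with hα0
      set α1 := (P (m+1) t).coeff (m+1) with hα1
      set α2 := (P (m+2) t).coeff (m+2) with hα2
      field_simp
      ring
    · -- k+1 = m
      subst hkm
      have ibp := I_parts (ν := ν) ht (P (k+1+1) t) (P k t)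
      rw [show X^2 * (derivative (P (k+1+1) t) * P k t)
            = X^2 * derivative (P (k+1+1) t) * P k t by ring,
          show X^2 * (P (k+1+1) t * derivative (P k t))
            = X^2 * derivative (P k t) * P (k+1+1) t by ring,
          show X^2 * (P (k+1+1) t * P k t) = X^2 * P k t * P (k+1+1) t by ring,
          show X * (P (k+1+1) t * P k t) = X * P k t * P (k+1+1) t by ring] at ibp
      rw [show k+1+1 = k+2 from rfl] at ibp
      rw [y0 k (k+2) (by omega), w3 k, v1 k (k+2) (by omega),
        o0 (k+2) k (by omega)] at ibp
      have hT1 : Ifun ν t (X^2 * derivative (P (k+2) t) * P k t)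
          = (P k t).coeff k / (P (k+2) t).coeff (k+2) := by linarith
      have hs := hSQ k
      rw [show k+1+1 = k+2 from rfl] at hs hAv
      rw [hs, hT1, v2 (k+2) k (by omega), o0 (k+2) k (by omega),
        v4 k, o0 (k+1) k (by omega), hAv]
      have h1 := hleadQ k
      have h2 := hleadQ (k+1)
      have h3 := hleadQ (k+2)
      set α0 := (P k t).coeff k with hα0
      set α1 := (P (k+1) t).coeff (k+1) with hα1
      set α2 := (P (k+2) t).coeff (k+2) with hα2
      field_simp
      ring
    · -- k+1 < m
      have ibp := I_parts (ν := ν) ht (P (m+1) t) (P k t)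
      rw [show X^2 * (derivative (P (m+1) t) * P k t)
            = X^2 * derivative (P (m+1) t) * P k t by ring,
          show X^2 * (P (m+1) t * derivative (P k t))
            = X^2 * derivative (P k t) * P (m+1) t by ring,
          show X^2 * (P (m+1) t * P k t) = X^2 * P k t * P (m+1) t by ring,
          show X * (P (m+1) t * P k t) = X * P k t * P (m+1) t by ring] at ibp
      rw [y0 k (m+1) (by omega), w0 k (m+1) (by omega), v1 k (m+1) (by omega),
        o0 (m+1) k (by omega)] at ibp
      have hT1 : Ifun ν t (X^2 * derivative (P (m+1) t) * P k t) = 0 := by linarith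
      rw [hSQ k, hT1, v2 (m+1) k (by omega), o0 (m+1) k (by omega),
        v2 m k (by omega), o0 m k (by omega)]
      ring
  have hS0 : SS = 0 := I_eq_zero ht hdegQ hleadQ horthQ (m+3) SS hdegSS hvanish
  intro x hx
  have he := congrArg (Polynomial.eval x) (hSS ▸ hS0 :
    (X^2 * derivative (P (m+1) t) - (C nn * X - C c1) * P (m+1) t
      - C (A (m+1) t) * (X + C c4) * P m t : Polynomial ℝ) = 0)
  simp only [eval_sub, eval_mul, eval_add, eval_pow, eval_X, eval_C, eval_zero] at he
  rw [show m + 1 - 1 = m from rfl]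
  rw [hc4, hc1] at he
  push_cast at he ⊢
  linarith [he]
end

section
/- Let ν ∈ ℝ, t > 0 and n ≥ 1, and let a_{n,0}(t) = P_n(0,t) denote the constant term of P_n(·,t). Then [ A_n(t)² + b_n(t)/a_n(t) ] · a_{n,0}(t) = [ B_n(t) − ν − 1 − 2n ] · A_n(t) · a_{n−1,0}(t). -/
open MeasureTheory Filter Set Polynomial

namespace Stmt5Aux



lemma tend_top (s t : ℝ) (ht : 0 < t) :
    Tendsto (fun x : ℝ => x ^ s * Real.exp (-x - t / x)) atTop (nhds 0) := by
  apply squeeze_zero' (g := fun x : ℝ => x ^ s * Real.exp (-1 * x))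
  · filter_upwards [eventually_gt_atTop (0:ℝ)] with x hx
    positivity
  · filter_upwards [eventually_gt_atTop (0:ℝ)] with x hx
    have h : -x - t / x ≤ -1 * x := by
      have : 0 ≤ t / x := by positivity
      nlinarith
    exact mul_le_mul_of_nonneg_left (Real.exp_le_exp.2 h) (Real.rpow_nonneg hx.le s)
  · exact tendsto_rpow_mul_exp_neg_mul_atTop_nhds_zero s 1 one_pos

lemma tend_zero (s t : ℝ) (ht : 0 < t) :
    Tendsto (fun x : ℝ => x ^ s * Real.exp (-x - t / x)) (nhdsWithin 0 (Ioi 0)) (nhds 0) := by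
  have h1 : Tendsto (fun y : ℝ => y ^ (-s) * Real.exp (-t * y)) atTop (nhds 0) :=
    tendsto_rpow_mul_exp_neg_mul_atTop_nhds_zero (-s) t ht
  have h2 : Tendsto (fun x : ℝ => (x⁻¹) ^ (-s) * Real.exp (-t * x⁻¹))
      (nhdsWithin 0 (Ioi 0)) (nhds 0) := h1.comp tendsto_inv_nhdsGT_zero
  apply squeeze_zero' ?_ ?_ h2
  · filter_upwards [self_mem_nhdsWithin] with x (hx : (0:ℝ) < x)
    positivity
  · filter_upwards [self_mem_nhdsWithin] with x (hx : (0:ℝ) < x)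
    have hinv : (x⁻¹) ^ (-s) = x ^ s := by
      rw [Real.inv_rpow hx.le, Real.rpow_neg hx.le, inv_inv]
    rw [hinv]
    have h : -x - t / x ≤ -t * x⁻¹ := by
      rw [div_eq_mul_inv]
      nlinarith
    exact mul_le_mul_of_nonneg_left (Real.exp_le_exp.2 h) (Real.rpow_nonneg hx.le s)

lemma tend_poly (Q : Polynomial ℝ) (s t : ℝ) (l : Filter ℝ)
    (hl : ∀ᶠ x in l, (0:ℝ) < x)
    (h0 : ∀ s' : ℝ, Tendsto (fun x : ℝ => x ^ s' * Real.exp (-x - t / x)) l (nhds 0)) :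
    Tendsto (fun x : ℝ => Q.eval x * (x ^ s * Real.exp (-x - t / x))) l (nhds 0) := by
  have hsum : Tendsto (fun x : ℝ => ∑ i ∈ Finset.range (Q.natDegree + 1),
      Q.coeff i * (x ^ (s + i) * Real.exp (-x - t / x))) l (nhds 0) := by
    have := tendsto_finset_sum (Finset.range (Q.natDegree+1))
      (fun i _ => ((h0 (s + i)).const_mul (Q.coeff i)))
    simpa using this
  apply hsum.congr'
  filter_upwards [hl] with x hx
  rw [Polynomial.eval_eq_sum_range, Finset.sum_mul]
  apply Finset.sum_congr rfl
  intro i _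
  rw [Real.rpow_add hx, Real.rpow_natCast]
  ring



lemma contOn (s t : ℝ) : ContinuousOn (fun x : ℝ => x ^ s * Real.exp (-x - t / x)) (Ioi 0) := by
  apply ContinuousOn.mul
  · intro x hx
    exact (Real.continuousAt_rpow_const x s (Or.inl (ne_of_gt hx))).continuousWithinAt
  · apply Real.continuous_exp.comp_continuousOn
    exact (continuousOn_id.neg).sub
      (continuousOn_const.div continuousOn_id (fun x hx => ne_of_gt hx))

lemma integ_base (s t : ℝ) (ht : 0 < t) :
    IntegrableOn (fun x : ℝ => x ^ s * Real.exp (-x - t / x)) (Ioi 0) := by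
  rw [← Set.Ioc_union_Ioi_eq_Ioi (zero_le_one' ℝ), integrableOn_union]
  constructor
  · -- bounded by constant on Ioc 0 1
    set m : ℕ := ⌈|s|⌉₊ with hm
    have hsm : 0 ≤ s + m := by
      have h1 : |s| ≤ (m:ℝ) := Nat.le_ceil _
      have h2 := neg_abs_le s
      linarith
    apply Integrable.mono' (g := fun _ : ℝ => (m.factorial : ℝ) * (t⁻¹) ^ m)
    · exact integrableOn_const measure_Ioc_lt_top.ne
    · exact ((contOn s t).mono (Set.Ioc_subset_Ioi_self)).aestronglyMeasurable measurableSet_Ioc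
    · rw [ae_restrict_iff' measurableSet_Ioc]
      refine ae_of_all _ (fun x hx => ?_)
      obtain ⟨hx0, hx1⟩ := hx
      have hxs : 0 ≤ x ^ s * Real.exp (-x - t / x) := by positivity
      rw [Real.norm_eq_abs, abs_of_nonneg hxs]
      have hy : 0 < t / x := div_pos ht hx0
      have hb1 : Real.exp (-x - t/x) ≤ Real.exp (-(t/x)) := by
        apply Real.exp_le_exp.2; nlinarith [hx0]
      have hb2 : Real.exp (-(t/x)) ≤ (m.factorial : ℝ) * ((t/x) ^ m)⁻¹ := by
        rw [Real.exp_neg]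
        have h := Real.pow_div_factorial_le_exp (x := t/x) hy.le m
        have h2 : (Real.exp (t/x))⁻¹ ≤ ((t/x)^m / m.factorial)⁻¹ := by
          rw [inv_le_inv₀ (Real.exp_pos _) (by positivity)]
          exact h
        refine h2.trans_eq ?_
        field_simp
      calc x ^ s * Real.exp (-x - t / x)
          ≤ x ^ s * ((m.factorial : ℝ) * ((t/x) ^ m)⁻¹) :=
            mul_le_mul_of_nonneg_left (hb1.trans hb2) (Real.rpow_nonneg hx0.le s)
        _ = (m.factorial : ℝ) * (t⁻¹)^m * (x ^ s * x ^ m) := by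
            have hx' : x ≠ 0 := hx0.ne'
            have ht' : t ≠ 0 := ht.ne'
            field_simp
            rw [← mul_pow, ← mul_pow, show t / x * (1 / t) * x = 1 by field_simp, one_pow]
        _ ≤ (m.factorial : ℝ) * (t⁻¹)^m * 1 := by
            apply mul_le_mul_of_nonneg_left _ (by positivity)
            rw [← Real.rpow_natCast x m, ← Real.rpow_add hx0]
            exact Real.rpow_le_one hx0.le hx1 hsm
        _ = (m.factorial : ℝ) * (t⁻¹)^m := mul_one _
  · -- on Ioi 1, bounded by exp(-x) * x ^ (max s 0)
    apply Integrable.mono'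
      (g := fun x : ℝ => Real.exp (-x) * x ^ (max s 0 + 1 - 1))
    · exact (Real.GammaIntegral_convergent (by positivity)).mono_set
        (Set.Ioi_subset_Ioi zero_le_one)
    · exact ((contOn s t).mono (Set.Ioi_subset_Ioi zero_le_one)).aestronglyMeasurable
        measurableSet_Ioi
    · rw [ae_restrict_iff' measurableSet_Ioi]
      refine ae_of_all _ (fun x hx => ?_)
      have hx1 : (1:ℝ) < x := hx
      have hx0 : (0:ℝ) < x := lt_trans zero_lt_one hx1
      have hxs : 0 ≤ x ^ s * Real.exp (-x - t / x) := by positivity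
      rw [Real.norm_eq_abs, abs_of_nonneg hxs]
      have hb1 : Real.exp (-x - t/x) ≤ Real.exp (-x) := by
        apply Real.exp_le_exp.2
        have : 0 < t / x := div_pos ht hx0
        linarith
      calc x ^ s * Real.exp (-x - t / x) ≤ x ^ s * Real.exp (-x) :=
            mul_le_mul_of_nonneg_left hb1 (Real.rpow_nonneg hx0.le s)
        _ ≤ x ^ (max s 0 + 1 - 1) * Real.exp (-x) := by
            apply mul_le_mul_of_nonneg_right _ (Real.exp_nonneg _)
            apply Real.rpow_le_rpow_of_exponent_le hx1.le
            simp
        _ = Real.exp (-x) * x ^ (max s 0 + 1 - 1) := mul_comm _ _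

lemma integ_poly (Q : Polynomial ℝ) (s t : ℝ) (ht : 0 < t) :
    IntegrableOn (fun x : ℝ => Q.eval x * (x ^ s * Real.exp (-x - t / x))) (Ioi 0) := by
  induction Q using Polynomial.induction_on' with
  | add p q hp hq =>
      exact MeasureTheory.IntegrableOn.congr_fun (hp.add hq)
        (fun x _ => by simp [Polynomial.eval_add]; ring) measurableSet_Ioi
  | monomial i c =>
      apply MeasureTheory.IntegrableOn.congr_fun ((integ_base (s+i) t ht).const_mul c)
        _ measurableSet_Ioi
      intro x hx
      have hx0 : (0:ℝ) < x := hx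
      simp only [Polynomial.eval_monomial]
      rw [Real.rpow_add hx0, Real.rpow_natCast]
      ring



noncomputable def phi (t s : ℝ) (Q : Polynomial ℝ) : ℝ :=
  ∫ x in Set.Ioi (0:ℝ), Q.eval x * (x ^ s * Real.exp (-x - t / x))

section Phi

variable {t : ℝ} (ht : 0 < t)

lemma phi_zero (s : ℝ) : phi t s 0 = 0 := by
  simp [phi]

include ht in
lemma phi_add (s : ℝ) (Q R : Polynomial ℝ) : phi t s (Q + R) = phi t s Q + phi t s R := by
  unfold phi
  rw [← integral_add (integ_poly Q s t ht) (integ_poly R s t ht)]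
  apply setIntegral_congr_fun measurableSet_Ioi
  intro x _
  simp [Polynomial.eval_add]
  ring

lemma phi_smul (s c : ℝ) (Q : Polynomial ℝ) : phi t s (C c * Q) = c * phi t s Q := by
  unfold phi
  rw [← MeasureTheory.integral_const_mul]
  apply setIntegral_congr_fun measurableSet_Ioi
  intro x _
  simp [Polynomial.eval_mul]
  ring

include ht in
lemma phi_sub (s : ℝ) (Q R : Polynomial ℝ) : phi t s (Q - R) = phi t s Q - phi t s R := by
  have h1 : Q - R + R = Q := by ring
  have := phi_add ht s (Q - R) R
  rw [h1] at this
  linarith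

lemma phi_X (s : ℝ) (Q : Polynomial ℝ) : phi t (s - 1) (X * Q) = phi t s Q := by
  unfold phi
  apply setIntegral_congr_fun measurableSet_Ioi
  intro x (hx : (0:ℝ) < x)
  simp only [Polynomial.eval_mul, Polynomial.eval_X]
  rw [show s = (s - 1) + 1 by ring, Real.rpow_add hx, Real.rpow_one]
  ring

end Phi




lemma IBP (ν t : ℝ) (ht : 0 < t) (S : Polynomial ℝ) :
    phi t ν (X * derivative S + C (ν+1) * S - X * S) + t * phi t (ν-1) S = 0 := by
  set E : Polynomial ℝ := X * derivative S + C (ν+1) * S - X * S with hE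
  set g : ℝ → ℝ := fun x => (X*S).eval x * (x ^ ν * Real.exp (-x - t/x)) with hg
  set h : ℝ → ℝ := fun x => E.eval x * (x ^ ν * Real.exp (-x - t/x))
    + t * (S.eval x * (x ^ (ν-1) * Real.exp (-x - t/x))) with hh
  have hint1 := integ_poly E ν t ht
  have hint2 := (integ_poly S (ν-1) t ht).const_mul t
  have hint : IntegrableOn h (Ioi 0) := hint1.add hint2
  have hderiv : ∀ x ∈ Ioi (0:ℝ), HasDerivAt g (h x) x := by
    intro x hx
    have hx0 : (0:ℝ) < x := hx
    have hxne : x ≠ 0 := hx0.ne'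
    have d1 : HasDerivAt (fun x : ℝ => (X*S).eval x) ((derivative (X*S)).eval x) x :=
      Polynomial.hasDerivAt _ x
    have d2 : HasDerivAt (fun x : ℝ => x ^ ν) (ν * x ^ (ν - 1)) x :=
      Real.hasDerivAt_rpow_const (Or.inl hxne)
    have du : HasDerivAt (fun x : ℝ => -x - t / x) (-1 - t * (-(x^2)⁻¹)) x := by
      have h1 : HasDerivAt (fun x : ℝ => -x) (-1) x := (hasDerivAt_id x).neg
      have h2 : HasDerivAt (fun x : ℝ => t / x) (t * (-(x^2)⁻¹)) x := by
        simpa [div_eq_mul_inv] using (hasDerivAt_inv hxne).const_mul t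
      exact h1.sub h2
    have d3 : HasDerivAt (fun x : ℝ => Real.exp (-x - t / x))
        (Real.exp (-x - t/x) * (-1 - t * (-(x^2)⁻¹))) x := du.exp
    have hprod := d1.mul (d2.mul d3)
    refine hprod.congr_deriv ?_
    have hrw : x ^ ν = x ^ (ν - 1) * x := by
      rw [← Real.rpow_add_one hxne (ν - 1)]
      norm_num
    have hev : (derivative (X*S)).eval x = S.eval x + x * (derivative S).eval x := by
      simp [Polynomial.derivative_mul]
    simp only [Pi.mul_apply, hh, hE, hg, hev, hrw, Polynomial.eval_add, Polynomial.eval_sub,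
      Polynomial.eval_mul, Polynomial.eval_X, Polynomial.eval_C]
    field_simp
    ring
  have hcont : ContinuousWithinAt g (Ici 0) 0 := by
    rw [← Set.Ioi_insert, continuousWithinAt_insert]
    have hg0 : g 0 = 0 := by simp [hg]
    unfold ContinuousWithinAt
    rw [hg0]
    exact tend_poly (X*S) ν t _ (eventually_mem_nhdsWithin.mono (fun x hx => hx))
      (fun s' => tend_zero s' t ht)
  have htop : Tendsto g atTop (nhds 0) :=
    tend_poly (X*S) ν t atTop (eventually_gt_atTop 0) (fun s' => tend_top s' t ht)
  have key := integral_Ioi_of_hasDerivAt_of_tendsto hcont hderiv hint htop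
  have hg0 : g 0 = 0 := by simp [hg]
  rw [hg0, sub_zero] at key
  have split : ∫ x in Ioi (0:ℝ), h x
      = phi t ν E + t * phi t (ν-1) S := by
    unfold phi
    rw [← MeasureTheory.integral_const_mul, ← integral_add hint1 hint2]
  rw [← split, key]




lemma coeff_X_mul_der (f : Polynomial ℝ) (k : ℕ) :
    (X * derivative f).coeff k = k * f.coeff k := by
  cases k with
  | zero => simp [Polynomial.mul_coeff_zero]
  | succ k =>
      rw [Polynomial.coeff_X_mul, Polynomial.coeff_derivative]
      push_cast
      ring

section Ortho

variable {ν t : ℝ} (ht : 0 < t) (p : ℕ → Polynomial ℝ)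
  (hdeg : ∀ k : ℕ, (p k).degree = (k:ℕ))
  (han : ∀ k : ℕ, (p k).coeff k ≠ 0)
  (horth' : ∀ k m : ℕ, phi t ν (p k * p m) = if k = m then 1 else 0)

include ht hdeg han horth' in
lemma ortho (n : ℕ) : ∀ Q : Polynomial ℝ, Q.degree < (n:ℕ) → phi t ν (p n * Q) = 0 := by
  suffices H : ∀ (N : ℕ) (Q : Polynomial ℝ), Q.natDegree ≤ N → Q.degree < (n:ℕ) →
      phi t ν (p n * Q) = 0 by
    exact fun Q hQ => H Q.natDegree Q le_rfl hQ
  intro N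
  induction N using Nat.strong_induction_on with
  | _ N ih =>
    intro Q hQN hQn
    by_cases hQ0 : Q = 0
    · rw [hQ0, mul_zero, phi_zero]
    · set d := Q.natDegree with hd
      have hdQ : Q.degree = (d:ℕ) := Polynomial.degree_eq_natDegree hQ0
      have hdn : d < n := by
        rw [hdQ] at hQn
        exact_mod_cast hQn
      set c := Q.coeff d / (p d).coeff d with hc
      set R := Q - C c * p d with hR
      have hcc : c * (p d).coeff d = Q.coeff d := by
        rw [hc, div_mul_cancel₀ _ (han d)]
      have hRco : ∀ m : ℕ, d ≤ m → R.coeff m = 0 := by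
        intro m hm
        rw [hR, Polynomial.coeff_sub, Polynomial.coeff_C_mul]
        rcases eq_or_lt_of_le hm with h | h
        · rw [← h, hcc, sub_self]
        · rw [Polynomial.coeff_eq_zero_of_natDegree_lt (by omega),
            Polynomial.coeff_eq_zero_of_degree_lt (by rw [hdeg d]; exact_mod_cast h)]
          ring
      have hRdeg : R.degree < (d:ℕ) := (Polynomial.degree_lt_iff_coeff_zero R d).2
        (fun m hm => hRco m hm)
      have hQeq : Q = C c * p d + R := by rw [hR]; ring
      have h1 : phi t ν (p n * Q) = c * phi t ν (p n * p d) + phi t ν (p n * R) := by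
        rw [hQeq, mul_add, phi_add ht, mul_left_comm, phi_smul]
      have h2 : phi t ν (p n * p d) = 0 := by
        rw [horth' n d, if_neg (by omega)]
      have h3 : phi t ν (p n * R) = 0 := by
        by_cases hR0 : R = 0
        · rw [hR0, mul_zero, phi_zero]
        · have hRnd : R.natDegree < d := by
            have := Polynomial.degree_eq_natDegree hR0 ▸ hRdeg
            exact_mod_cast this
          exact ih R.natDegree (by omega) R le_rfl
            (lt_trans hRdeg (by exact_mod_cast hdn))
      rw [h1, h2, h3]
      ring

include ht hdeg han horth' in
lemma G1 (n : ℕ) (Q : Polynomial ℝ) (hQ : Q.degree ≤ (n:ℕ)) :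
    phi t ν (p n * Q) = Q.coeff n / (p n).coeff n := by
  set c := Q.coeff n / (p n).coeff n with hc
  set R := Q - C c * p n with hR
  have hcc : c * (p n).coeff n = Q.coeff n := by rw [hc, div_mul_cancel₀ _ (han n)]
  have hRdeg : R.degree < (n:ℕ) := by
    rw [Polynomial.degree_lt_iff_coeff_zero]
    intro m hm
    rw [hR, Polynomial.coeff_sub, Polynomial.coeff_C_mul]
    rcases eq_or_lt_of_le hm with h | h
    · rw [← h, hcc, sub_self]
    · rw [Polynomial.coeff_eq_zero_of_degree_lt (lt_of_le_of_lt hQ (by exact_mod_cast h)),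
        Polynomial.coeff_eq_zero_of_degree_lt (by rw [hdeg n]; exact_mod_cast h)]
      ring
  have hQeq : Q = C c * p n + R := by rw [hR]; ring
  rw [hQeq, mul_add, phi_add ht, mul_left_comm, phi_smul, horth' n n, if_pos rfl,
    ortho ht p hdeg han horth' n R hRdeg]
  ring

include ht hdeg han horth' in
lemma G2 (m : ℕ) (Q : Polynomial ℝ) (hQ : Q.degree ≤ ((m+1 : ℕ):ℕ)) :
    phi t ν (p m * Q)
      = (Q.coeff m - Q.coeff (m+1) / (p (m+1)).coeff (m+1) * (p (m+1)).coeff m)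
        / (p m).coeff m := by
  set c := Q.coeff (m+1) / (p (m+1)).coeff (m+1) with hc
  set R := Q - C c * p (m+1) with hR
  have hcc : c * (p (m+1)).coeff (m+1) = Q.coeff (m+1) := by
    rw [hc, div_mul_cancel₀ _ (han (m+1))]
  have hRdeg : R.degree ≤ (m:ℕ) := by
    rw [Polynomial.degree_le_iff_coeff_zero]
    intro k hk
    have hk' : m + 1 ≤ k := by exact_mod_cast hk
    rw [hR, Polynomial.coeff_sub, Polynomial.coeff_C_mul]
    rcases eq_or_lt_of_le hk' with h | h
    · rw [← h, hcc, sub_self]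
    · rw [Polynomial.coeff_eq_zero_of_degree_lt (lt_of_le_of_lt hQ (by exact_mod_cast h)),
        Polynomial.coeff_eq_zero_of_degree_lt (by rw [hdeg (m+1)]; exact_mod_cast h)]
      ring
  have hQeq : Q = C c * p (m+1) + R := by rw [hR]; ring
  have hRco : R.coeff m = Q.coeff m - c * (p (m+1)).coeff m := by
    rw [hR, Polynomial.coeff_sub, Polynomial.coeff_C_mul]
  rw [hQeq, mul_add, phi_add ht, mul_left_comm, phi_smul, horth' m (m+1),
    if_neg (by omega), G1 ht p hdeg han horth' m R hRdeg, hRco]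
  rw [← hQeq]
  ring

end Ortho

end Stmt5Aux

open MeasureTheory Stmt5Aux


theorem stmt_5
    (ν : ℝ)
    (P : ℕ → ℝ → Polynomial ℝ)
    (a b A B : ℕ → ℝ → ℝ)
    (hdeg : ∀ n : ℕ, ∀ t : ℝ, 0 < t → (P n t).degree = (n : ℕ))
    (ha : ∀ n : ℕ, ∀ t : ℝ, 0 < t → a n t = (P n t).coeff n)
    (han : ∀ n : ℕ, ∀ t : ℝ, 0 < t → a n t ≠ 0)
    (hbs : ∀ n : ℕ, ∀ t : ℝ, 0 < t → b (n + 1) t = (P (n + 1) t).coeff n)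
    (hb0 : ∀ t : ℝ, 0 < t → b 0 t = 0)
    (horth : ∀ n m : ℕ, ∀ t : ℝ, 0 < t →
      (∫ x in Set.Ioi (0 : ℝ),
        (P n t).eval x * (P m t).eval x * (x ^ ν * Real.exp (-x - t / x)))
        = if n = m then 1 else 0)
    (hA0 : ∀ t : ℝ, 0 < t → A 0 t = 0)
    (hA : ∀ n : ℕ, ∀ t : ℝ, 0 < t → A (n + 1) t = a n t / a (n + 1) t)
    (hB : ∀ n : ℕ, ∀ t : ℝ, 0 < t → B n t = b n t / a n t - b (n + 1) t / a (n + 1) t)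
    (n : ℕ) (hn : 1 ≤ n) (t : ℝ) (ht : 0 < t) :
    ((A n t) ^ 2 + b n t / a n t) * (P n t).coeff 0
      = (B n t - ν - 1 - 2 * (n : ℝ)) * A n t * (P (n - 1) t).coeff 0 := by
  obtain ⟨m, rfl⟩ : ∃ m, n = m + 1 := ⟨n - 1, (Nat.succ_pred_eq_of_pos hn).symm⟩
  set p : ℕ → Polynomial ℝ := fun k => P k t with hp
  have hdeg' : ∀ k : ℕ, (p k).degree = (k:ℕ) := fun k => hdeg k t ht
  have hnat : ∀ k : ℕ, (p k).natDegree = k :=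
    fun k => Polynomial.natDegree_eq_of_degree_eq_some (hdeg' k)
  have han' : ∀ k : ℕ, (p k).coeff k ≠ 0 := fun k => (ha k t ht) ▸ (han k t ht)
  have hne : ∀ k : ℕ, p k ≠ 0 := by
    intro k h
    exact (han' k) (by rw [h]; simp)
  have horth' : ∀ k l : ℕ, phi t ν (p k * p l) = if k = l then 1 else 0 := by
    intro k l
    rw [← horth k l t ht]
    unfold phi
    simp only [Polynomial.eval_mul, hp]
  -- degree bounds
  have hdegle : ∀ (f : Polynomial ℝ) (k : ℕ), f.natDegree ≤ k → f.degree ≤ (k:ℕ) :=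
    fun f k h => Polynomial.degree_le_of_natDegree_le h
  have hXd : ∀ (k j : ℕ), k ≤ j → 1 ≤ j → (X * derivative (p k)).degree ≤ ((j:ℕ):WithBot ℕ) := by
    intro k j h h1
    apply hdegle
    calc (X * derivative (p k)).natDegree ≤ 1 + (derivative (p k)).natDegree :=
          le_trans Polynomial.natDegree_mul_le (by simp)
      _ ≤ 1 + ((p k).natDegree - 1) := by
          have := Polynomial.natDegree_derivative_le (p k)
          omega
      _ ≤ j := by have h2 := hnat k; omega
  have hXq : ∀ (k j : ℕ), k + 1 ≤ j → (X * p k).degree ≤ ((j:ℕ) : WithBot ℕ) := by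
    intro k j h
    apply hdegle
    calc (X * p k).natDegree ≤ X.natDegree + (p k).natDegree := Polynomial.natDegree_mul_le
      _ ≤ j := by rw [Polynomial.natDegree_X, hnat k]; omega
  set u : ℝ := phi t (ν-1) (p (m+1)) with hu
  have hz1 : (p m).coeff (m+1) = 0 := Polynomial.coeff_eq_zero_of_degree_lt
    (by rw [hdeg' m]; exact_mod_cast Nat.lt_succ_self m)
  have hz2 : (p (m+1)).coeff (m+1+1) = 0 := Polynomial.coeff_eq_zero_of_degree_lt
    (by rw [hdeg' (m+1)]; exact_mod_cast Nat.lt_succ_self (m+1))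
  -- first IBP identity, with S = p (m+1) * p m
  have key1 := IBP ν t ht (p (m+1) * p m)
  rw [show X * derivative (p (m+1) * p m) + C (ν+1) * (p (m+1) * p m) - X * (p (m+1) * p m)
      = p m * (X * derivative (p (m+1))) + p (m+1) * (X * derivative (p m))
        + C (ν+1) * (p (m+1) * p m) - p (m+1) * (X * p m) from by
    rw [Polynomial.derivative_mul]; ring] at key1
  rw [phi_sub ht, phi_add ht, phi_add ht, phi_smul,
    G2 ht p hdeg' han' horth' m _ (hXd (m+1) (m+1) le_rfl (by omega)),
    G1 ht p hdeg' han' horth' (m+1) (X * derivative (p m)) (hXd m (m+1) (by omega) (by omega)),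
    G1 ht p hdeg' han' horth' (m+1) (X * p m) (hXq m (m+1) le_rfl),
    horth' (m+1) m, if_neg (by omega),
    coeff_X_mul_der, coeff_X_mul_der, coeff_X_mul_der, Polynomial.coeff_X_mul,
    hz1] at key1
  have hu1 : phi t (ν-1) (p (m+1) * p m) = (p m).coeff 0 * u := by
    have hq : p (m+1) * p m = X * (p (m+1) * divX (p m)) + C ((p m).coeff 0) * p (m+1) := by
      conv_lhs => rw [← Polynomial.divX_mul_X_add (p m)]
      ring
    rw [hq, phi_add ht, phi_smul, phi_X (t := t) ν _,
      ortho ht p hdeg' han' horth' (m+1) (divX (p m))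
        (lt_of_lt_of_le (Polynomial.degree_divX_lt (hne m))
          (by rw [hdeg' m]; exact_mod_cast Nat.le_succ m))]
    rw [hu]; ring
  rw [hu1] at key1
  -- second IBP identity, with S = p (m+1) * p (m+1)
  have key2 := IBP ν t ht (p (m+1) * p (m+1))
  rw [show X * derivative (p (m+1) * p (m+1)) + C (ν+1) * (p (m+1) * p (m+1))
        - X * (p (m+1) * p (m+1))
      = p (m+1) * (X * derivative (p (m+1))) + p (m+1) * (X * derivative (p (m+1)))
        + C (ν+1) * (p (m+1) * p (m+1)) - p (m+1) * (X * p (m+1)) from by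
    rw [Polynomial.derivative_mul]; ring] at key2
  rw [phi_sub ht, phi_add ht, phi_add ht, phi_smul,
    G2 ht p hdeg' han' horth' (m+1) (X * derivative (p (m+1)))
      (hXd (m+1) (m+2) (by omega) (by omega)),
    G2 ht p hdeg' han' horth' (m+1) (X * p (m+1)) (hXq (m+1) (m+2) le_rfl),
    horth' (m+1) (m+1), if_pos rfl,
    coeff_X_mul_der, coeff_X_mul_der, Polynomial.coeff_X_mul, Polynomial.coeff_X_mul,
    hz2] at key2
  have hu2 : phi t (ν-1) (p (m+1) * p (m+1)) = (p (m+1)).coeff 0 * u := by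
    have hq : p (m+1) * p (m+1)
        = X * (p (m+1) * divX (p (m+1))) + C ((p (m+1)).coeff 0) * p (m+1) := by
      nth_rewrite 2 [← Polynomial.divX_mul_X_add (p (m+1))]
      ring
    rw [hq, phi_add ht, phi_smul, phi_X (t := t) ν _,
      ortho ht p hdeg' han' horth' (m+1) (divX (p (m+1)))
        (by rw [← hdeg' (m+1)]; exact Polynomial.degree_divX_lt (hne (m+1)))]
    rw [hu]; ring
  rw [hu2] at key2
  have hq0 := han' m
  have hp0 := han' (m+1)
  have hr0 := han' (m+1+1)
  simp only [hp] at key1 key2 hq0 hp0 hr0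
  rw [hA m t ht, hB (m+1) t ht, hbs m t ht, hbs (m+1) t ht, ha m t ht, ha (m+1) t ht,
    ha (m+1+1) t ht]
  simp only [Nat.add_sub_cancel]
  push_cast at key1 key2 ⊢
  field_simp at key1 key2 ⊢
  linear_combination (-(P (m+1+1) t).coeff (m+1+1) * (P (m+1) t).coeff 0) * key1
    + ((P m t).coeff m * (P m t).coeff 0) * key2
end

section
/- Let ν ∈ ℝ, t > 0 and n ≥ 0, and assume each coefficient of P_n(·,t) is a differentiable function of t on (0,∞). Then for every x > 0 the orthonormal polynomials satisfy the first-order partial differential–difference equation t·∂P_n(x,t)/∂t + x·∂P_n(x,t)/∂x = ( t·a_n′(t)/a_n(t) + n )·P_n(x,t) + A_n(t)·P_{n−1}(x,t). -/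
open MeasureTheory Set Real Filter Topology

namespace Stmt7

noncomputable def g (τ r x : ℝ) : ℝ := x ^ r * Real.exp (-x - τ / x)

lemma g_contOn (τ r : ℝ) : ContinuousOn (g τ r) (Ioi 0) := by
  intro x hx
  have hx0 : (x:ℝ) ≠ 0 := ne_of_gt hx
  exact ((Real.continuousAt_rpow_const x r (Or.inl hx0)).mul
    ((Real.continuous_exp.continuousAt).comp
      ((continuousAt_id.neg).sub (continuousAt_const.div continuousAt_id hx0)))).continuousWithinAt

lemma g_nonneg (τ r : ℝ) {x : ℝ} (hx : 0 < x) : 0 ≤ g τ r x :=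
  mul_nonneg (Real.rpow_nonneg hx.le r) (Real.exp_pos _).le

lemma g_bound_near_zero (τ r : ℝ) (hτ : 0 < τ) :
    ∃ C : ℝ, ∀ x ∈ Ioc (0:ℝ) 1, g τ r x ≤ C := by
  obtain ⟨N, hN⟩ := exists_nat_ge (-r)
  refine ⟨(N.factorial : ℝ) * τ⁻¹ ^ N, fun x hx => ?_⟩
  obtain ⟨hx0, hx1⟩ := hx
  have hτx : 0 < τ / x := div_pos hτ hx0
  have h1 : Real.exp (-x - τ / x) ≤ Real.exp (-(τ / x)) := by
    apply Real.exp_le_exp.2; nlinarith [hx0.le]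
  have h2 : (τ / x) ^ N / (N.factorial : ℝ) ≤ Real.exp (τ / x) := by
    calc (τ / x) ^ N / (N.factorial : ℝ)
        ≤ ∑ i ∈ Finset.range (N + 1), (τ / x) ^ i / (i.factorial : ℝ) :=
          Finset.single_le_sum (f := fun i => (τ / x) ^ i / (i.factorial : ℝ))
            (fun i _ => by positivity) (Finset.self_mem_range_succ N)
      _ ≤ Real.exp (τ / x) := Real.sum_le_exp_of_nonneg hτx.le _
  have key : Real.exp (-(τ / x)) * (τ / x) ^ N ≤ (N.factorial : ℝ) := by
    rw [Real.exp_neg, inv_mul_le_iff₀ (Real.exp_pos _)]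
    rw [div_le_iff₀ (by positivity : (0:ℝ) < (N.factorial : ℝ))] at h2
    linarith
  have h3 : Real.exp (-(τ / x)) ≤ (N.factorial : ℝ) / (τ / x) ^ N :=
    (le_div_iff₀ (by positivity)).2 key
  calc g τ r x ≤ x ^ r * ((N.factorial : ℝ) / (τ / x) ^ N) :=
        mul_le_mul_of_nonneg_left (h1.trans h3) (Real.rpow_nonneg hx0.le r)
    _ = (N.factorial : ℝ) * τ⁻¹ ^ N * x ^ (r + N) := by
        rw [Real.rpow_add hx0, Real.rpow_natCast, div_pow, inv_pow]
        have hτN : (τ:ℝ)^N ≠ 0 := by positivity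
        have hxN : (x:ℝ)^N ≠ 0 := by positivity
        field_simp
    _ ≤ (N.factorial : ℝ) * τ⁻¹ ^ N * 1 := by
        apply mul_le_mul_of_nonneg_left _ (by positivity)
        exact Real.rpow_le_one hx0.le hx1 (by linarith)
    _ = (N.factorial : ℝ) * τ⁻¹ ^ N := mul_one _

lemma g_meas (τ r : ℝ) : Measurable (g τ r) := by
  unfold g
  fun_prop

lemma g_integrable (τ r : ℝ) (hτ : 0 < τ) : IntegrableOn (g τ r) (Ioi 0) := by
  have hmeas : AEStronglyMeasurable (g τ r) (volume.restrict (Ioi (0:ℝ))) :=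
    (g_contOn τ r).aestronglyMeasurable measurableSet_Ioi
  have hsplit : Ioc (0:ℝ) 1 ∪ Ioi 1 = Ioi 0 := Ioc_union_Ioi_eq_Ioi zero_le_one
  rw [← hsplit]
  apply IntegrableOn.union
  · obtain ⟨C, hC⟩ := g_bound_near_zero τ r hτ
    have hfin : volume (Ioc (0:ℝ) 1) ≠ ⊤ := measure_Ioc_lt_top.ne
    apply Measure.integrableOn_of_bounded (M := C) hfin
      (g_meas τ r).aestronglyMeasurable
    filter_upwards [ae_restrict_mem measurableSet_Ioc] with x hx
    rw [Real.norm_eq_abs, abs_of_nonneg (g_nonneg τ r hx.1)]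
    exact hC x hx
  · have hGamma : IntegrableOn (fun x : ℝ => Real.exp (-x) * x ^ (max r 0 + 1 - 1)) (Ioi 1) :=
      (Real.GammaIntegral_convergent (by positivity : (0:ℝ) < max r 0 + 1)).mono_set
        (Ioi_subset_Ioi zero_le_one)
    apply Integrable.mono' hGamma (hmeas.mono_set (Ioi_subset_Ioi zero_le_one))
    filter_upwards [ae_restrict_mem measurableSet_Ioi] with x hx
    have hx1 : (1:ℝ) ≤ x := le_of_lt hx
    have hx0 : (0:ℝ) < x := lt_of_lt_of_le zero_lt_one hx1
    rw [Real.norm_eq_abs, abs_of_nonneg (g_nonneg τ r hx0)]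
    have h1 : Real.exp (-x - τ / x) ≤ Real.exp (-x) := by
      apply Real.exp_le_exp.2
      have : 0 < τ / x := div_pos hτ hx0
      linarith
    have h2 : x ^ r ≤ x ^ (max r 0 + 1 - 1) := by
      apply Real.rpow_le_rpow_of_exponent_le hx1
      simp
    calc g τ r x ≤ x ^ (max r 0 + 1 - 1) * Real.exp (-x) :=
          mul_le_mul h2 h1 (Real.exp_pos _).le (Real.rpow_nonneg hx0.le _)
      _ = Real.exp (-x) * x ^ (max r 0 + 1 - 1) := mul_comm _ _

end Stmt7


namespace Stmt7

noncomputable def M (t r : ℝ) : ℝ := ∫ x in Ioi 0, g t r x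

variable {t : ℝ}

lemma hasDerivAt_M (ht : 0 < t) (r : ℝ) :
    HasDerivAt (fun τ => M τ r) (-(M t (r - 1))) t := by
  have h2 : (0:ℝ) < t/2 := by linarith
  have key := hasDerivAt_integral_of_dominated_loc_of_deriv_le
    (F := fun τ x => g τ r x) (F' := fun τ x => -(g τ (r-1) x))
    (μ := volume.restrict (Ioi (0:ℝ))) (x₀ := t)
    (bound := fun x => g (t/2) (r-1) x) (Metric.ball_mem_nhds t h2)
    (Filter.Eventually.of_forall (fun τ => (g_meas τ r).aestronglyMeasurable))
    (g_integrable t r ht) ((g_meas t (r-1)).neg.aestronglyMeasurable)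
    ?_ (g_integrable (t/2) (r-1) h2) ?_
  · have heq : (∫ x in Ioi (0:ℝ), -(g t (r-1) x)) = -(M t (r-1)) := by
      rw [integral_neg]; rfl
    rw [← heq]
    exact key.2
  · filter_upwards [ae_restrict_mem measurableSet_Ioi] with x hx
    intro τ hτ
    have hx0 : (0:ℝ) < x := hx
    have hτ2 : t/2 < τ := by
      have h := abs_sub_lt_iff.1 (Metric.mem_ball.1 hτ)
      linarith [h.1, h.2]
    rw [norm_neg, Real.norm_eq_abs, abs_of_nonneg (g_nonneg τ (r-1) hx0)]
    unfold g
    apply mul_le_mul_of_nonneg_left _ (Real.rpow_nonneg hx0.le _)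
    apply Real.exp_le_exp.2
    have hdiv : t/2 * x⁻¹ ≤ τ * x⁻¹ :=
      mul_le_mul_of_nonneg_right hτ2.le (inv_nonneg.2 hx0.le)
    simp only [div_eq_mul_inv]
    linarith
  · filter_upwards [ae_restrict_mem measurableSet_Ioi] with x hx
    intro τ _
    have hx0 : (0:ℝ) < x := hx
    have hd : HasDerivAt (fun τ : ℝ => -x - τ / x) (-(1/x)) τ :=
      ((hasDerivAt_id τ).div_const x).const_sub (-x)
    have hmul := (hd.exp.const_mul (x ^ r))
    refine hmul.congr_deriv ?_
    unfold g
    have hr1 : x ^ (r-1) = x ^ r / x := by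
      rw [Real.rpow_sub hx0, Real.rpow_one]
    rw [hr1]
    field_simp

lemma M_rec (ht : 0 < t) (r : ℝ) :
    M t r = r * M t (r - 1) + t * M t (r - 2) := by
  classical
  set f : ℝ → ℝ := fun x => if x ≤ 0 then 0 else g t r x with hf
  set f' : ℝ → ℝ := fun x => r * g t (r-1) x - g t r x + t * g t (r-2) x with hf'
  have hf0 : f 0 = 0 := by simp [hf]
  -- tendsto at 0+
  have T1 : Tendsto (g t r) (nhdsWithin 0 (Ioi 0)) (nhds 0) := by
    have comp : Tendsto (fun x : ℝ => (x⁻¹) ^ (-r) * Real.exp (-t * x⁻¹))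
        (nhdsWithin 0 (Ioi 0)) (nhds 0) :=
      (tendsto_rpow_mul_exp_neg_mul_atTop_nhds_zero (-r) t ht).comp tendsto_inv_nhdsGT_zero
    have comp' : Tendsto (fun x : ℝ => x ^ r * Real.exp (-(t / x)))
        (nhdsWithin 0 (Ioi 0)) (nhds 0) := by
      apply comp.congr'
      filter_upwards [self_mem_nhdsWithin] with x hx
      have hx0 : (0:ℝ) < x := hx
      show (x⁻¹) ^ (-r) * Real.exp (-t * x⁻¹) = x ^ r * Real.exp (-(t / x))
      rw [Real.inv_rpow hx0.le, Real.rpow_neg hx0.le, inv_inv, neg_mul, div_eq_mul_inv]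
    have expx : Tendsto (fun x : ℝ => Real.exp (-x)) (nhdsWithin 0 (Ioi 0)) (nhds 1) := by
      have : Tendsto (fun x : ℝ => Real.exp (-x)) (nhds 0) (nhds 1) := by
        have := (Real.continuous_exp.comp continuous_neg).tendsto 0
        simpa [Function.comp_def] using this
      exact this.mono_left nhdsWithin_le_nhds
    have := comp'.mul expx
    rw [zero_mul] at this
    apply this.congr'
    filter_upwards [self_mem_nhdsWithin] with x hx
    unfold g
    rw [mul_assoc, ← Real.exp_add, show -(t/x) + -x = -x - t/x by ring]
  -- tendsto at top
  have T2 : Tendsto (g t r) atTop (nhds 0) := by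
    have base := tendsto_rpow_mul_exp_neg_mul_atTop_nhds_zero r 1 one_pos
    apply squeeze_zero' ?_ ?_ base
    · filter_upwards [eventually_gt_atTop (0:ℝ)] with x hx
      exact g_nonneg t r hx
    · filter_upwards [eventually_gt_atTop (0:ℝ)] with x hx
      unfold g
      apply mul_le_mul_of_nonneg_left _ (Real.rpow_nonneg hx.le _)
      apply Real.exp_le_exp.2
      have : 0 < t / x := div_pos ht hx
      linarith
  have Tf1 : ContinuousWithinAt f (Ici 0) 0 := by
    unfold ContinuousWithinAt
    rw [hf0, ← Set.Ioi_insert, nhdsWithin_insert, tendsto_sup]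
    constructor
    · simpa [hf0] using tendsto_pure_nhds f 0
    · apply T1.congr'
      filter_upwards [self_mem_nhdsWithin] with x hx
      simp [hf, not_le.2 (mem_Ioi.1 hx)]
  have Tftop : Tendsto f atTop (nhds 0) := by
    apply T2.congr'
    filter_upwards [eventually_gt_atTop (0:ℝ)] with x hx
    simp [hf, not_le.2 hx]
  have hderiv : ∀ x ∈ Ioi (0:ℝ), HasDerivAt f (f' x) x := by
    intro x hx
    have hx0 : (0:ℝ) < x := hx
    have hEq : f =ᶠ[nhds x] g t r := by
      filter_upwards [IsOpen.mem_nhds isOpen_Ioi hx] with y hy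
      simp [hf, not_le.2 (mem_Ioi.1 hy)]
    have hg : HasDerivAt (g t r) (f' x) x := by
      have h1 : HasDerivAt (fun y : ℝ => y ^ r) (r * x ^ (r-1)) x :=
        Real.hasDerivAt_rpow_const (Or.inl hx0.ne')
      have h2 : HasDerivAt (fun y : ℝ => -y - t / y) (-1 - t * -(x^2)⁻¹) x := by
        have hinv : HasDerivAt (fun y : ℝ => y⁻¹) (-(x^2)⁻¹) x := hasDerivAt_inv hx0.ne'
        have h := (hasDerivAt_id x).neg.sub (hinv.const_mul t)
        simp only [div_eq_mul_inv]
        exact h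
      have h3 := h1.mul h2.exp
      refine h3.congr_deriv ?_
      unfold f' g
      have e1 : x ^ (r-1) = x ^ r / x := by rw [Real.rpow_sub hx0, Real.rpow_one]
      have e2 : x ^ (r-2) = x ^ r / (x * x) := by
        rw [show r - 2 = r - 1 - 1 by ring, Real.rpow_sub hx0, Real.rpow_sub hx0,
          Real.rpow_one]
        ring
      rw [e1, e2]
      have hxne : x ≠ 0 := hx0.ne'
      field_simp
      ring
    exact hg.congr_of_eventuallyEq hEq
  have hint : IntegrableOn f' (Ioi (0:ℝ)) := by
    apply Integrable.add
    · exact ((g_integrable t (r-1) ht).const_mul r).sub (g_integrable t r ht)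
    · exact (g_integrable t (r-2) ht).const_mul t
  have key := integral_Ioi_of_hasDerivAt_of_tendsto Tf1 hderiv hint Tftop
  rw [hf0, sub_zero] at key
  have expand : (∫ x in Ioi (0:ℝ), f' x)
      = r * M t (r-1) - M t r + t * M t (r-2) := by
    have h1 : IntegrableOn (fun x => r * g t (r-1) x) (Ioi (0:ℝ)) :=
      (g_integrable t (r-1) ht).const_mul r
    have h2 := g_integrable t r ht
    have h3 : IntegrableOn (fun x => t * g t (r-2) x) (Ioi (0:ℝ)) :=
      (g_integrable t (r-2) ht).const_mul t
    have e1 : (∫ x in Ioi (0:ℝ), f' x)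
        = (∫ x in Ioi (0:ℝ), (r * g t (r-1) x - g t r x))
          + ∫ x in Ioi (0:ℝ), t * g t (r-2) x := integral_add (h1.sub h2) h3
    have e2 : (∫ x in Ioi (0:ℝ), (r * g t (r-1) x - g t r x))
        = (∫ x in Ioi (0:ℝ), r * g t (r-1) x) - ∫ x in Ioi (0:ℝ), g t r x :=
      integral_sub h1 h2
    rw [e1, e2, integral_const_mul, integral_const_mul]
    rfl
  rw [key] at expand
  linarith

end Stmt7

namespace Stmt7

variable {t : ℝ}

lemma sum_g_integrable (ht : 0 < t) (m : ℕ) (f : ℕ → ℝ) (r : ℝ) :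
    IntegrableOn (fun x => ∑ j ∈ Finset.range m, f j * g t (r + j) x) (Ioi 0) :=
  integrable_finset_sum _ (fun j _ => (g_integrable t (r + j) ht).const_mul (f j))

lemma J_congr (m : ℕ) (f : ℕ → ℝ) (r : ℝ) :
    Set.EqOn (fun x : ℝ => (∑ j ∈ Finset.range m, f j * x ^ j) * (x ^ r * Real.exp (-x - t/x)))
      (fun x => ∑ j ∈ Finset.range m, f j * g t (r + j) x) (Ioi 0) := by
  intro x hx
  have hx0 : (0:ℝ) < x := hx
  simp only [Finset.sum_mul]
  apply Finset.sum_congr rfl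
  intro j _
  unfold g
  rw [Real.rpow_add hx0, Real.rpow_natCast]
  ring

lemma J_integrable (ht : 0 < t) (m : ℕ) (f : ℕ → ℝ) (r : ℝ) :
    IntegrableOn
      (fun x : ℝ => (∑ j ∈ Finset.range m, f j * x ^ j) * (x ^ r * Real.exp (-x - t/x)))
      (Ioi 0) :=
  (integrableOn_congr_fun (J_congr m f r) measurableSet_Ioi).2 (sum_g_integrable ht m f r)

lemma J_eq (ht : 0 < t) (m : ℕ) (f : ℕ → ℝ) (r : ℝ) :
    (∫ x in Ioi (0:ℝ), (∑ j ∈ Finset.range m, f j * x ^ j) * (x ^ r * Real.exp (-x - t/x)))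
      = ∑ j ∈ Finset.range m, f j * M t (r + j) := by
  rw [setIntegral_congr_fun measurableSet_Ioi (J_congr m f r),
    integral_finset_sum _ (fun (j : ℕ) (_ : j ∈ Finset.range m) => (g_integrable t (r + j) ht).const_mul (f j))]
  exact Finset.sum_congr rfl (fun j _ => integral_const_mul _ _)

lemma poly_integrable (ht : 0 < t) (p : Polynomial ℝ) (r : ℝ) :
    IntegrableOn (fun x : ℝ => p.eval x * (x ^ r * Real.exp (-x - t/x))) (Ioi 0) := by
  have h := J_integrable ht (p.natDegree + 1) (fun j => p.coeff j) r
  apply (integrableOn_congr_fun _ measurableSet_Ioi).2 h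
  intro x _
  show Polynomial.eval x p * (x ^ r * Real.exp (-x - t/x))
      = (∑ j ∈ Finset.range (p.natDegree + 1), p.coeff j * x ^ j)
        * (x ^ r * Real.exp (-x - t/x))
  rw [Polynomial.eval_eq_sum_range' (Nat.lt_succ_self _) x]

lemma poly_integral (ht : 0 < t) (p : Polynomial ℝ) (r : ℝ) (m : ℕ) (hm : p.natDegree < m) :
    (∫ x in Ioi (0:ℝ), p.eval x * (x ^ r * Real.exp (-x - t/x)))
      = ∑ j ∈ Finset.range m, p.coeff j * M t (r + j) := by
  rw [← J_eq ht m (fun j => p.coeff j) r]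
  apply setIntegral_congr_fun measurableSet_Ioi
  intro x _
  show Polynomial.eval x p * (x ^ r * Real.exp (-x - t/x))
      = (∑ j ∈ Finset.range m, p.coeff j * x ^ j) * (x ^ r * Real.exp (-x - t/x))
  rw [Polynomial.eval_eq_sum_range' hm x]

end Stmt7

namespace Stmt7

lemma degree_step {p : Polynomial ℝ} {m : ℕ} (h1 : p.degree ≤ ((m+1 : ℕ) : WithBot ℕ))
    (h2 : p.coeff (m+1) = 0) : p.degree ≤ (m : ℕ) := by
  rw [Polynomial.degree_le_iff_coeff_zero] at h1 ⊢
  intro N hN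
  have hmN : m < N := by exact_mod_cast hN
  rcases eq_or_lt_of_le (Nat.succ_le_of_lt hmN) with h | h
  · rw [← h]; exact h2
  · exact h1 N (by exact_mod_cast h)

lemma expand_poly (P : ℕ → Polynomial ℝ)
    (hdeg : ∀ k, (P k).degree = (k : ℕ)) (hlead : ∀ k, (P k).coeff k ≠ 0) :
    ∀ m (q : Polynomial ℝ), q.degree ≤ (m : ℕ) →
      ∃ e : ℕ → ℝ, q = ∑ i ∈ Finset.range (m+1), Polynomial.C (e i) * P i := by
  intro m
  induction m with
  | zero =>
    intro q hq
    refine ⟨fun _ => q.coeff 0 / (P 0).coeff 0, ?_⟩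
    have h0 : P 0 = Polynomial.C ((P 0).coeff 0) :=
      Polynomial.eq_C_of_degree_le_zero (by rw [hdeg 0]; exact_mod_cast le_refl _)
    have hq0 : q = Polynomial.C (q.coeff 0) :=
      Polynomial.eq_C_of_degree_le_zero (by exact_mod_cast hq)
    rw [Finset.range_one, Finset.sum_singleton]
    nth_rewrite 1 [hq0]
    nth_rewrite 2 [h0]
    rw [← Polynomial.C_mul]
    congr 1
    field_simp [hlead 0]
  | succ m ih =>
    intro q hq
    set c : ℝ := q.coeff (m+1) / (P (m+1)).coeff (m+1) with hc
    have hdeg' : (q - Polynomial.C c * P (m+1)).degree ≤ ((m+1 : ℕ) : WithBot ℕ) := by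
      apply le_trans (Polynomial.degree_sub_le _ _)
      apply max_le hq
      apply le_trans (Polynomial.degree_mul_le _ _)
      calc (Polynomial.C c).degree + (P (m+1)).degree
          ≤ 0 + ((m+1 : ℕ) : WithBot ℕ) := by
            apply add_le_add (Polynomial.degree_C_le) (le_of_eq (hdeg (m+1)))
        _ = ((m+1 : ℕ) : WithBot ℕ) := zero_add _
    have hcoeff : (q - Polynomial.C c * P (m+1)).coeff (m+1) = 0 := by
      rw [Polynomial.coeff_sub, Polynomial.coeff_C_mul, hc]
      field_simp [hlead (m+1)]
      ring
    obtain ⟨e, he⟩ := ih (q - Polynomial.C c * P (m+1)) (degree_step hdeg' hcoeff)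
    refine ⟨Function.update e (m+1) c, ?_⟩
    rw [Finset.sum_range_succ]
    have h1 : ∀ i ∈ Finset.range (m+1),
        Polynomial.C (Function.update e (m+1) c i) * P i = Polynomial.C (e i) * P i := by
      intro i hi
      have : i ≠ m+1 := by have := Finset.mem_range.1 hi; omega
      rw [Function.update_of_ne this]
    rw [Finset.sum_congr rfl h1, ← he, Function.update_self]
    ring

end Stmt7

namespace Stmt7

lemma orth_monomial (ν : ℝ) (P : ℕ → Polynomial ℝ) {t : ℝ} (ht : 0 < t)
    (hdeg : ∀ k, (P k).degree = (k : ℕ)) (hlead : ∀ k, (P k).coeff k ≠ 0)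
    (horth : ∀ n m : ℕ,
      (∫ x in Ioi (0:ℝ), (P n).eval x * (P m).eval x * (x ^ ν * Real.exp (-x - t/x)))
        = if n = m then 1 else 0)
    (k N : ℕ) (hk : k ≤ N) :
    (∫ x in Ioi (0:ℝ), (P N).eval x * (x ^ (ν + k) * Real.exp (-x - t/x)))
      = if k = N then ((P N).coeff N)⁻¹ else 0 := by
  obtain ⟨e, he⟩ := expand_poly P hdeg hlead k (Polynomial.X ^ k)
    (by rw [Polynomial.degree_X_pow])
  have hterm : ∀ i : ℕ, IntegrableOn
      (fun x : ℝ => e i * ((P i).eval x * (P N).eval x * (x ^ ν * Real.exp (-x - t/x))))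
      (Ioi 0) := by
    intro i
    have h := (poly_integrable ht (P i * P N) ν).const_mul (e i)
    simpa [Polynomial.eval_mul, mul_assoc, IntegrableOn] using h
  have hcong : Set.EqOn
      (fun x : ℝ => (P N).eval x * (x ^ (ν + k) * Real.exp (-x - t/x)))
      (fun x : ℝ => ∑ i ∈ Finset.range (k+1),
        e i * ((P i).eval x * (P N).eval x * (x ^ ν * Real.exp (-x - t/x)))) (Ioi 0) := by
    intro x hx
    have hx0 : (0:ℝ) < x := hx
    have hxk : (x : ℝ) ^ k = ∑ i ∈ Finset.range (k+1), e i * (P i).eval x := by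
      have := congrArg (Polynomial.eval x) he
      simpa [Polynomial.eval_finset_sum] using this
    show (P N).eval x * (x ^ (ν + k) * Real.exp (-x - t/x)) = _
    rw [Real.rpow_add hx0, Real.rpow_natCast, hxk]
    show _ = ∑ i ∈ Finset.range (k+1),
        e i * ((P i).eval x * (P N).eval x * (x ^ ν * Real.exp (-x - t/x)))
    simp only [Finset.mul_sum, Finset.sum_mul]
    apply Finset.sum_congr rfl
    intro i _
    ring
  rw [setIntegral_congr_fun measurableSet_Ioi hcong,
    integral_finset_sum _ (fun i _ => hterm i)]
  have hval : ∀ i : ℕ,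
      (∫ x in Ioi (0:ℝ), e i * ((P i).eval x * (P N).eval x * (x ^ ν * Real.exp (-x - t/x))))
        = e i * (if i = N then 1 else 0) := by
    intro i
    rw [integral_const_mul, horth i N]
  rw [Finset.sum_congr rfl (fun i _ => hval i)]
  by_cases hkN : k = N
  · subst hkN
    rw [if_pos rfl]
    rw [Finset.sum_eq_single k]
    · rw [if_pos rfl, mul_one]
      -- e k = ((P k).coeff k)⁻¹
      have hcoeff := congrArg (fun p => Polynomial.coeff p k) he
      simp only [Polynomial.coeff_X_pow, if_pos rfl, Polynomial.finset_sum_coeff,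
        Polynomial.coeff_C_mul] at hcoeff
      have hsum : ∑ i ∈ Finset.range (k+1), e i * (P i).coeff k = e k * (P k).coeff k := by
        rw [Finset.sum_eq_single k]
        · intro i hi hne
          have hlt : i < k := by have := Finset.mem_range.1 hi; omega
          have : (P i).coeff k = 0 := by
            apply Polynomial.coeff_eq_zero_of_degree_lt
            rw [hdeg i]
            exact_mod_cast hlt
          rw [this, mul_zero]
        · intro h; exact absurd (Finset.self_mem_range_succ k) h
      rw [hsum] at hcoeff
      exact eq_inv_of_mul_eq_one_left hcoeff.symm
    · intro i hi hne
      rw [if_neg hne, mul_zero]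
    · intro h; exact absurd (Finset.self_mem_range_succ k) h
  · rw [if_neg hkN]
    apply Finset.sum_eq_zero
    intro i hi
    have : i ≠ N := by have := Finset.mem_range.1 hi; omega
    rw [if_neg this, mul_zero]

end Stmt7


open Stmt7 in
theorem stmt_7
    (ν : ℝ)
    (P : ℕ → ℝ → Polynomial ℝ)
    (a b A B : ℕ → ℝ → ℝ)
    (hdeg : ∀ n : ℕ, ∀ t : ℝ, 0 < t → (P n t).degree = (n : ℕ))
    (ha : ∀ n : ℕ, ∀ t : ℝ, 0 < t → a n t = (P n t).coeff n)
    (han : ∀ n : ℕ, ∀ t : ℝ, 0 < t → a n t ≠ 0)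
    (hbs : ∀ n : ℕ, ∀ t : ℝ, 0 < t → b (n + 1) t = (P (n + 1) t).coeff n)
    (hb0 : ∀ t : ℝ, 0 < t → b 0 t = 0)
    (horth : ∀ n m : ℕ, ∀ t : ℝ, 0 < t →
      (∫ x in Set.Ioi (0 : ℝ),
        (P n t).eval x * (P m t).eval x * (x ^ ν * Real.exp (-x - t / x)))
        = if n = m then 1 else 0)
    (hA0 : ∀ t : ℝ, 0 < t → A 0 t = 0)
    (hA : ∀ n : ℕ, ∀ t : ℝ, 0 < t → A (n + 1) t = a n t / a (n + 1) t)
    (hB : ∀ n : ℕ, ∀ t : ℝ, 0 < t → B n t = b n t / a n t - b (n + 1) t / a (n + 1) t)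
    (n : ℕ) (t : ℝ) (ht : 0 < t)
    (hdiff : ∀ k : ℕ, DifferentiableOn ℝ (fun s => (P n s).coeff k) (Set.Ioi 0)) :
    ∀ x : ℝ, 0 < x →
      t * deriv (fun s => (P n s).eval x) t
          + x * (Polynomial.derivative (P n t)).eval x
        = (t * deriv (fun s => a n s) t / a n t + (n : ℝ)) * (P n t).eval x
          + A n t * (P (n - 1) t).eval x := by
  intro x hx
  have hIoi : Set.Ioi (0:ℝ) ∈ nhds t := isOpen_Ioi.mem_nhds ht
  rcases Nat.eq_zero_or_pos n with hn0 | hnpos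
  -- ===================== case n = 0 =====================
  · subst hn0
    have hc0 : (P 0 t).coeff 0 ≠ 0 := ha 0 t ht ▸ han 0 t ht
    have hconst : ∀ s, 0 < s → P 0 s = Polynomial.C ((P 0 s).coeff 0) := fun s hs =>
      Polynomial.eq_C_of_degree_le_zero (le_of_eq (by exact_mod_cast hdeg 0 s hs))
    have hanc : deriv (fun s => a 0 s) t = deriv (fun s => (P 0 s).coeff 0) t :=
      Filter.EventuallyEq.deriv_eq (by filter_upwards [hIoi] with s hs; exact ha 0 s hs)
    have hevald : deriv (fun s => (P 0 s).eval x) t = deriv (fun s => (P 0 s).coeff 0) t := by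
      apply Filter.EventuallyEq.deriv_eq
      filter_upwards [hIoi] with s hs
      conv_lhs => rw [hconst s hs]
      simp
    have hev : (P 0 t).eval x = (P 0 t).coeff 0 := by
      conv_lhs => rw [hconst t ht]
      simp
    have hder : Polynomial.derivative (P 0 t) = 0 := by
      conv_lhs => rw [hconst t ht]
      simp
    rw [hA0 t ht, hevald, hanc, ha 0 t ht, hev, hder]
    simp only [Polynomial.eval_zero, mul_zero, add_zero, Nat.cast_zero, zero_mul]
    field_simp
  -- ===================== case n ≥ 1 =====================
  set m : ℕ := n - 1 with hmdef
  have hm : n = m + 1 := by omega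
  set d : ℕ → ℝ := fun j => deriv (fun s => (P n s).coeff j) t with hddef
  have hcd : ∀ j, HasDerivAt (fun s => (P n s).coeff j) (d j) t := fun j =>
    ((hdiff j).differentiableAt hIoi).hasDerivAt
  have hndeg : ∀ s, 0 < s → (P n s).natDegree = n := fun s hs =>
    Polynomial.natDegree_eq_of_degree_eq_some (hdeg n s hs)
  have hanc : deriv (fun s => a n s) t = d n := by
    have heq : (fun s => a n s) =ᶠ[nhds t] (fun s => (P n s).coeff n) := by
      filter_upwards [hIoi] with s hs
      exact ha n s hs
    rw [heq.deriv_eq]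
  have hcn : (P n t).coeff n ≠ 0 := ha n t ht ▸ han n t ht
  have hDeval : ∀ y : ℝ, deriv (fun s => (P n s).eval y) t
      = ∑ j ∈ Finset.range (n+1), d j * y ^ j := by
    intro y
    have hsum : HasDerivAt (fun s => ∑ j ∈ Finset.range (n+1), (P n s).coeff j * y ^ j)
        (∑ j ∈ Finset.range (n+1), d j * y ^ j) t :=
      HasDerivAt.fun_sum (fun j _ => (hcd j).mul_const (y ^ j))
    have heq : (fun s => (P n s).eval y)
        =ᶠ[nhds t] (fun s => ∑ j ∈ Finset.range (n+1), (P n s).coeff j * y ^ j) := by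
      filter_upwards [hIoi] with s hs
      rw [Polynomial.eval_eq_sum_range' (by rw [hndeg s hs]; exact Nat.lt_succ_self n) y]
    exact (hsum.congr_of_eventuallyEq heq).deriv
  have hdeg' : ∀ s, 0 < s → ∀ k, (P k s).degree = (k : ℕ) := fun s hs k => hdeg k s hs
  have hlead' : ∀ s, 0 < s → ∀ k, (P k s).coeff k ≠ 0 := fun s hs k =>
    ha k s hs ▸ han k s hs
  have horth' : ∀ s, 0 < s → ∀ i j : ℕ,
      (∫ y in Set.Ioi (0:ℝ),
        (P i s).eval y * (P j s).eval y * (y ^ ν * Real.exp (-y - s / y)))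
        = if i = j then 1 else 0 := fun s hs i j => horth i j s hs
  have hM : ∀ r r' : ℝ, r = r' → M t r = M t r' := fun _ _ h => by rw [h]
  set Gr : ℝ → ℝ := fun r => ∑ j ∈ Finset.range (n+1), (P n t).coeff j * M t (ν + r + j)
    with hGr
  have hOM : ∀ s, 0 < s → ∀ k : ℕ, k ≤ n →
      (∑ j ∈ Finset.range (n+1), (P n s).coeff j * M s (ν + k + j))
        = if k = n then ((P n s).coeff n)⁻¹ else 0 := by
    intro s hs k hk
    have h1 := poly_integral hs (P n s) (ν + k) (n+1)
      (by rw [hndeg s hs]; exact Nat.lt_succ_self n)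
    rw [← h1]
    exact orth_monomial ν (fun i => P i s) hs (hdeg' s hs) (hlead' s hs) (horth' s hs) k n hk
  have hG0 : ∀ k : ℕ, k < n → Gr k = 0 := by
    intro k hk
    have h := hOM t ht k hk.le
    rw [if_neg hk.ne] at h
    exact h
  have hGn : Gr n = ((P n t).coeff n)⁻¹ := by
    have h := hOM t ht n le_rfl
    rw [if_pos rfl] at h
    exact h
  have hDG : ∀ k : ℕ, k < n →
      (∑ j ∈ Finset.range (n+1), d j * M t (ν + k + j))
        = ∑ j ∈ Finset.range (n+1), (P n t).coeff j * M t (ν + k + j - 1) := by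
    intro k hk
    set S : ℝ → ℝ := fun s => ∑ j ∈ Finset.range (n+1), (P n s).coeff j * M s (ν + k + j)
      with hS
    have hSd : HasDerivAt S
        (∑ j ∈ Finset.range (n+1),
          (d j * M t (ν + k + j) + (P n t).coeff j * (-(M t (ν + k + j - 1))))) t := by
      apply HasDerivAt.fun_sum
      intro j _
      exact (hcd j).mul (hasDerivAt_M ht (ν + k + j))
    have hS0 : S =ᶠ[nhds t] (fun _ => (0:ℝ)) := by
      filter_upwards [hIoi] with s hs
      show S s = 0
      rw [hS]
      have h := hOM s hs k hk.le
      rw [if_neg hk.ne] at h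
      exact h
    have hzero : (∑ j ∈ Finset.range (n+1),
        (d j * M t (ν + k + j) + (P n t).coeff j * (-(M t (ν + k + j - 1))))) = 0 := by
      have h1 := (hSd.congr_of_eventuallyEq hS0.symm).deriv
      simpa using h1.symm
    have h4 : ∀ j ∈ Finset.range (n+1),
        d j * M t (ν + ↑k + ↑j) + (P n t).coeff j * (-(M t (ν + ↑k + ↑j - 1)))
          = d j * M t (ν + ↑k + ↑j) - (P n t).coeff j * M t (ν + ↑k + ↑j - 1) :=
      fun j _ => by ring
    rw [Finset.sum_congr rfl h4, Finset.sum_sub_distrib] at hzero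
    linarith
  set lam : ℝ := t * d n / (P n t).coeff n + n with hlam
  set D : Polynomial ℝ := ∑ j ∈ Finset.range (n+1), Polynomial.C (d j) * Polynomial.X ^ j
    with hD
  set Q : Polynomial ℝ := Polynomial.C t * D
      + Polynomial.X * Polynomial.derivative (P n t) - Polynomial.C lam * P n t with hQ
  have hDcoeff : ∀ N : ℕ, D.coeff N = if N ≤ n then d N else 0 := by
    intro N
    rw [hD, Polynomial.finset_sum_coeff]
    have hterm : ∀ j ∈ Finset.range (n+1),
        (Polynomial.C (d j) * Polynomial.X ^ j).coeff N
          = if j = N then d j else 0 := by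
      intro j _
      rw [Polynomial.coeff_C_mul, Polynomial.coeff_X_pow]
      by_cases h : N = j
      · simp [h]
      · simp [h, Ne.symm h]
    rw [Finset.sum_congr rfl hterm, Finset.sum_ite_eq' (Finset.range (n+1)) N d]
    by_cases h : N ≤ n
    · rw [if_pos (Finset.mem_range_succ_iff.2 h), if_pos h]
    · rw [if_neg (fun hc => h (Finset.mem_range_succ_iff.1 hc)), if_neg h]
  have hXd : ∀ (p : Polynomial ℝ) (N : ℕ),
      (Polynomial.X * Polynomial.derivative p).coeff N = N * p.coeff N := by
    intro p N
    cases N with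
    | zero => simp [Polynomial.mul_coeff_zero]
    | succ N =>
      rw [Polynomial.coeff_X_mul, Polynomial.coeff_derivative]
      push_cast
      ring
  have hPcoeff : ∀ N : ℕ, n < N → (P n t).coeff N = 0 := by
    intro N hN
    apply Polynomial.coeff_eq_zero_of_degree_lt
    rw [hdeg n t ht]
    exact_mod_cast hN
  have hQcoeff : ∀ j : ℕ, j ≤ n →
      Q.coeff j = t * d j + j * (P n t).coeff j - lam * (P n t).coeff j := by
    intro j hj
    rw [hQ, Polynomial.coeff_sub, Polynomial.coeff_add, Polynomial.coeff_C_mul,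
      Polynomial.coeff_C_mul, hDcoeff j, if_pos hj, hXd]
  have hQdeg : Q.degree ≤ (m : ℕ) := by
    rw [Polynomial.degree_le_iff_coeff_zero]
    intro N hN
    have hmN : m < N := by exact_mod_cast hN
    by_cases hNn : N = n
    · subst hNn
      rw [hQcoeff N le_rfl, hlam]
      first
      | (field_simp; ring)
      | field_simp
    · have hNgt : n < N := by omega
      rw [hQ, Polynomial.coeff_sub, Polynomial.coeff_add, Polynomial.coeff_C_mul,
        Polynomial.coeff_C_mul, hDcoeff N, if_neg (by omega), hXd, hPcoeff N hNgt]
      ring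
  obtain ⟨e, he⟩ := expand_poly (fun i => P i t) (hdeg' t ht) (hlead' t ht) m Q hQdeg
  have hQP : ∀ i : ℕ, i ≤ m →
      (∫ y in Set.Ioi (0:ℝ),
        Q.eval y * (P i t).eval y * (y ^ ν * Real.exp (-y - t / y))) = e i := by
    intro i hi
    have hterm : ∀ i' : ℕ, IntegrableOn
        (fun y : ℝ => e i' * ((P i' t).eval y * (P i t).eval y
          * (y ^ ν * Real.exp (-y - t / y)))) (Set.Ioi 0) := by
      intro i'
      have h := (poly_integrable ht (P i' t * P i t) ν).const_mul (e i')
      simpa [Polynomial.eval_mul, mul_assoc, IntegrableOn] using h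
    have hfun : (fun y : ℝ => Q.eval y * (P i t).eval y * (y ^ ν * Real.exp (-y - t / y)))
        = fun y : ℝ => ∑ i' ∈ Finset.range (m+1),
            e i' * ((P i' t).eval y * (P i t).eval y * (y ^ ν * Real.exp (-y - t / y))) := by
      funext y
      have hQe : Q.eval y = ∑ i' ∈ Finset.range (m+1), e i' * (P i' t).eval y := by
        have h := congrArg (Polynomial.eval y) he
        simpa [Polynomial.eval_finset_sum] using h
      rw [hQe, Finset.sum_mul, Finset.sum_mul]
      exact Finset.sum_congr rfl (fun i' _ => by ring)
    rw [hfun, integral_finset_sum _ (fun i' _ => hterm i')]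
    have hval : ∀ i' : ℕ,
        (∫ y in Set.Ioi (0:ℝ), e i' * ((P i' t).eval y * (P i t).eval y
          * (y ^ ν * Real.exp (-y - t / y))))
          = e i' * (if i' = i then 1 else 0) := by
      intro i'
      rw [integral_const_mul, horth i' i t ht]
    rw [Finset.sum_congr rfl (fun i' _ => hval i')]
    rw [Finset.sum_eq_single i]
    · rw [if_pos rfl, mul_one]
    · intro i' _ hne
      rw [if_neg hne, mul_zero]
    · intro hcon
      exact absurd (Finset.mem_range_succ_iff.2 hi) hcon
  set T : ℕ → ℝ := fun k =>
    ∫ y in Set.Ioi (0:ℝ), Q.eval y * (y ^ (ν + k) * Real.exp (-y - t / y)) with hT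
  have hTsum : ∀ k : ℕ, T k = ∑ j ∈ Finset.range (n+1), Q.coeff j * M t (ν + k + j) := by
    intro k
    rw [hT]
    exact poly_integral ht Q (ν + k) (n+1)
      (lt_of_le_of_lt (Polynomial.natDegree_le_iff_degree_le.2 hQdeg) (by omega))
  have hTval : ∀ k : ℕ, k ≤ m →
      T k = Gr (↑k + 1) - (ν + ↑k + 1 + lam) * Gr ↑k := by
    intro k hk
    have hkn : k < n := by omega
    have hco : ∀ j ∈ Finset.range (n+1), Q.coeff j * M t (ν + ↑k + ↑j)
        = (t * d j + ↑j * (P n t).coeff j - lam * (P n t).coeff j) * M t (ν + ↑k + ↑j) :=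
      fun j hj => by rw [hQcoeff j (Finset.mem_range_succ_iff.1 hj)]
    rw [hTsum k, Finset.sum_congr rfl hco]
    have hsplit : ∑ j ∈ Finset.range (n+1),
        (t * d j + ↑j * (P n t).coeff j - lam * (P n t).coeff j) * M t (ν + ↑k + ↑j)
        = t * (∑ j ∈ Finset.range (n+1), d j * M t (ν + ↑k + ↑j))
          + (∑ j ∈ Finset.range (n+1), ↑j * (P n t).coeff j * M t (ν + ↑k + ↑j))
          - lam * (∑ j ∈ Finset.range (n+1), (P n t).coeff j * M t (ν + ↑k + ↑j)) := by
      rw [Finset.mul_sum, Finset.mul_sum, ← Finset.sum_add_distrib, ← Finset.sum_sub_distrib]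
      exact Finset.sum_congr rfl (fun j _ => by ring)
    rw [hsplit, hDG k hkn]
    have hjsum : (∑ j ∈ Finset.range (n+1), ↑j * (P n t).coeff j * M t (ν + ↑k + ↑j))
        = Gr (↑k + 1) - (ν + ↑k + 1) * Gr ↑k
          - t * (∑ j ∈ Finset.range (n+1), (P n t).coeff j * M t (ν + ↑k + ↑j - 1)) := by
      have per : ∀ j ∈ Finset.range (n+1),
          (↑j : ℝ) * (P n t).coeff j * M t (ν + ↑k + ↑j)
            = (P n t).coeff j * M t (ν + (↑k + 1) + ↑j)
              - (ν + ↑k + 1) * ((P n t).coeff j * M t (ν + ↑k + ↑j))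
              - t * ((P n t).coeff j * M t (ν + ↑k + ↑j - 1)) := by
        intro j _
        have hrec := M_rec ht (ν + ↑k + ↑j + 1)
        rw [hM (ν + ↑k + ↑j + 1 - 1) (ν + ↑k + ↑j) (by ring),
          hM (ν + ↑k + ↑j + 1 - 2) (ν + ↑k + ↑j - 1) (by ring)] at hrec
        rw [hM (ν + (↑k + 1) + ↑j) (ν + ↑k + ↑j + 1) (by ring), hrec]
        ring
      rw [Finset.sum_congr rfl per, Finset.sum_sub_distrib, Finset.sum_sub_distrib,
        ← Finset.mul_sum, ← Finset.mul_sum]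
    rw [hjsum]
    simp only [hGr]
    ring
  have hT0 : ∀ k : ℕ, k < m → T k = 0 := by
    intro k hk
    rw [hTval k hk.le]
    have h1 : Gr (↑k + 1) = 0 := by
      have h := hG0 (k+1) (by omega)
      rwa [show ((k+1 : ℕ) : ℝ) = (k : ℝ) + 1 by push_cast; ring] at h
    rw [h1, hG0 k (by omega)]
    ring
  have hTm : T m = ((P n t).coeff n)⁻¹ := by
    rw [hTval m le_rfl]
    have h1 : Gr (↑m + 1) = ((P n t).coeff n)⁻¹ := by
      have h := hGn
      rwa [show ((n : ℕ) : ℝ) = (m : ℝ) + 1 by rw [hm]; push_cast; ring] at h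
    rw [h1, hG0 m (by omega)]
    ring
  have hQPm : ∀ i : ℕ, i ≤ m →
      (∫ y in Set.Ioi (0:ℝ),
        Q.eval y * (P i t).eval y * (y ^ ν * Real.exp (-y - t / y)))
        = ∑ k ∈ Finset.range (i+1), (P i t).coeff k * T k := by
    intro i hi
    have hideg : (P i t).natDegree = i := Polynomial.natDegree_eq_of_degree_eq_some (hdeg i t ht)
    have hterm : ∀ k : ℕ, IntegrableOn
        (fun y : ℝ => (P i t).coeff k * (Q.eval y * (y ^ (ν + k) * Real.exp (-y - t / y))))
        (Set.Ioi 0) := fun k => (poly_integrable ht Q (ν + k)).const_mul _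
    have hcong : Set.EqOn
        (fun y : ℝ => Q.eval y * (P i t).eval y * (y ^ ν * Real.exp (-y - t / y)))
        (fun y : ℝ => ∑ k ∈ Finset.range (i+1),
          (P i t).coeff k * (Q.eval y * (y ^ (ν + k) * Real.exp (-y - t / y))))
        (Set.Ioi 0) := by
      intro y hy
      have hy0 : (0:ℝ) < y := hy
      show Q.eval y * (P i t).eval y * (y ^ ν * Real.exp (-y - t / y)) = _
      rw [Polynomial.eval_eq_sum_range' (p := P i t) (n := i+1)
        (by rw [hideg]; exact Nat.lt_succ_self i) y, Finset.mul_sum, Finset.sum_mul]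
      apply Finset.sum_congr rfl
      intro k _
      rw [Real.rpow_add hy0, Real.rpow_natCast]
      ring
    rw [setIntegral_congr_fun measurableSet_Ioi hcong,
      integral_finset_sum _ (fun k _ => hterm k)]
    exact Finset.sum_congr rfl (fun k _ => integral_const_mul _ _)
  have hei : ∀ i : ℕ, i < m → e i = 0 := by
    intro i hi
    rw [← hQP i hi.le, hQPm i hi.le]
    apply Finset.sum_eq_zero
    intro k hk
    rw [hT0 k (by have := Finset.mem_range.1 hk; omega), mul_zero]
  have hem : e m = (P m t).coeff m * ((P n t).coeff n)⁻¹ := by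
    rw [← hQP m le_rfl, hQPm m le_rfl, Finset.sum_range_succ, hTm]
    rw [Finset.sum_eq_zero (fun k hk => by
      rw [hT0 k (Finset.mem_range.1 hk), mul_zero])]
    ring
  have hQfinal : Q = Polynomial.C ((P m t).coeff m * ((P n t).coeff n)⁻¹) * P m t := by
    rw [he, Finset.sum_range_succ, Finset.sum_eq_zero (fun i hi => by
      rw [hei i (Finset.mem_range.1 hi)]; simp), hem, zero_add]
  have hDeq : D.eval x = ∑ j ∈ Finset.range (n+1), d j * x ^ j := by
    rw [hD, Polynomial.eval_finset_sum]
    exact Finset.sum_congr rfl (fun j _ => by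
      rw [Polynomial.eval_mul, Polynomial.eval_C, Polynomial.eval_pow, Polynomial.eval_X])
  have hQx := congrArg (Polynomial.eval x) hQfinal
  rw [hQ] at hQx
  simp only [Polynomial.eval_sub, Polynomial.eval_add, Polynomial.eval_mul,
    Polynomial.eval_C, Polynomial.eval_X] at hQx
  rw [hDeq] at hQx
  have hAnt : A n t = (P m t).coeff m * ((P n t).coeff n)⁻¹ := by
    rw [hm, hA m t ht, ha m t ht, ha (m+1) t ht, div_eq_mul_inv]
  rw [hDeval x, hanc, ha n t ht, hAnt]
  rw [hlam] at hQx
  linarith [hQx]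
end
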